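/- arXiv:2605.13505 — 5 statements merged into one kernel-verified Lean document; each statement's English description precedes it below -/
import Mathlib

section
/- In the multi-block generalised Gibbons–Tsarev setting, let U ⊆ ℝ^n be open and let V and the μ^{i(α)} be smooth functions on U satisfying equations (EQ1blocks) and (EQ2blocks), with μ^{1(α)}(u) ≠ μ^{1(β)}(u) for all u ∈ U and all distinct α, β, and μ^{2(α)}(u) ≠ 0 for all u ∈ U whenever m_α ≥ 2. Then for every α ∈ {1,…,r}, every β ∈ {1,…,r} with m_β ≥ 2, and every j ∈ {2,…,m_β}, one has ∂_{j(β)} μ^{1(α)} = 0 identically on U. -/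
open scoped BigOperators

section Defs

variable {ι : Type*} [Fintype ι] [DecidableEq ι]

/-- Partial derivative of a scalar function in the `i`-th coordinate direction. -/
noncomputable def pd (i : ι) (f : (ι → ℝ) → ℝ) (u : ι → ℝ) : ℝ :=
  fderiv ℝ f u (Pi.single i 1)

end Defs

section Block

variable {r : ℕ} {m : Fin r → ℕ}

/-- Multi-block structure constants
`c^{i(α)}_{j(β)k(γ)} = δ^α_β δ^α_γ δ^i_{j+k−1}` (0-based: `1` iff same block and `j+k=i`). -/
noncomputable def bc (i j k : (α : Fin r) × Fin (m α)) : ℝ :=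
  if i.1 = j.1 ∧ i.1 = k.1 ∧ (j.2 : ℕ) + (k.2 : ℕ) = (i.2 : ℕ) then 1 else 0

/-- Components of the unit: `e^{i(α)} = δ^i_1` (0-based: `1` iff `i = 0`). -/
noncomputable def bec (i : (α : Fin r) × Fin (m α)) : ℝ :=
  if (i.2 : ℕ) = 0 then 1 else 0

/-- Left-hand side of (EQ1blocks) of the multi-block generalised Gibbons–Tsarev system. -/
noncomputable def GT1b (μ : (((α : Fin r) × Fin (m α)) → ℝ) → ((α : Fin r) × Fin (m α)) → ℝ)
    (V : (((α : Fin r) × Fin (m α)) → ℝ) → ℝ)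
    (i j : (α : Fin r) × Fin (m α)) (u : ((α : Fin r) × Fin (m α)) → ℝ) : ℝ :=
  (∑ t, ∑ s, μ u t * (bc s t i * pd s (fun v => pd j V v) u
                      - bc s t j * pd s (fun v => pd i V v) u))
  - (∑ t, ∑ s, (bc t j s * pd i (fun v => μ v s) u
                - bc t i s * pd j (fun v => μ v s) u) * pd t V u)

/-- Left-hand side of (EQ2blocks) of the multi-block generalised Gibbons–Tsarev system. -/
noncomputable def GT2b (μ : (((α : Fin r) × Fin (m α)) → ℝ) → ((α : Fin r) × Fin (m α)) → ℝ)
    (V : (((α : Fin r) × Fin (m α)) → ℝ) → ℝ)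
    (i j : (α : Fin r) × Fin (m α)) (u : ((α : Fin r) × Fin (m α)) → ℝ) : ℝ :=
  (∑ h, ∑ k, μ u h * (bc i h k * pd j (fun v => μ v k) u
                      + bc i j k * pd h (fun v => μ v k) u
                      - bc k j h * pd k (fun v => μ v i) u))
  - (∑ h, ∑ s, ∑ k, μ u h * bc i j s * bc s h k * (∑ t, bec t * pd t (fun v => μ v k) u))
  + bec i * pd j V u
  - (if i = j then 1 else 0) * (∑ t, bec t * pd t V u)

end Block

/-! ### Auxiliary lemmas -/

section PdLemmas

variable {ι : Type*} [Fintype ι] [DecidableEq ι] {U : Set (ι → ℝ)} {u : ι → ℝ}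

lemma pd_zero_of_eqOn (hU : IsOpen U) (hu : u ∈ U) {f : (ι → ℝ) → ℝ}
    (hf : ∀ v ∈ U, f v = 0) (i : ι) : pd i f u = 0 := by
  unfold pd
  have h : f =ᶠ[nhds u] (fun _ => (0:ℝ)) := Filter.eventuallyEq_of_mem (hU.mem_nhds hu) hf
  rw [h.fderiv_eq]
  simp

lemma pd_comm (hU : IsOpen U) {V : (ι → ℝ) → ℝ} (hV : ContDiffOn ℝ (⊤ : ℕ∞) V U) (hu : u ∈ U) (i j : ι) :
    pd i (fun v => pd j V v) u = pd j (fun v => pd i V v) u := by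
  have hat : ContDiffAt ℝ 2 V u := (hV.contDiffAt (hU.mem_nhds hu)).of_le (WithTop.coe_le_coe.mpr le_top)
  have hsymm := hat.isSymmSndFDerivAt (by simp)
  have hd : DifferentiableAt ℝ (fderiv ℝ V) u := by
    have := hat.fderiv_right (m := 1) (by norm_num)
    exact this.differentiableAt one_ne_zero
  show fderiv ℝ (fun v => fderiv ℝ V v (Pi.single j 1)) u (Pi.single i 1)
      = fderiv ℝ (fun v => fderiv ℝ V v (Pi.single i 1)) u (Pi.single j 1)
  rw [fderiv_clm_apply hd (differentiableAt_const _), fderiv_clm_apply hd (differentiableAt_const _)]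
  simp [hsymm.eq (Pi.single i 1) (Pi.single j 1)]

end PdLemmas

section DeltaLemmas

lemma sum_two {n : ℕ} (a0 a1 : Fin n) (hne : a0 ≠ a1) (F : Fin n → ℝ)
    (h : ∀ a, a ≠ a0 → a ≠ a1 → F a = 0) : ∑ a, F a = F a0 + F a1 := by
  rw [← Finset.sum_erase_add _ _ (Finset.mem_univ a1),
      ← Finset.sum_erase_add _ _ (Finset.mem_erase.mpr ⟨hne, Finset.mem_univ a0⟩),
      Finset.sum_eq_zero (fun a ha => h a (Finset.mem_erase.mp ha).1
        (Finset.mem_erase.mp (Finset.mem_erase.mp ha).2).1), zero_add]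

lemma sum_if_iff {n : ℕ} {P Q : Fin n → Prop} [DecidablePred P] [DecidablePred Q]
    (h : ∀ b, P b ↔ Q b) (g : Fin n → ℝ) :
    (∑ b, if P b then g b else 0) = (∑ b, if Q b then g b else 0) :=
  Finset.sum_congr rfl (fun b _ => if_congr (h b) rfl rfl)

lemma fin_delta' {n : ℕ} (c : ℕ) (t : Fin n → ℝ) :
    (∑ b : Fin n, if (b:ℕ) = c then t b else 0) = if h : c < n then t ⟨c,h⟩ else 0 := by
  split_ifs with h
  · rw [Finset.sum_eq_single (⟨c,h⟩ : Fin n)]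
    · simp
    · intro b _ hb; rw [if_neg]; simpa [Fin.ext_iff] using hb
    · intro hb; exact absurd (Finset.mem_univ _) hb
  · exact Finset.sum_eq_zero (fun b _ => by rw [if_neg]; omega)

lemma fin_ne_val {n : ℕ} {a : Fin n} {c : ℕ} (hc : c < n) (ha : a ≠ ⟨c,hc⟩) : (a:ℕ) ≠ c :=
  fun hv => ha (Fin.ext hv)

lemma sum_zero_if' {n : ℕ} (c d : ℕ) (hcd : ∀ x : ℕ, ¬ (c + x = d)) (g : Fin n → ℝ) :
    (∑ b : Fin n, if c+(b:ℕ) = d then g b else 0) = 0 :=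
  Finset.sum_eq_zero fun b _ => if_neg (hcd b)

lemma double_delta_zero {n : ℕ} (p q : Fin n) (hp : (p:ℕ) = 0) (hq : (q:ℕ) = 0)
    (f : Fin n → Fin n → ℝ) :
    (∑ a : Fin n, ∑ b : Fin n, if (a:ℕ)+(b:ℕ) = 0 then f a b else 0) = f p q := by
  have hn : 0 < n := by have := p.isLt; omega
  rw [show p = ⟨0,hn⟩ from Fin.ext (by simp only [Fin.val_mk]; omega),
      show q = ⟨0,hn⟩ from Fin.ext (by simp only [Fin.val_mk]; omega)]
  rw [Finset.sum_eq_single (⟨0,hn⟩ : Fin n)]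
  · rw [sum_if_iff (fun b => by simp only [Fin.val_mk]; omega : ∀ b : Fin n,
      ((⟨0,hn⟩:Fin n):ℕ)+(b:ℕ) = 0 ↔ (b:ℕ) = 0), fin_delta' 0, dif_pos hn]
  · intro a _ ha
    have ha' := fin_ne_val hn ha
    exact Finset.sum_eq_zero (fun b _ => by rw [if_neg]; omega)
  · intro hb; exact absurd (Finset.mem_univ _) hb

lemma double_delta_pair {n c : ℕ} (hc : c < n) (hc1 : 1 ≤ c)
    (p0 p1 q0 q1 : Fin n) (hp0 : (p0:ℕ) = 0) (hp1 : (p1:ℕ) = 1)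
    (hq0 : (q0:ℕ) = c) (hq1 : (q1:ℕ)+1 = c) (f : Fin n → Fin n → ℝ)
    (hf : ∀ a b : Fin n, (a:ℕ)+(b:ℕ) = c → 2 ≤ (a:ℕ) → f a b = 0) :
    (∑ a : Fin n, ∑ b : Fin n, if (a:ℕ)+(b:ℕ) = c then f a b else 0)
    = f p0 q0 + f p1 q1 := by
  have hn0 : 0 < n := Nat.lt_of_le_of_lt (Nat.zero_le c) hc
  have hn1 : 1 < n := Nat.lt_of_le_of_lt hc1 hc
  have hcm : c - 1 < n := Nat.lt_of_le_of_lt (Nat.sub_le c 1) hc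
  rw [show p0 = ⟨0, hn0⟩ from Fin.ext (by simp only [Fin.val_mk]; omega),
      show p1 = ⟨1, hn1⟩ from Fin.ext (by simp only [Fin.val_mk]; omega),
      show q0 = ⟨c, hc⟩ from Fin.ext (by simp only [Fin.val_mk]; omega),
      show q1 = ⟨c-1, hcm⟩ from Fin.ext (by simp only [Fin.val_mk]; omega)]
  rw [sum_two ⟨0, hn0⟩ ⟨1, hn1⟩ (by simp [Fin.ext_iff])]
  · congr 1
    · rw [sum_if_iff (fun b => by simp only [Fin.val_mk]; omega : ∀ b : Fin n,
        ((⟨0, hn0⟩:Fin n):ℕ)+(b:ℕ) = c ↔ (b:ℕ) = c), fin_delta' c, dif_pos hc]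
    · rw [sum_if_iff (fun b => by simp only [Fin.val_mk]; omega : ∀ b : Fin n,
        ((⟨1, hn1⟩:Fin n):ℕ)+(b:ℕ) = c ↔ (b:ℕ) = c - 1), fin_delta' (c-1),
        dif_pos hcm]
  · intro a ha0 ha1
    have ha0' := fin_ne_val hn0 ha0
    have ha1' := fin_ne_val hn1 ha1
    refine Finset.sum_eq_zero (fun b _ => ?_)
    split_ifs with hab
    · exact hf a b hab (by omega)
    · rfl

lemma double_delta_shift {n c : ℕ} (hc : c < n) (p0 q0 : Fin n)
    (hp0 : (p0:ℕ) = 0) (hq0 : (q0:ℕ) = c) (f : Fin n → Fin n → ℝ)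
    (hf : ∀ a b : Fin n, c+(a:ℕ) = (b:ℕ) → 1 ≤ (a:ℕ) → f a b = 0) :
    (∑ a : Fin n, ∑ b : Fin n, if c+(a:ℕ) = (b:ℕ) then f a b else 0)
    = f p0 q0 := by
  have hn0 : 0 < n := Nat.lt_of_le_of_lt (Nat.zero_le c) hc
  rw [show p0 = ⟨0, hn0⟩ from Fin.ext (by simp only [Fin.val_mk]; omega),
      show q0 = ⟨c, hc⟩ from Fin.ext (by simp only [Fin.val_mk]; omega)]
  rw [Finset.sum_eq_single (⟨0, hn0⟩ : Fin n)]
  · rw [sum_if_iff (fun b => by simp only [Fin.val_mk]; omega : ∀ b : Fin n,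
      c+((⟨0, hn0⟩:Fin n):ℕ) = (b:ℕ) ↔ (b:ℕ) = c), fin_delta' c, dif_pos hc]
  · intro a _ ha
    have ha' := fin_ne_val hn0 ha
    refine Finset.sum_eq_zero (fun b _ => ?_)
    split_ifs with hab
    · exact hf a b hab (by omega)
    · rfl
  · intro hb; exact absurd (Finset.mem_univ _) hb

lemma double_delta_shift2 {n c : ℕ} (hc : c < n) (p0 p1 q0 : Fin n)
    (hp0 : (p0:ℕ) = 0) (hp1 : (p1:ℕ) = 1) (hq0 : (q0:ℕ) = c) (f : Fin n → Fin n → ℝ)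
    (hf : ∀ a b : Fin n, c+(a:ℕ) = (b:ℕ) → 2 ≤ (a:ℕ) → f a b = 0) :
    (∑ a : Fin n, ∑ b : Fin n, if c+(a:ℕ) = (b:ℕ) then f a b else 0)
    = f p0 q0 + (if h : c+1 < n then f p1 ⟨c+1, h⟩ else 0) := by
  have hn0 : 0 < n := Nat.lt_of_le_of_lt (Nat.zero_le c) hc
  have hn1 : 1 < n := by have := p1.isLt; omega
  rw [show p0 = ⟨0, hn0⟩ from Fin.ext (by simp only [Fin.val_mk]; omega),
      show p1 = ⟨1, hn1⟩ from Fin.ext (by simp only [Fin.val_mk]; omega),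
      show q0 = ⟨c, hc⟩ from Fin.ext (by simp only [Fin.val_mk]; omega)]
  by_cases h1 : c + 1 < n
  · rw [dif_pos h1, sum_two ⟨0, hn0⟩ ⟨1, hn1⟩ (by simp [Fin.ext_iff])]
    · congr 1
      · rw [sum_if_iff (fun b => by simp only [Fin.val_mk]; omega : ∀ b : Fin n,
          c+((⟨0, hn0⟩:Fin n):ℕ) = (b:ℕ) ↔ (b:ℕ) = c), fin_delta' c, dif_pos hc]
      · rw [sum_if_iff (fun b => by simp only [Fin.val_mk]; omega : ∀ b : Fin n,
          c+((⟨1, hn1⟩:Fin n):ℕ) = (b:ℕ) ↔ (b:ℕ) = c+1), fin_delta' (c+1), dif_pos h1]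
    · intro a ha0 ha1
      have ha0' := fin_ne_val hn0 ha0
      have ha1' := fin_ne_val hn1 ha1
      refine Finset.sum_eq_zero (fun b _ => ?_)
      split_ifs with hab
      · exact hf a b hab (by omega)
      · rfl
  · rw [dif_neg h1, add_zero, Finset.sum_eq_single (⟨0, hn0⟩ : Fin n)]
    · rw [sum_if_iff (fun b => by simp only [Fin.val_mk]; omega : ∀ b : Fin n,
        c+((⟨0, hn0⟩:Fin n):ℕ) = (b:ℕ) ↔ (b:ℕ) = c), fin_delta' c, dif_pos hc]
    · intro a _ ha
      have ha' := fin_ne_val hn0 ha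
      refine Finset.sum_eq_zero (fun b _ => ?_)
      split_ifs with hab
      · by_cases h2 : 2 ≤ (a:ℕ)
        · exact hf a b hab h2
        · exfalso; have hb := b.isLt; omega
      · rfl
    · intro hb; exact absurd (Finset.mem_univ _) hb

lemma single_delta {n : ℕ} (c : ℕ) (p0 : Fin n) (hp0 : (p0:ℕ) = 0) (g : Fin n → ℝ) :
    (∑ b : Fin n, if c+(b:ℕ) = c then g b else 0) = g p0 := by
  have hn : 0 < n := by have := p0.isLt; omega
  rw [show p0 = ⟨0,hn⟩ from Fin.ext (by simp only [Fin.val_mk]; omega)]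
  rw [sum_if_iff (fun b => by omega : ∀ b : Fin n, c+(b:ℕ) = c ↔ (b:ℕ) = 0),
    fin_delta' 0, dif_pos hn]

lemma tele_lemma (f : ℕ → ℝ) (T0 : ℝ) (M : ℕ) (hM : 1 ≤ M)
    (hstep : ∀ k, k+1 < M → f k = f (k+1) + T0) (htop : f (M-1) = 0) :
    f 0 = ((M-1 : ℕ) : ℝ) * T0 := by
  suffices H : ∀ t k, k + t = M-1 → f k = (t : ℝ) * T0 by simpa using H (M-1) 0 (by omega)
  intro t
  induction t with
  | zero =>
    intro k hk
    have hkk : k = M-1 := by omega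
    subst hkk
    rw [htop]
    norm_num
  | succ t ih =>
    intro k hk
    rw [hstep k (by omega), ih (k+1) (by omega)]
    push_cast; ring

end DeltaLemmas

section BlockLemmas

variable {r : ℕ} {m : Fin r → ℕ}

lemma sum_sigma'' (f : ((α : Fin r) × Fin (m α)) → ℝ) :
    ∑ x : (α : Fin r) × Fin (m α), f x = ∑ α, ∑ i, f ⟨α,i⟩ := by
  rw [← Finset.univ_sigma_univ, Finset.sum_sigma]

lemma sum_block (β : Fin r) (f : ((α : Fin r) × Fin (m α)) → ℝ)
    (h0 : ∀ (α : Fin r) (x : Fin (m α)), α ≠ β → f ⟨α,x⟩ = 0) :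
    ∑ x : (α : Fin r) × Fin (m α), f x = ∑ x : Fin (m β), f ⟨β,x⟩ := by
  rw [sum_sigma'']
  rw [Finset.sum_eq_single β (fun α _ hα => Finset.sum_eq_zero (fun x _ => h0 α x hα))
    (fun h => absurd (Finset.mem_univ β) h)]

lemma sum_bec (hm : ∀ α, 0 < m α) (g : ((α : Fin r) × Fin (m α)) → ℝ) :
    (∑ t : (α : Fin r) × Fin (m α), bec t * g t) = ∑ γ, g ⟨γ,⟨0,hm γ⟩⟩ := by
  rw [sum_sigma'']
  refine Finset.sum_congr rfl (fun γ _ => ?_)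
  have h : ∀ t2 : Fin (m γ), bec ⟨γ,t2⟩ * g ⟨γ,t2⟩ = if (t2:ℕ) = 0 then g ⟨γ,t2⟩ else 0 := by
    intro t2; rw [bec]; split_ifs <;> simp
  simp only [h]
  rw [fin_delta' 0 (fun t2 => g ⟨γ,t2⟩), dif_pos (hm γ)]

lemma sigma_mk_ne_same {β : Fin r} {x y : Fin (m β)} (hxy : (x:ℕ) ≠ (y:ℕ)) :
    (⟨β,x⟩ : (α : Fin r) × Fin (m α)) ≠ ⟨β,y⟩ := by
  intro h
  apply hxy
  rw [Sigma.mk.inj_iff] at h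
  rw [(heq_eq_eq _ _).mp h.2]

lemma sigma_mk_ne_blocks {α β : Fin r} {x : Fin (m α)} {y : Fin (m β)} (hab : α ≠ β) :
    (⟨α,x⟩ : (γ : Fin r) × Fin (m γ)) ≠ ⟨β,y⟩ := by
  intro h; exact hab (congrArg Sigma.fst h)

lemma sum_bc2 (i : (α : Fin r) × Fin (m α)) (F : ((α : Fin r) × Fin (m α)) → ((α : Fin r) × Fin (m α)) → ℝ) :
    (∑ h : (α : Fin r) × Fin (m α), ∑ k : (α : Fin r) × Fin (m α), bc i h k * F h k)
    = ∑ a : Fin (m i.1), ∑ b : Fin (m i.1),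
        if (a:ℕ)+(b:ℕ) = (i.2:ℕ) then F ⟨i.1,a⟩ ⟨i.1,b⟩ else 0 := by
  rw [sum_block i.1 _ (fun α x hα => Finset.sum_eq_zero (fun k _ => by
    rw [bc, if_neg, zero_mul]; rintro ⟨h1,-,-⟩; exact hα h1.symm))]
  refine Finset.sum_congr rfl (fun a _ => ?_)
  rw [sum_block i.1 _ (fun α x hα => by
    rw [bc, if_neg, zero_mul]; rintro ⟨-,h2,-⟩; exact hα h2.symm)]
  refine Finset.sum_congr rfl (fun b _ => ?_)
  simp only [bc]
  split_ifs with h1 h2 h2 <;> simp_all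

lemma sum_bc2' (j : (α : Fin r) × Fin (m α)) (F : ((α : Fin r) × Fin (m α)) → ((α : Fin r) × Fin (m α)) → ℝ) :
    (∑ h : (α : Fin r) × Fin (m α), ∑ k : (α : Fin r) × Fin (m α), bc k j h * F h k)
    = ∑ a : Fin (m j.1), ∑ b : Fin (m j.1),
        if (j.2:ℕ)+(a:ℕ) = (b:ℕ) then F ⟨j.1,a⟩ ⟨j.1,b⟩ else 0 := by
  rw [sum_block j.1 _ (fun α x hα => Finset.sum_eq_zero (fun k _ => by
    rw [bc, if_neg, zero_mul]; rintro ⟨h1,h2,-⟩; exact hα (h1 ▸ h2).symm))]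
  refine Finset.sum_congr rfl (fun a _ => ?_)
  rw [sum_block j.1 _ (fun α x hα => by
    rw [bc, if_neg, zero_mul]; rintro ⟨h1,-,-⟩; exact hα h1)]
  refine Finset.sum_congr rfl (fun b _ => ?_)
  simp only [bc]
  split_ifs with h1 h2 h2 <;> simp_all

lemma sum_bc1 (i j : (α : Fin r) × Fin (m α)) (G : ((α : Fin r) × Fin (m α)) → ℝ) :
    (∑ k : (α : Fin r) × Fin (m α), bc i j k * G k)
    = if i.1 = j.1 then (∑ b : Fin (m i.1), if (j.2:ℕ)+(b:ℕ) = (i.2:ℕ) then G ⟨i.1,b⟩ else 0)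
      else 0 := by
  split_ifs with hij
  · rw [sum_block i.1 _ (fun α x hα => by
      rw [bc, if_neg, zero_mul]; rintro ⟨-,h2,-⟩; exact hα h2.symm)]
    refine Finset.sum_congr rfl (fun b _ => ?_)
    simp only [bc]
    split_ifs with h1 h2 h2 <;> simp_all
  · exact Finset.sum_eq_zero (fun k _ => by
      rw [bc, if_neg, zero_mul]; rintro ⟨h1,-,-⟩; exact hij h1)

lemma sum_bc_third (i : (α : Fin r) × Fin (m α)) (F : ((α : Fin r) × Fin (m α)) → ((α : Fin r) × Fin (m α)) → ℝ) :
    (∑ t : (α : Fin r) × Fin (m α), ∑ s : (α : Fin r) × Fin (m α), bc s t i * F t s)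
    = ∑ a : Fin (m i.1), ∑ b : Fin (m i.1),
        if (a:ℕ)+(i.2:ℕ) = (b:ℕ) then F ⟨i.1,a⟩ ⟨i.1,b⟩ else 0 := by
  rw [sum_block i.1 _ (fun α x hα => Finset.sum_eq_zero (fun s _ => by
    rw [bc, if_neg, zero_mul]; rintro ⟨h1,h2,-⟩; exact hα (h1.symm.trans h2)))]
  refine Finset.sum_congr rfl (fun a _ => ?_)
  rw [sum_block i.1 _ (fun α x hα => by
    rw [bc, if_neg, zero_mul]; rintro ⟨-,h2,-⟩; exact hα h2)]
  refine Finset.sum_congr rfl (fun b _ => ?_)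
  simp only [bc]
  split_ifs with h1 h2 h2 <;> simp_all

lemma sum_bc_mid (j : (α : Fin r) × Fin (m α)) (F : ((α : Fin r) × Fin (m α)) → ((α : Fin r) × Fin (m α)) → ℝ) :
    (∑ t : (α : Fin r) × Fin (m α), ∑ s : (α : Fin r) × Fin (m α), bc t j s * F t s)
    = ∑ a : Fin (m j.1), ∑ b : Fin (m j.1),
        if (j.2:ℕ)+(a:ℕ) = (b:ℕ) then F ⟨j.1,b⟩ ⟨j.1,a⟩ else 0 := by
  rw [sum_block j.1 _ (fun α x hα => Finset.sum_eq_zero (fun s _ => by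
    rw [bc, if_neg, zero_mul]; rintro ⟨h1,-,-⟩; exact hα h1))]
  have e : (∑ b : Fin (m j.1), ∑ s : (α : Fin r) × Fin (m α), bc ⟨j.1,b⟩ j s * F ⟨j.1,b⟩ s)
      = ∑ b : Fin (m j.1), ∑ a : Fin (m j.1),
          if (j.2:ℕ)+(a:ℕ) = (b:ℕ) then F ⟨j.1,b⟩ ⟨j.1,a⟩ else 0 := by
    refine Finset.sum_congr rfl (fun b _ => ?_)
    rw [sum_block j.1 _ (fun α x hα => by
      rw [bc, if_neg, zero_mul]; rintro ⟨-,h2,-⟩; exact hα h2.symm)]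
    refine Finset.sum_congr rfl (fun a _ => ?_)
    simp only [bc]
    split_ifs with h1 h2 h2 <;> simp_all
  rw [e, Finset.sum_comm]

lemma sum_ite_const {κ : Type*} (s : Finset κ) (c : Prop) [Decidable c] (f : κ → ℝ) :
    ∑ x ∈ s, (if c then f x else 0) = if c then ∑ x ∈ s, f x else 0 := by
  split_ifs <;> simp

variable (μ : (((α : Fin r) × Fin (m α)) → ℝ) → ((α : Fin r) × Fin (m α)) → ℝ)
  (V : (((α : Fin r) × Fin (m α)) → ℝ) → ℝ) (u : ((α : Fin r) × Fin (m α)) → ℝ)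

lemma GT2b_eval (hm : ∀ α, 0 < m α) (i j : (α : Fin r) × Fin (m α)) :
    GT2b μ V i j u =
      (∑ a : Fin (m i.1), ∑ b : Fin (m i.1), if (a:ℕ)+(b:ℕ) = (i.2:ℕ) then
          μ u ⟨i.1,a⟩ * pd j (fun v => μ v ⟨i.1,b⟩) u else 0)
    + (if i.1 = j.1 then (∑ b : Fin (m i.1), if (j.2:ℕ)+(b:ℕ) = (i.2:ℕ) then
          (∑ h : (α : Fin r) × Fin (m α), μ u h * pd h (fun v => μ v ⟨i.1,b⟩) u) else 0) else 0)
    - (∑ a : Fin (m j.1), ∑ b : Fin (m j.1), if (j.2:ℕ)+(a:ℕ) = (b:ℕ) then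
          μ u ⟨j.1,a⟩ * pd ⟨j.1,b⟩ (fun v => μ v i) u else 0)
    - (if i.1 = j.1 then (∑ s2 : Fin (m i.1), if (j.2:ℕ)+(s2:ℕ) = (i.2:ℕ) then
          (∑ a : Fin (m i.1), ∑ b : Fin (m i.1), if (a:ℕ)+(b:ℕ) = (s2:ℕ) then
            μ u ⟨i.1,a⟩ * (∑ γ, pd ⟨γ,⟨0,hm γ⟩⟩ (fun v => μ v ⟨i.1,b⟩) u) else 0)
          else 0) else 0)
    + (if (i.2:ℕ) = 0 then pd j V u else 0)
    - (if i = j then 1 else 0) * (∑ γ, pd ⟨γ,⟨0,hm γ⟩⟩ V u) := by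
  unfold GT2b
  have eA : (∑ h : (α : Fin r) × Fin (m α), ∑ k : (α : Fin r) × Fin (m α),
        μ u h * (bc i h k * pd j (fun v => μ v k) u
                      + bc i j k * pd h (fun v => μ v k) u
                      - bc k j h * pd k (fun v => μ v i) u))
      = (∑ h : (α : Fin r) × Fin (m α), ∑ k : (α : Fin r) × Fin (m α),
          bc i h k * (μ u h * pd j (fun v => μ v k) u))
      + (∑ h : (α : Fin r) × Fin (m α), ∑ k : (α : Fin r) × Fin (m α),
          μ u h * (bc i j k * pd h (fun v => μ v k) u))
      - (∑ h : (α : Fin r) × Fin (m α), ∑ k : (α : Fin r) × Fin (m α),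
          bc k j h * (μ u h * pd k (fun v => μ v i) u)) := by
    simp only [← Finset.sum_add_distrib, ← Finset.sum_sub_distrib]
    exact Finset.sum_congr rfl (fun h _ => Finset.sum_congr rfl (fun k _ => by ring))
  rw [eA]
  rw [sum_bc2 i (fun h k => μ u h * pd j (fun v => μ v k) u)]
  rw [sum_bc2' j (fun h k => μ u h * pd k (fun v => μ v i) u)]
  have eA2 : (∑ h : (α : Fin r) × Fin (m α), ∑ k : (α : Fin r) × Fin (m α),
        μ u h * (bc i j k * pd h (fun v => μ v k) u))
      = (if i.1 = j.1 then (∑ b : Fin (m i.1), if (j.2:ℕ)+(b:ℕ) = (i.2:ℕ) then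
          (∑ h : (α : Fin r) × Fin (m α), μ u h * pd h (fun v => μ v ⟨i.1,b⟩) u) else 0) else 0) := by
    have h1 : ∀ h : (α : Fin r) × Fin (m α),
        (∑ k : (α : Fin r) × Fin (m α), μ u h * (bc i j k * pd h (fun v => μ v k) u))
        = (∑ k : (α : Fin r) × Fin (m α), bc i j k * (μ u h * pd h (fun v => μ v k) u)) := by
      intro h; exact Finset.sum_congr rfl (fun k _ => by ring)
    simp only [h1]
    simp only [sum_bc1 i j (fun k => μ u _ * pd _ (fun v => μ v k) u)]
    rw [sum_ite_const, Finset.sum_comm]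
    refine if_congr Iff.rfl (Finset.sum_congr rfl (fun b _ => ?_)) rfl
    rw [sum_ite_const]
  rw [eA2]
  have eB : (∑ h : (α : Fin r) × Fin (m α), ∑ s : (α : Fin r) × Fin (m α),
        ∑ k : (α : Fin r) × Fin (m α), μ u h * bc i j s * bc s h k *
        (∑ t : (α : Fin r) × Fin (m α), bec t * pd t (fun v => μ v k) u))
      = (if i.1 = j.1 then (∑ s2 : Fin (m i.1), if (j.2:ℕ)+(s2:ℕ) = (i.2:ℕ) then
          (∑ a : Fin (m i.1), ∑ b : Fin (m i.1), if (a:ℕ)+(b:ℕ) = (s2:ℕ) then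
            μ u ⟨i.1,a⟩ * (∑ γ, pd ⟨γ,⟨0,hm γ⟩⟩ (fun v => μ v ⟨i.1,b⟩) u) else 0)
          else 0) else 0) := by
    simp only [sum_bec hm]
    rw [Finset.sum_comm]
    have h2 : ∀ s : (α : Fin r) × Fin (m α),
        (∑ h : (α : Fin r) × Fin (m α), ∑ k : (α : Fin r) × Fin (m α),
          μ u h * bc i j s * bc s h k * (∑ γ, pd ⟨γ,⟨0,hm γ⟩⟩ (fun v => μ v k) u))
        = bc i j s * (∑ h : (α : Fin r) × Fin (m α), ∑ k : (α : Fin r) × Fin (m α),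
            bc s h k * (μ u h * (∑ γ, pd ⟨γ,⟨0,hm γ⟩⟩ (fun v => μ v k) u))) := by
      intro s
      rw [Finset.mul_sum]
      refine Finset.sum_congr rfl (fun h _ => ?_)
      rw [Finset.mul_sum]
      refine Finset.sum_congr rfl (fun k _ => ?_)
      ring
    simp only [h2]
    rw [sum_bc1 i j (fun s => ∑ h : (α : Fin r) × Fin (m α), ∑ k : (α : Fin r) × Fin (m α),
        bc s h k * (μ u h * (∑ γ, pd ⟨γ,⟨0,hm γ⟩⟩ (fun v => μ v k) u)))]
    refine if_congr Iff.rfl (Finset.sum_congr rfl (fun s2 _ => ?_)) rfl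
    refine if_congr Iff.rfl ?_ rfl
    rw [sum_bc2 (⟨i.1,s2⟩ : (α : Fin r) × Fin (m α))
      (fun h k => μ u h * (∑ γ, pd ⟨γ,⟨0,hm γ⟩⟩ (fun v => μ v k) u))]
  rw [eB]
  have eC : bec i * pd j V u = (if (i.2:ℕ) = 0 then pd j V u else 0) := by
    rw [bec]; split_ifs <;> simp
  rw [eC, sum_bec hm (fun t => pd t V u)]

lemma GT2b_eval' (hm : ∀ α, 0 < m α) (β γ : Fin r) (x : Fin (m β)) (y : Fin (m γ)) :
    GT2b μ V ⟨β,x⟩ ⟨γ,y⟩ u =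
      (∑ a : Fin (m β), ∑ b : Fin (m β), if (a:ℕ)+(b:ℕ) = (x:ℕ) then
          μ u ⟨β,a⟩ * pd ⟨γ,y⟩ (fun v => μ v ⟨β,b⟩) u else 0)
    + (if β = γ then (∑ b : Fin (m β), if (y:ℕ)+(b:ℕ) = (x:ℕ) then
          (∑ h : (α : Fin r) × Fin (m α), μ u h * pd h (fun v => μ v ⟨β,b⟩) u) else 0) else 0)
    - (∑ a : Fin (m γ), ∑ b : Fin (m γ), if (y:ℕ)+(a:ℕ) = (b:ℕ) then
          μ u ⟨γ,a⟩ * pd ⟨γ,b⟩ (fun v => μ v ⟨β,x⟩) u else 0)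
    - (if β = γ then (∑ s2 : Fin (m β), if (y:ℕ)+(s2:ℕ) = (x:ℕ) then
          (∑ a : Fin (m β), ∑ b : Fin (m β), if (a:ℕ)+(b:ℕ) = (s2:ℕ) then
            μ u ⟨β,a⟩ * (∑ γ', pd ⟨γ',⟨0,hm γ'⟩⟩ (fun v => μ v ⟨β,b⟩) u) else 0)
          else 0) else 0)
    + (if (x:ℕ) = 0 then pd ⟨γ,y⟩ V u else 0)
    - (if (⟨β,x⟩ : (α : Fin r) × Fin (m α)) = ⟨γ,y⟩ then 1 else 0)
        * (∑ γ', pd ⟨γ',⟨0,hm γ'⟩⟩ V u) :=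
  GT2b_eval μ V u hm ⟨β,x⟩ ⟨γ,y⟩

lemma GT1b_eval (i j : (α : Fin r) × Fin (m α)) :
    GT1b μ V i j u =
      (∑ a : Fin (m i.1), ∑ b : Fin (m i.1), if (a:ℕ)+(i.2:ℕ) = (b:ℕ) then
          μ u ⟨i.1,a⟩ * pd ⟨i.1,b⟩ (fun v => pd j V v) u else 0)
    - (∑ a : Fin (m j.1), 
    ∑ b : Fin (m j.1), if (a:ℕ)+(j.2:ℕ) = (b:ℕ) then
          μ u ⟨j.1,a⟩ * pd ⟨j.1,b⟩ (fun v => pd i V v) u else 0)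
    - (∑ a : Fin (m j.1), ∑ b : Fin (m j.1), if (j.2:ℕ)+(a:ℕ) = (b:ℕ) then
          pd i (fun v => μ v ⟨j.1,a⟩) u * pd ⟨j.1,b⟩ V u else 0)
    + (∑ a : Fin (m i.1), ∑ b : Fin (m i.1), if (i.2:ℕ)+(a:ℕ) = (b:ℕ) then
          pd j (fun v => μ v ⟨i.1,a⟩) u * pd ⟨i.1,b⟩ V u else 0) := by
  unfold GT1b
  have e1 : (∑ t : (α : Fin r) × Fin (m α), ∑ s : (α : Fin r) × Fin (m α),
        μ u t * (bc s t i * pd s (fun v => pd j V v) u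
                      - bc s t j * pd s (fun v => pd i V v) u))
      = (∑ t : (α : Fin r) × Fin (m α), ∑ s : (α : Fin r) × Fin (m α),
          bc s t i * (μ u t * pd s (fun v => pd j V v) u))
      - (∑ t : (α : Fin r) × Fin (m α), ∑ s : (α : Fin r) × Fin (m α),
          bc s t j * (μ u t * pd s (fun v => pd i V v) u)) := by
    simp only [← Finset.sum_sub_distrib]
    exact Finset.sum_congr rfl (fun t _ => Finset.sum_congr rfl (fun s _ => by ring))
  have e2 : (∑ t : (α : Fin r) × Fin (m α), ∑ s : (α : Fin r) × Fin (m α),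
        (bc t j s * pd i (fun v => μ v s) u
                - bc t i s * pd j (fun v => μ v s) u) * pd t V u)
      = (∑ t : (α : Fin r) × Fin (m α), ∑ s : (α : Fin r) × Fin (m α),
          bc t j s * (pd i (fun v => μ v s) u * pd t V u))
      - (∑ t : (α : Fin r) × Fin (m α), ∑ s : (α : Fin r) × Fin (m α),
          bc t i s * (pd j (fun v => μ v s) u * pd t V u)) := by
    simp only [← Finset.sum_sub_distrib]
    exact Finset.sum_congr rfl (fun t _ => Finset.sum_congr rfl (fun s _ => by ring))
  rw [e1, e2]
  rw [sum_bc_third i (fun t s => μ u t * pd s (fun v => pd j V v) u)]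
  rw [sum_bc_third j (fun t s => μ u t * pd s (fun v => pd i V v) u)]
  rw [sum_bc_mid j (fun t s => pd i (fun v => μ v s) u * pd t V u)]
  rw [sum_bc_mid i (fun t s => pd j (fun v => μ v s) u * pd t V u)]
  ring

lemma GT1b_eval' (β γ : Fin r) (x : Fin (m β)) (y : Fin (m γ)) :
    GT1b μ V ⟨β,x⟩ ⟨γ,y⟩ u =
      (∑ a : Fin (m β), ∑ b : Fin (m β), if (a:ℕ)+(x:ℕ) = (b:ℕ) then
          μ u ⟨β,a⟩ * pd ⟨β,b⟩ (fun v => pd ⟨γ,y⟩ V v) u else 0)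
    - (∑ a : Fin (m γ), ∑ b : Fin (m γ), if (a:ℕ)+(y:ℕ) = (b:ℕ) then
          μ u ⟨γ,a⟩ * pd ⟨γ,b⟩ (fun v => pd ⟨β,x⟩ V v) u else 0)
    - (∑ a : Fin (m γ), ∑ b : Fin (m γ), if (y:ℕ)+(a:ℕ) = (b:ℕ) then
          pd ⟨β,x⟩ (fun v => μ v ⟨γ,a⟩) u * pd ⟨γ,b⟩ V u else 0)
    + (∑ a : Fin (m β), ∑ b : Fin (m β), if (x:ℕ)+(a:ℕ) = (b:ℕ) then
          pd ⟨γ,y⟩ (fun v => μ v ⟨β,a⟩) u * pd ⟨β,b⟩ V u else 0) :=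
  GT1b_eval μ V u ⟨β,x⟩ ⟨γ,y⟩

end BlockLemmas
section RedLemmas

variable {r : ℕ} {m : Fin r → ℕ}
variable (μ : (((α : Fin r) × Fin (m α)) → ℝ) → ((α : Fin r) × Fin (m α)) → ℝ)
  (V : (((α : Fin r) × Fin (m α)) → ℝ) → ℝ) (u : ((α : Fin r) × Fin (m α)) → ℝ)

/-- (E-a): same-block equation with `1 ≤ i2+1 < j2`. -/
lemma redEa (hm : ∀ α, 0 < m α) (β : Fin r) (i2 j2 : ℕ)
    (hi1 : i2+1 < m β) (hj : j2 < m β) (hij : i2 + 2 ≤ j2)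
    (hi : i2 < m β) (h1m : 1 < m β)
    (hzero : ∀ (b : ℕ) (hb : b < m β), b < i2 →
      pd ⟨β,⟨j2,hj⟩⟩ (fun v => μ v ⟨β,⟨b,hb⟩⟩) u = 0)
    (hhigh : ∀ (b : ℕ) (hb : b < m β), j2 < b →
      pd ⟨β,⟨b,hb⟩⟩ (fun v => μ v ⟨β,⟨i2+1,hi1⟩⟩) u = 0)
    (hne : μ u ⟨β,⟨1,h1m⟩⟩ ≠ 0)
    (heq : GT2b μ V ⟨β,⟨i2+1,hi1⟩⟩ ⟨β,⟨j2,hj⟩⟩ u = 0) :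
    pd ⟨β,⟨j2,hj⟩⟩ (fun v => μ v ⟨β,⟨i2,hi⟩⟩) u = 0 := by
  rw [GT2b_eval' μ V u hm β β ⟨i2+1,hi1⟩ ⟨j2,hj⟩] at heq
  simp only [Fin.val_mk, eq_self_iff_true, if_true] at heq
  rw [sum_zero_if' j2 (i2+1) (fun x => by omega)] at heq
  rw [sum_zero_if' j2 (i2+1) (fun x => by omega)] at heq
  rw [if_neg (by omega : ¬ (i2+1 = 0))] at heq
  rw [if_neg (sigma_mk_ne_same (by simp only [Fin.val_mk]; omega)), zero_mul] at heq
  have eT1 := double_delta_pair (n := m β) (c := i2+1) hi1 (by omega)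
      ⟨0, hm β⟩ ⟨1, h1m⟩ ⟨i2+1, hi1⟩ ⟨i2, hi⟩ rfl rfl rfl (by simp only [Fin.val_mk])
      (fun a b => μ u ⟨β,a⟩ * pd ⟨β,⟨j2,hj⟩⟩ (fun v => μ v ⟨β,b⟩) u)
      (fun a b hab ha2 => mul_eq_zero_of_right _ (hzero b.1 b.2 (by omega)))
  rw [eT1] at heq
  have eT3 := double_delta_shift (n := m β) (c := j2) hj ⟨0, hm β⟩ ⟨j2, hj⟩ rfl rfl
      (fun a b => μ u ⟨β,a⟩ * pd ⟨β,b⟩ (fun v => μ v ⟨β,⟨i2+1,hi1⟩⟩) u)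
      (fun a b hab ha1 => mul_eq_zero_of_right _ (hhigh b.1 b.2 (by omega)))
  rw [eT3] at heq
  beta_reduce at heq
  have h0 : μ u ⟨β,⟨1,h1m⟩⟩ * pd ⟨β,⟨j2,hj⟩⟩ (fun v => μ v ⟨β,⟨i2,hi⟩⟩) u = 0 := by linarith
  exact (mul_eq_zero.mp h0).resolve_left hne

/-- (E-b0): `i = (β,0)`, `j = (β,j2)`, `j2 ≥ 1`, gives `∂_{j(β)} V = 0`. -/
lemma redEb0 (hm : ∀ α, 0 < m α) (β : Fin r) (j2 : ℕ) (h1 : 1 ≤ j2) (hj : j2 < m β)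
    (hzero : ∀ (b : ℕ) (hb : b < m β), j2 < b →
      pd ⟨β,⟨b,hb⟩⟩ (fun v => μ v ⟨β,⟨0,hm β⟩⟩) u = 0)
    (heq : GT2b μ V ⟨β,⟨0,hm β⟩⟩ ⟨β,⟨j2,hj⟩⟩ u = 0) :
    pd ⟨β,⟨j2,hj⟩⟩ V u = 0 := by
  rw [GT2b_eval' μ V u hm β β ⟨0,hm β⟩ ⟨j2,hj⟩] at heq
  simp only [Fin.val_mk, eq_self_iff_true, if_true] at heq
  rw [sum_zero_if' j2 0 (fun x => by omega)] at heq
  rw [sum_zero_if' j2 0 (fun x => by omega)] at heq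
  rw [if_neg (sigma_mk_ne_same (by simp only [Fin.val_mk]; omega)), zero_mul] at heq
  have eT1 := double_delta_zero (n := m β) ⟨0, hm β⟩ ⟨0, hm β⟩ rfl rfl
      (fun a b => μ u ⟨β,a⟩ * pd ⟨β,⟨j2,hj⟩⟩ (fun v => μ v ⟨β,b⟩) u)
  rw [eT1] at heq
  have eT3 := double_delta_shift (n := m β) (c := j2) hj ⟨0, hm β⟩ ⟨j2, hj⟩ rfl rfl
      (fun a b => μ u ⟨β,a⟩ * pd ⟨β,b⟩ (fun v => μ v ⟨β,⟨0,hm β⟩⟩) u)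
      (fun a b hab ha1 => mul_eq_zero_of_right _ (hzero b.1 b.2 (by omega)))
  rw [eT3] at heq
  beta_reduce at heq
  linarith

/-- (E-b): cross-block equation, `i = (α,0)`, `j = (β,j2)`, `j2 ≥ 1`, `α ≠ β`. -/
lemma redEb (hm : ∀ α, 0 < m α) (α β : Fin r) (hab : α ≠ β)
    (j2 : ℕ) (h1 : 1 ≤ j2) (hj : j2 < m β)
    (hzero : ∀ (b : ℕ) (hb : b < m β), j2 < b →
      pd ⟨β,⟨b,hb⟩⟩ (fun v => μ v ⟨α,⟨0,hm α⟩⟩) u = 0)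
    (hVz : pd ⟨β,⟨j2,hj⟩⟩ V u = 0)
    (hne : μ u ⟨α,⟨0,hm α⟩⟩ ≠ μ u ⟨β,⟨0,hm β⟩⟩)
    (heq : GT2b μ V ⟨α,⟨0,hm α⟩⟩ ⟨β,⟨j2,hj⟩⟩ u = 0) :
    pd ⟨β,⟨j2,hj⟩⟩ (fun v => μ v ⟨α,⟨0,hm α⟩⟩) u = 0 := by
  rw [GT2b_eval' μ V u hm α β ⟨0,hm α⟩ ⟨j2,hj⟩] at heq
  simp only [Fin.val_mk, eq_self_iff_true, if_true] at heq
  rw [if_neg hab, if_neg hab] at heq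
  rw [if_neg (sigma_mk_ne_blocks hab), zero_mul] at heq
  have eT1 := double_delta_zero (n := m α) ⟨0, hm α⟩ ⟨0, hm α⟩ rfl rfl
      (fun a b => μ u ⟨α,a⟩ * pd ⟨β,⟨j2,hj⟩⟩ (fun v => μ v ⟨α,b⟩) u)
  rw [eT1] at heq
  have eT3 := double_delta_shift (n := m β) (c := j2) hj ⟨0, hm β⟩ ⟨j2, hj⟩ rfl rfl
      (fun a b => μ u ⟨β,a⟩ * pd ⟨β,b⟩ (fun v => μ v ⟨α,⟨0,hm α⟩⟩) u)
      (fun a b hab' ha1 => mul_eq_zero_of_right _ (hzero b.1 b.2 (by omega)))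
  rw [eT3] at heq
  beta_reduce at heq
  rw [hVz] at heq
  have h0 : (μ u ⟨α,⟨0,hm α⟩⟩ - μ u ⟨β,⟨0,hm β⟩⟩)
      * pd ⟨β,⟨j2,hj⟩⟩ (fun v => μ v ⟨α,⟨0,hm α⟩⟩) u = 0 := by linarith
  exact (mul_eq_zero.mp h0).resolve_left (sub_ne_zero_of_ne hne)

/-- (E-c): cross relation at level 0: `i = (β,0)`, `j = (γ,0)`, `γ ≠ β`. -/
lemma redEc (hm : ∀ α, 0 < m α) (β γ : Fin r) (hgb : γ ≠ β)
    (hzero : ∀ (x : ℕ) (hx : x < m γ), 1 ≤ x →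
      pd ⟨γ,⟨x,hx⟩⟩ (fun v => μ v ⟨β,⟨0,hm β⟩⟩) u = 0)
    (heq : GT2b μ V ⟨β,⟨0,hm β⟩⟩ ⟨γ,⟨0,hm γ⟩⟩ u = 0) :
    (μ u ⟨β,⟨0,hm β⟩⟩ - μ u ⟨γ,⟨0,hm γ⟩⟩)
      * pd ⟨γ,⟨0,hm γ⟩⟩ (fun v => μ v ⟨β,⟨0,hm β⟩⟩) u
    + pd ⟨γ,⟨0,hm γ⟩⟩ V u = 0 := by
  rw [GT2b_eval' μ V u hm β γ ⟨0,hm β⟩ ⟨0,hm γ⟩] at heq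
  simp only [Fin.val_mk, eq_self_iff_true, if_true] at heq
  rw [if_neg (fun h => hgb h.symm), if_neg (fun h => hgb h.symm)] at heq
  rw [if_neg (sigma_mk_ne_blocks (fun h => hgb h.symm)), zero_mul] at heq
  have eT1 := double_delta_zero (n := m β) ⟨0, hm β⟩ ⟨0, hm β⟩ rfl rfl
      (fun a b => μ u ⟨β,a⟩ * pd ⟨γ,⟨0,hm γ⟩⟩ (fun v => μ v ⟨β,b⟩) u)
  rw [eT1] at heq
  have eT3 := double_delta_shift (n := m γ) (c := 0) (hm γ) ⟨0, hm γ⟩ ⟨0, hm γ⟩ rfl rfl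
      (fun a b => μ u ⟨γ,a⟩ * pd ⟨γ,b⟩ (fun v => μ v ⟨β,⟨0,hm β⟩⟩) u)
      (fun a b hab' ha1 => mul_eq_zero_of_right _ (hzero b.1 b.2 (by omega)))
  rw [eT3] at heq
  beta_reduce at heq
  linarith

/-- (E-d): diagonal equation `i = j = (β,j2)`, `j2 ≥ 1`. -/
lemma redEd (hm : ∀ α, 0 < m α) (β : Fin r) (j2 : ℕ) (h1 : 1 ≤ j2) (hj : j2 < m β)
    (h1m : 1 < m β) (hjm1 : j2-1 < m β)
    (hA : ∀ (b : ℕ) (hb : b < m β), b + 2 ≤ j2 →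
      pd ⟨β,⟨j2,hj⟩⟩ (fun v => μ v ⟨β,⟨b,hb⟩⟩) u = 0)
    (hB : ∀ (b : ℕ) (hb : b < m β), j2 + 2 ≤ b →
      pd ⟨β,⟨b,hb⟩⟩ (fun v => μ v ⟨β,⟨j2,hj⟩⟩) u = 0)
    (heq : GT2b μ V ⟨β,⟨j2,hj⟩⟩ ⟨β,⟨j2,hj⟩⟩ u = 0) :
    μ u ⟨β,⟨1,h1m⟩⟩ * pd ⟨β,⟨j2,hj⟩⟩ (fun v => μ v ⟨β,⟨j2-1,hjm1⟩⟩) u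
    + (∑ h : (α : Fin r) × Fin (m α), μ u h * pd h (fun v => μ v ⟨β,⟨0,hm β⟩⟩) u)
    - (if h : j2+1 < m β then
        μ u ⟨β,⟨1,h1m⟩⟩ * pd ⟨β,⟨j2+1,h⟩⟩ (fun v => μ v ⟨β,⟨j2,hj⟩⟩) u else 0)
    - μ u ⟨β,⟨0,hm β⟩⟩ * (∑ γ', pd ⟨γ',⟨0,hm γ'⟩⟩ (fun v => μ v ⟨β,⟨0,hm β⟩⟩) u)
    - (∑ γ', pd ⟨γ',⟨0,hm γ'⟩⟩ V u) = 0 := by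
  rw [GT2b_eval' μ V u hm β β ⟨j2,hj⟩ ⟨j2,hj⟩] at heq
  simp only [Fin.val_mk, eq_self_iff_true, if_true, one_mul] at heq
  rw [if_neg (by omega : ¬ (j2 = 0)), add_zero] at heq
  -- T2 : collapse over b with condition j2 + b = j2
  rw [single_delta (n := m β) j2 ⟨0, hm β⟩ rfl
      (fun b => ∑ h : (α : Fin r) × Fin (m α), μ u h * pd h (fun v => μ v ⟨β,b⟩) u)] at heq
  -- T4 : outer collapse, then inner zero-pair collapse
  rw [single_delta (n := m β) j2 ⟨0, hm β⟩ rfl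
      (fun s2 => ∑ a : Fin (m β), ∑ b : Fin (m β), if (a:ℕ)+(b:ℕ) = (s2:ℕ) then
        μ u ⟨β,a⟩ * (∑ γ', pd ⟨γ',⟨0,hm γ'⟩⟩ (fun v => μ v ⟨β,b⟩) u) else 0)] at heq
  simp only [Fin.val_mk] at heq
  rw [double_delta_zero (n := m β) ⟨0, hm β⟩ ⟨0, hm β⟩ rfl rfl
      (fun a b => μ u ⟨β,a⟩ * (∑ γ', pd ⟨γ',⟨0,hm γ'⟩⟩ (fun v => μ v ⟨β,b⟩) u))] at heq
  -- T1
  have eT1 := double_delta_pair (n := m β) (c := j2) hj h1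
      ⟨0, hm β⟩ ⟨1, h1m⟩ ⟨j2, hj⟩ ⟨j2-1, hjm1⟩ rfl rfl rfl (by simp only [Fin.val_mk]; omega)
      (fun a b => μ u ⟨β,a⟩ * pd ⟨β,⟨j2,hj⟩⟩ (fun v => μ v ⟨β,b⟩) u)
      (fun a b hab ha2 => mul_eq_zero_of_right _ (hA b.1 b.2 (by omega)))
  rw [eT1] at heq
  -- T3
  have eT3 := double_delta_shift2 (n := m β) (c := j2) hj ⟨0, hm β⟩ ⟨1, h1m⟩ ⟨j2, hj⟩
      rfl rfl rfl
      (fun a b => μ u ⟨β,a⟩ * pd ⟨β,b⟩ (fun v => μ v ⟨β,⟨j2,hj⟩⟩) u)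
      (fun a b hab ha2 => mul_eq_zero_of_right _ (hB b.1 b.2 (by omega)))
  rw [eT3] at heq
  beta_reduce at heq
  by_cases hnext : j2+1 < m β
  · rw [dif_pos hnext] at heq ⊢
    linarith
  · rw [dif_neg hnext] at heq ⊢
    linarith

end RedLemmas
section MoreLemmas

variable {r : ℕ} {m : Fin r → ℕ}
variable (μ : (((α : Fin r) × Fin (m α)) → ℝ) → ((α : Fin r) × Fin (m α)) → ℝ)
  (V : (((α : Fin r) × Fin (m α)) → ℝ) → ℝ) (u : ((α : Fin r) × Fin (m α)) → ℝ)

/-- `ccD μ u β k` is the subdiagonal derivative `∂_{(k+1)(β)} μ^{k(β)}(u)` (0 if out of range). -/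
noncomputable def ccD (β : Fin r) (k : ℕ) : ℝ :=
  if h : k+1 < m β then pd ⟨β,⟨k+1,h⟩⟩ (fun v => μ v ⟨β,⟨k, by omega⟩⟩) u else 0

lemma ccD_pos (β : Fin r) (k : ℕ) (h : k+1 < m β) (hk : k < m β) :
    ccD μ u β k = pd ⟨β,⟨k+1,h⟩⟩ (fun v => μ v ⟨β,⟨k,hk⟩⟩) u :=
  dif_pos h

lemma ccD_neg (β : Fin r) (k : ℕ) (h : ¬ (k+1 < m β)) : ccD μ u β k = 0 :=
  dif_neg h

/-- Reduction of `W = ∑_h μ_h ∂_h μ^{0(β)}`. -/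
lemma redW (hm : ∀ α, 0 < m α) (β : Fin r) (h1m : 1 < m β)
    (hAβ : ∀ (b : ℕ) (hb : b < m β), 2 ≤ b →
      pd ⟨β,⟨b,hb⟩⟩ (fun v => μ v ⟨β,⟨0,hm β⟩⟩) u = 0)
    (hCr : ∀ (γ : Fin r), γ ≠ β → ∀ (x : ℕ) (hx : x < m γ), 1 ≤ x →
      pd ⟨γ,⟨x,hx⟩⟩ (fun v => μ v ⟨β,⟨0,hm β⟩⟩) u = 0) :
    (∑ h : (α : Fin r) × Fin (m α), μ u h * pd h (fun v => μ v ⟨β,⟨0,hm β⟩⟩) u)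
    = (∑ γ', μ u ⟨γ',⟨0,hm γ'⟩⟩ * pd ⟨γ',⟨0,hm γ'⟩⟩ (fun v => μ v ⟨β,⟨0,hm β⟩⟩) u)
      + μ u ⟨β,⟨1,h1m⟩⟩ * pd ⟨β,⟨1,h1m⟩⟩ (fun v => μ v ⟨β,⟨0,hm β⟩⟩) u := by
  rw [sum_sigma'']
  have e : ∀ γ' : Fin r,
      (∑ x : Fin (m γ'), μ u ⟨γ',x⟩ * pd ⟨γ',x⟩ (fun v => μ v ⟨β,⟨0,hm β⟩⟩) u)
      = μ u ⟨γ',⟨0,hm γ'⟩⟩ * pd ⟨γ',⟨0,hm γ'⟩⟩ (fun v => μ v ⟨β,⟨0,hm β⟩⟩) u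
        + (if γ' = β then
            μ u ⟨β,⟨1,h1m⟩⟩ * pd ⟨β,⟨1,h1m⟩⟩ (fun v => μ v ⟨β,⟨0,hm β⟩⟩) u else 0) := by
    intro γ'
    by_cases hγ : γ' = β
    · subst hγ
      rw [if_pos rfl]
      rw [sum_two ⟨0,hm γ'⟩ ⟨1,h1m⟩ (by simp [Fin.ext_iff])
        _ (fun a ha0 ha1 => ?_)]
      have ha0' := fin_ne_val (hm γ') ha0
      have ha1' := fin_ne_val h1m ha1
      exact mul_eq_zero_of_right _ (hAβ a.1 a.2 (by omega))
    · rw [if_neg hγ, add_zero]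
      rw [Finset.sum_eq_single (⟨0,hm γ'⟩ : Fin (m γ'))]
      · intro x _ hx
        have hx' := fin_ne_val (hm γ') hx
        exact mul_eq_zero_of_right _ (hCr γ' hγ x.1 x.2 (by omega))
      · intro hb; exact absurd (Finset.mem_univ _) hb
  rw [Finset.sum_congr rfl (fun γ' _ => e γ')]
  rw [Finset.sum_add_distrib, Finset.sum_ite_eq' Finset.univ β
    (fun _ => μ u ⟨β,⟨1,h1m⟩⟩ * pd ⟨β,⟨1,h1m⟩⟩ (fun v => μ v ⟨β,⟨0,hm β⟩⟩) u)]
  rw [if_pos (Finset.mem_univ β)]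

end MoreLemmas

section E1Lemma

variable {r : ℕ} {m : Fin r → ℕ}
variable {U : Set (((α : Fin r) × Fin (m α)) → ℝ)}
variable (μ : (((α : Fin r) × Fin (m α)) → ℝ) → ((α : Fin r) × Fin (m α)) → ℝ)
  (V : (((α : Fin r) × Fin (m α)) → ℝ) → ℝ) (u : ((α : Fin r) × Fin (m α)) → ℝ)

/-- Consequence of (EQ1blocks): `∂_{1(β)} μ^{0(β)} · ∂_{0(β)} V = 0`. -/
lemma redE1 (hU : IsOpen U) (hV : ContDiffOn ℝ (⊤ : ℕ∞) V U) (hu : u ∈ U)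
    (hm : ∀ α, 0 < m α) (β : Fin r) (h1m : 1 < m β)
    (hKV : ∀ (k : ℕ) (hk : k < m β), 1 ≤ k → ∀ v ∈ U, pd ⟨β,⟨k,hk⟩⟩ V v = 0)
    (heq : GT1b μ V ⟨β,⟨0,hm β⟩⟩ ⟨β,⟨1,h1m⟩⟩ u = 0) :
    pd ⟨β,⟨1,h1m⟩⟩ (fun v => μ v ⟨β,⟨0,hm β⟩⟩) u * pd ⟨β,⟨0,hm β⟩⟩ V u = 0 := by
  rw [GT1b_eval' μ V u β β ⟨0,hm β⟩ ⟨1,h1m⟩] at heq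
  simp only [Fin.val_mk] at heq
  have eP1 : (∑ a : Fin (m β), ∑ b : Fin (m β), if (a:ℕ)+0 = (b:ℕ) then
      μ u ⟨β,a⟩ * pd ⟨β,b⟩ (fun v => pd ⟨β,⟨1,h1m⟩⟩ V v) u else 0) = 0 := by
    refine Finset.sum_eq_zero (fun a _ => Finset.sum_eq_zero (fun b _ => ?_))
    have hz : pd ⟨β,b⟩ (fun v => pd ⟨β,⟨1,h1m⟩⟩ V v) u = 0 :=
      pd_zero_of_eqOn hU hu (fun v hv => hKV 1 h1m le_rfl v hv) _
    rw [hz, mul_zero, ite_self]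
  rw [eP1] at heq
  have eP2 : (∑ a : Fin (m β), ∑ b : Fin (m β), if (a:ℕ)+1 = (b:ℕ) then
      μ u ⟨β,a⟩ * pd ⟨β,b⟩ (fun v => pd ⟨β,⟨0,hm β⟩⟩ V v) u else 0) = 0 := by
    refine Finset.sum_eq_zero (fun a _ => Finset.sum_eq_zero (fun b _ => ?_))
    split_ifs with hab
    · have hcm : pd ⟨β,b⟩ (fun v => pd ⟨β,⟨0,hm β⟩⟩ V v) u
          = pd ⟨β,⟨0,hm β⟩⟩ (fun v => pd ⟨β,b⟩ V v) u := pd_comm hU hV hu _ _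
      have hz : pd (⟨β,⟨0,hm β⟩⟩ : (α : Fin r) × Fin (m α))
          (fun v => pd (⟨β,⟨(b:ℕ),b.2⟩⟩ : (α : Fin r) × Fin (m α)) V v) u = 0 :=
        pd_zero_of_eqOn hU hu (fun v hv => hKV (b:ℕ) b.2 (by omega) v hv) _
      exact mul_eq_zero_of_right _ (hcm.trans hz)
    · rfl
  rw [eP2] at heq
  have eP3 : (∑ a : Fin (m β), ∑ b : Fin (m β), if 1+(a:ℕ) = (b:ℕ) then
      pd ⟨β,⟨0,hm β⟩⟩ (fun v => μ v ⟨β,a⟩) u * pd ⟨β,b⟩ V u else 0) = 0 := by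
    refine Finset.sum_eq_zero (fun a _ => Finset.sum_eq_zero (fun b _ => ?_))
    split_ifs with hab
    · exact mul_eq_zero_of_right _ (hKV (b:ℕ) b.2 (by omega) u hu)
    · rfl
  rw [eP3] at heq
  have eP4 := double_delta_shift (n := m β) (c := 0) (hm β) ⟨0, hm β⟩ ⟨0, hm β⟩ rfl rfl
      (fun a b => pd ⟨β,⟨1,h1m⟩⟩ (fun v => μ v ⟨β,a⟩) u * pd ⟨β,b⟩ V u)
      (fun a b hab ha1 => mul_eq_zero_of_right _ (hKV (b:ℕ) b.2 (by omega) u hu))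
  rw [eP4] at heq
  beta_reduce at heq
  linarith

end E1Lemma

section KeyLemma

variable {r : ℕ} {m : Fin r → ℕ}
variable {U : Set (((α : Fin r) × Fin (m α)) → ℝ)}
variable (μ : (((α : Fin r) × Fin (m α)) → ℝ) → ((α : Fin r) × Fin (m α)) → ℝ)
  (V : (((α : Fin r) × Fin (m α)) → ℝ) → ℝ)

lemma keyP (hm : ∀ α, 0 < m α)
    (hdist : ∀ u ∈ U, ∀ α β : Fin r, α ≠ β →
      μ u ⟨α, ⟨0, hm α⟩⟩ ≠ μ u ⟨β, ⟨0, hm β⟩⟩)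
    (h2 : ∀ α : Fin r, ∀ h : 2 ≤ m α, ∀ u ∈ U, μ u ⟨α, ⟨1, h⟩⟩ ≠ 0)
    (hEQ2 : ∀ i j : (α : Fin r) × Fin (m α), ∀ u ∈ U, GT2b μ V i j u = 0)
    (β : Fin r) :
    ∀ (j2 : ℕ) (hj : j2 < m β), 1 ≤ j2 →
      ((∀ u, u ∈ U → ∀ (i2 : ℕ) (hi : i2 < m β), i2 + 2 ≤ j2 →
          pd ⟨β,⟨j2,hj⟩⟩ (fun v => μ v ⟨β,⟨i2,hi⟩⟩) u = 0)
      ∧ (∀ u, u ∈ U → ∀ α : Fin r, α ≠ β →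
          pd ⟨β,⟨j2,hj⟩⟩ (fun v => μ v ⟨α,⟨0,hm α⟩⟩) u = 0)
      ∧ (∀ u, u ∈ U → pd ⟨β,⟨j2,hj⟩⟩ V u = 0)) := by
  suffices H : ∀ (d : ℕ) (j2 : ℕ) (hj : j2 < m β), 1 ≤ j2 → m β - j2 ≤ d →
      ((∀ u, u ∈ U → ∀ (i2 : ℕ) (hi : i2 < m β), i2 + 2 ≤ j2 →
          pd ⟨β,⟨j2,hj⟩⟩ (fun v => μ v ⟨β,⟨i2,hi⟩⟩) u = 0)
      ∧ (∀ u, u ∈ U → ∀ α : Fin r, α ≠ β →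
          pd ⟨β,⟨j2,hj⟩⟩ (fun v => μ v ⟨α,⟨0,hm α⟩⟩) u = 0)
      ∧ (∀ u, u ∈ U → pd ⟨β,⟨j2,hj⟩⟩ V u = 0)) by
    exact fun j2 hj h1 => H (m β - j2) j2 hj h1 le_rfl
  intro d
  induction d with
  | zero => intro j2 hj h1 hd; omega
  | succ d ih =>
    intro j2 hj h1 hd
    have IHgt : ∀ (b : ℕ) (hb : b < m β), j2 < b →
        ((∀ u, u ∈ U → ∀ (i2 : ℕ) (hi : i2 < m β), i2 + 2 ≤ b →
            pd ⟨β,⟨b,hb⟩⟩ (fun v => μ v ⟨β,⟨i2,hi⟩⟩) u = 0)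
        ∧ (∀ u, u ∈ U → ∀ α : Fin r, α ≠ β →
            pd ⟨β,⟨b,hb⟩⟩ (fun v => μ v ⟨α,⟨0,hm α⟩⟩) u = 0)
        ∧ (∀ u, u ∈ U → pd ⟨β,⟨b,hb⟩⟩ V u = 0)) :=
      fun b hb hgt => ih b hb (by omega) (by omega)
    have h1m : 1 < m β := by omega
    have parta : ∀ u, u ∈ U → ∀ (i2 : ℕ) (hi : i2 < m β), i2 + 2 ≤ j2 →
        pd ⟨β,⟨j2,hj⟩⟩ (fun v => μ v ⟨β,⟨i2,hi⟩⟩) u = 0 := by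
      intro u hu
      have step : ∀ i2 : ℕ,
          (∀ b : ℕ, b < i2 → ∀ (hb : b < m β), b+2 ≤ j2 →
            pd ⟨β,⟨j2,hj⟩⟩ (fun v => μ v ⟨β,⟨b,hb⟩⟩) u = 0) →
          ∀ (hi : i2 < m β), i2+2 ≤ j2 →
            pd ⟨β,⟨j2,hj⟩⟩ (fun v => μ v ⟨β,⟨i2,hi⟩⟩) u = 0 := by
        intro i2 ihin hi hij
        have hβ2 : 2 ≤ m β := by omega
        have hi1 : i2+1 < m β := by omega
        exact redEa μ V u hm β i2 j2 hi1 hj hij hi h1m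
          (fun b hb hblt => ihin b hblt hb (by omega))
          (fun b hb hgt => (IHgt b hb hgt).1 u hu (i2+1) hi1 (by omega))
          (h2 β hβ2 u hu)
          (hEQ2 _ _ u hu)
      have wrap : ∀ (N i2 : ℕ), i2 ≤ N → ∀ (hi : i2 < m β), i2+2 ≤ j2 →
          pd ⟨β,⟨j2,hj⟩⟩ (fun v => μ v ⟨β,⟨i2,hi⟩⟩) u = 0 := by
        intro N
        induction N with
        | zero => exact fun i2 hle => step i2 (fun b hb => by omega)
        | succ N ihN => exact fun i2 hle => step i2 (fun b hblt hb hbj => ihN b (by omega) hb hbj)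
      exact fun i2 hi hij => wrap i2 i2 le_rfl hi hij
    have partV : ∀ u, u ∈ U → pd ⟨β,⟨j2,hj⟩⟩ V u = 0 := by
      intro u hu
      exact redEb0 μ V u hm β j2 h1 hj
        (fun b hb hgt => (IHgt b hb hgt).1 u hu 0 (hm β) (by omega))
        (hEQ2 _ _ u hu)
    have partb : ∀ u, u ∈ U → ∀ α : Fin r, α ≠ β →
        pd ⟨β,⟨j2,hj⟩⟩ (fun v => μ v ⟨α,⟨0,hm α⟩⟩) u = 0 := by
      intro u hu α hab
      exact redEb μ V u hm α β hab j2 h1 hj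
        (fun b hb hgt => (IHgt b hb hgt).2.1 u hu α hab)
        (partV u hu)
        (hdist u hu α β hab)
        (hEQ2 _ _ u hu)
    exact ⟨parta, partb, partV⟩

end KeyLemma
/-- a solution of the multi-block generalised Gibbons–Tsarev system with
distinct leading components and `μ^{2(α)} ≠ 0` has `∂_{j(β)} μ^{1(α)} = 0` for every `α`,
every `β` with `m_β ≥ 2`, and every `j ∈ {2,…,m_β}` (0-based: `j ≥ 1`). -/
theorem stmt13 {r : ℕ} (m : Fin r → ℕ) (hm : ∀ α, 0 < m α)
    (hn : 2 ≤ ∑ α, m α)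
    (U : Set (((α : Fin r) × Fin (m α)) → ℝ)) (hU : IsOpen U)
    (V : (((α : Fin r) × Fin (m α)) → ℝ) → ℝ)
    (μ : (((α : Fin r) × Fin (m α)) → ℝ) → ((α : Fin r) × Fin (m α)) → ℝ)
    (hV : ContDiffOn ℝ (⊤ : ℕ∞) V U) (hμ : ContDiffOn ℝ (⊤ : ℕ∞) μ U)
    (hdist : ∀ u ∈ U, ∀ α β : Fin r, α ≠ β →
      μ u ⟨α, ⟨0, hm α⟩⟩ ≠ μ u ⟨β, ⟨0, hm β⟩⟩)
    (h2 : ∀ α : Fin r, ∀ h : 2 ≤ m α, ∀ u ∈ U, μ u ⟨α, ⟨1, h⟩⟩ ≠ 0)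
    (hEQ1 : ∀ i j : (α : Fin r) × Fin (m α), ∀ u ∈ U, GT1b μ V i j u = 0)
    (hEQ2 : ∀ i j : (α : Fin r) × Fin (m α), ∀ u ∈ U, GT2b μ V i j u = 0) :
    ∀ α β : Fin r, 2 ≤ m β → ∀ j : Fin (m β), 1 ≤ (j : ℕ) →
      ∀ u ∈ U,
        pd (⟨β, j⟩ : (α : Fin r) × Fin (m α)) (fun v => μ v ⟨α, ⟨0, hm α⟩⟩) u = 0 := by
  have K := keyP μ V hm hdist h2 hEQ2
  intro α β hβ2 j hj1 u hu
  by_cases hab : α = β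
  · subst hab
    by_cases hj2 : 2 ≤ (j : ℕ)
    · exact (K α (j:ℕ) j.2 (by omega)).1 u hu 0 (hm α) (by omega)
    · -- the hard case : j = 1, same block
      have hj1' : (j:ℕ) = 1 := by omega
      have h1m : 1 < m α := hβ2
      rw [show j = (⟨1, h1m⟩ : Fin (m α)) from Fin.ext (by simp only [Fin.val_mk]; omega)]
      -- notation
      have hKV : ∀ (k : ℕ) (hk : k < m α), 1 ≤ k → ∀ v ∈ U, pd ⟨α,⟨k,hk⟩⟩ V v = 0 :=
        fun k hk h1 v hv => (K α k hk h1).2.2 v hv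
      have hKAβ : ∀ (b : ℕ) (hb : b < m α) (i2 : ℕ) (hi : i2 < m α), i2 + 2 ≤ b →
          pd ⟨α,⟨b,hb⟩⟩ (fun v => μ v ⟨α,⟨i2,hi⟩⟩) u = 0 :=
        fun b hb i2 hi hle => (K α b hb (by omega)).1 u hu i2 hi hle
      have hCr : ∀ (γ : Fin r), γ ≠ α → ∀ (x : ℕ) (hx : x < m γ), 1 ≤ x →
          pd ⟨γ,⟨x,hx⟩⟩ (fun v => μ v ⟨α,⟨0,hm α⟩⟩) u = 0 :=
        fun γ hγ x hx h1x => (K γ x hx h1x).2.1 u hu α (fun h => hγ h.symm)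
      -- cross relation for every γ ≠ α
      have hcross : ∀ γ : Fin r, γ ≠ α →
          (μ u ⟨α,⟨0,hm α⟩⟩ - μ u ⟨γ,⟨0,hm γ⟩⟩)
            * pd ⟨γ,⟨0,hm γ⟩⟩ (fun v => μ v ⟨α,⟨0,hm α⟩⟩) u
          + pd ⟨γ,⟨0,hm γ⟩⟩ V u = 0 :=
        fun γ hγ => redEc μ V u hm α γ hγ
          (fun x hx h1x => hCr γ hγ x hx h1x) (hEQ2 _ _ u hu)
      -- the combined γ'-sum
      have hsum : (∑ γ', μ u ⟨γ',⟨0,hm γ'⟩⟩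
              * pd ⟨γ',⟨0,hm γ'⟩⟩ (fun v => μ v ⟨α,⟨0,hm α⟩⟩) u)
          - μ u ⟨α,⟨0,hm α⟩⟩
              * (∑ γ', pd ⟨γ',⟨0,hm γ'⟩⟩ (fun v => μ v ⟨α,⟨0,hm α⟩⟩) u)
          - (∑ γ', pd ⟨γ',⟨0,hm γ'⟩⟩ V u)
          = - pd ⟨α,⟨0,hm α⟩⟩ V u := by
        rw [Finset.mul_sum, ← Finset.sum_sub_distrib, ← Finset.sum_sub_distrib]
        rw [Finset.sum_eq_single α
          (fun γ' _ hγ' => by have := hcross γ' hγ'; linarith)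
          (fun hmem => absurd (Finset.mem_univ α) hmem)]
        ring
      -- diagonal recursion
      have hdiag : ∀ k : ℕ, k + 1 < m α →
          μ u ⟨α,⟨1,h1m⟩⟩ * ccD μ u α k
          = μ u ⟨α,⟨1,h1m⟩⟩ * ccD μ u α (k+1)
            + (pd ⟨α,⟨0,hm α⟩⟩ V u
              - μ u ⟨α,⟨1,h1m⟩⟩ * pd ⟨α,⟨1,h1m⟩⟩ (fun v => μ v ⟨α,⟨0,hm α⟩⟩) u) := by
        intro k hk1
        have hjm1 : k+1-1 < m α := by omega
        have e := redEd μ V u hm α (k+1) (by omega) hk1 h1m hjm1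
          (fun b hb hb2 => hKAβ (k+1) hk1 b hb hb2)
          (fun b hb hb2 => hKAβ b hb (k+1) hk1 hb2)
          (hEQ2 _ _ u hu)
        have hW := redW μ u hm α h1m
          (fun b hb hb2 => hKAβ b hb 0 (hm α) (by omega))
          hCr
        rw [hW] at e
        have eA : ccD μ u α k
            = pd ⟨α,⟨k+1,hk1⟩⟩ (fun v => μ v ⟨α,⟨k+1-1,hjm1⟩⟩) u := ccD_pos μ u α k hk1 hjm1
        have eB : (if h : k+1+1 < m α then
              μ u ⟨α,⟨1,h1m⟩⟩ * pd ⟨α,⟨k+1+1,h⟩⟩ (fun v => μ v ⟨α,⟨k+1,hk1⟩⟩) u else 0)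
            = μ u ⟨α,⟨1,h1m⟩⟩ * ccD μ u α (k+1) := by
          by_cases hnext : k+1+1 < m α
          · rw [dif_pos hnext, ccD_pos μ u α (k+1) hnext hk1]
          · rw [dif_neg hnext, ccD_neg μ u α (k+1) hnext, mul_zero]
        rw [eB] at e
        rw [eA]
        linarith
      -- telescoping
      have htop : (fun k => μ u ⟨α,⟨1,h1m⟩⟩ * ccD μ u α k) (m α - 1) = 0 := by
        simp only
        rw [ccD_neg μ u α (m α - 1) (by omega), mul_zero]
      have htele := tele_lemma (fun k => μ u ⟨α,⟨1,h1m⟩⟩ * ccD μ u α k)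
        (pd ⟨α,⟨0,hm α⟩⟩ V u
          - μ u ⟨α,⟨1,h1m⟩⟩ * pd ⟨α,⟨1,h1m⟩⟩ (fun v => μ v ⟨α,⟨0,hm α⟩⟩) u)
        (m α) (by omega) (fun k hk => hdiag k hk) htop
      have hX : ccD μ u α 0 = pd ⟨α,⟨1,h1m⟩⟩ (fun v => μ v ⟨α,⟨0,hm α⟩⟩) u :=
        ccD_pos μ u α 0 h1m (hm α)
      rw [hX] at htele
      -- EQ1 consequence
      have hE1 := redE1 μ V u hU hV hu hm α h1m hKV (hEQ1 _ _ u hu)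
      -- finish
      set X := pd ⟨α,⟨1,h1m⟩⟩ (fun v => μ v ⟨α,⟨0,hm α⟩⟩) u with hXdef
      set μ1 := μ u ⟨α,⟨1,h1m⟩⟩ with hμ1def
      set pV := pd ⟨α,⟨0,hm α⟩⟩ V u with hpVdef
      have hMcast : ((m α - 1 : ℕ) : ℝ) = (m α : ℝ) - 1 := by
        rw [Nat.cast_sub (by omega)]; norm_num
      rw [hMcast] at htele
      have hμ1ne : μ1 ≠ 0 := h2 α hβ2 u hu
      have hMne : (m α : ℝ) ≠ 0 := Nat.cast_ne_zero.mpr (by omega)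
      have hprod : (m α : ℝ) * (μ1 * (X * X)) = 0 := by
        have h0 : (m α : ℝ) * (μ1 * (X * X)) = ((m α : ℝ) - 1) * (X * pV) := by
          linear_combination X * htele
        rw [h0, hE1, mul_zero]
      have hXX : X * X = 0 :=
        (mul_eq_zero.mp ((mul_eq_zero.mp hprod).resolve_left hMne)).resolve_left hμ1ne
      exact mul_self_eq_zero.mp hXX
  · exact (K β (j:ℕ) j.2 hj1).2.1 u hu α hab
end

section
/- In the multi-block generalised Gibbons–Tsarev setting, let U ⊆ ℝ^n be open and let V and the μ^{i(α)} be smooth functions on U satisfying equations (EQ1blocks) and (EQ2blocks), with μ^{1(α)}(u) ≠ μ^{1(β)}(u) for all u ∈ U and all distinct α, β, and μ^{2(α)}(u) ≠ 0 for all u ∈ U whenever m_α ≥ 2. Then the classical Gibbons–Tsarev equations hold for the leading variables: for all distinct α, β ∈ {1,…,r}, on all of U, (a) ∂_{1(β)} V = (μ^{1(β)} − μ^{1(α)})·∂_{1(β)} μ^{1(α)}, and (b) (μ^{1(β)} − μ^{1(α)})²·∂_{1(α)}∂_{1(β)} V = 2·(∂_{1(α)} V)·(∂_{1(β)} V). 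-/
open scoped BigOperators

section AuxSums

variable {r : ℕ} {m : Fin r → ℕ}

private lemma sum_fiber (γ : Fin r) (f : ((α : Fin r) × Fin (m α)) → ℝ)
    (hf : ∀ x : (α : Fin r) × Fin (m α), x.1 ≠ γ → f x = 0) :
    ∑ x : (α : Fin r) × Fin (m α), f x = ∑ a : Fin (m γ), f ⟨γ, a⟩ := by
  rw [← Finset.univ_sigma_univ, Finset.sum_sigma]
  exact Fintype.sum_eq_single γ (fun c hc => Finset.sum_eq_zero fun a _ => hf ⟨c, a⟩ hc)

private lemma sum_sum_one {n n' : ℕ} (f : Fin n → Fin n' → ℝ) (a0 : Fin n) (b0 : Fin n')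
    (h : ∀ a b, ¬(a = a0 ∧ b = b0) → f a b = 0) :
    (∑ a, ∑ b, f a b) = f a0 b0 := by
  rw [Fintype.sum_eq_single a0 (fun a ha => Finset.sum_eq_zero fun b _ => h a b fun hc => ha hc.1),
      Fintype.sum_eq_single b0 (fun b hb => h a0 b fun hc => hb hc.2)]

private lemma sum_sum_two {n n' : ℕ} (f : Fin n → Fin n' → ℝ) (a0 : Fin n) (b0 : Fin n')
    (a1 : Fin n) (b1 : Fin n') (hne : (a0, b0) ≠ (a1, b1))
    (h : ∀ a b, (a, b) ≠ (a0, b0) → (a, b) ≠ (a1, b1) → f a b = 0) :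
    (∑ a, ∑ b, f a b) = f a0 b0 + f a1 b1 := by
  have h1 : ∑ x : Fin n × Fin n', f x.1 x.2
      = ∑ x ∈ ({(a0, b0), (a1, b1)} : Finset (Fin n × Fin n')), f x.1 x.2 :=
    (Finset.sum_subset (Finset.subset_univ _) (fun x _ hx => by
      simp only [Finset.mem_insert, Finset.mem_singleton] at hx
      push_neg at hx
      exact h x.1 x.2 hx.1 hx.2)).symm
  have h2 : (∑ a, ∑ b, f a b) = ∑ x : Fin n × Fin n', f x.1 x.2 :=
    (Fintype.sum_prod_type (fun x : Fin n × Fin n' => f x.1 x.2)).symm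
  rw [h2, h1, Finset.sum_pair hne]

end AuxSums

section AuxCalc

private lemma pd_eq_zero_of_zero_on {ι : Type*} [Fintype ι] [DecidableEq ι]
    {U : Set (ι → ℝ)} (hU : IsOpen U) {f : (ι → ℝ) → ℝ} (hf : ∀ v ∈ U, f v = 0)
    {u : ι → ℝ} (hu : u ∈ U) (i : ι) : pd i f u = 0 := by
  have h : f =ᶠ[nhds u] fun _ => (0 : ℝ) := Filter.eventuallyEq_of_mem (hU.mem_nhds hu) hf
  rw [pd, h.fderiv_eq]
  simp

private lemma pd_symm {ι : Type*} [Fintype ι] [DecidableEq ι]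
    {U : Set (ι → ℝ)} (hU : IsOpen U) {f : (ι → ℝ) → ℝ} (hf : ContDiffOn ℝ (⊤ : ℕ∞) f U)
    {u : ι → ℝ} (hu : u ∈ U) (a b : ι) :
    pd a (fun v => pd b f v) u = pd b (fun v => pd a f v) u := by
  have hdiff : ∀ v ∈ U, DifferentiableAt ℝ f v := fun v hv =>
    ((hf.differentiableOn (by simp)).differentiableAt (hU.mem_nhds hv))
  have hf' : ContDiffOn ℝ 1 (fderiv ℝ f) U := hf.fderiv_of_isOpen hU (by exact WithTop.coe_le_coe.mpr le_top)
  have hdc : DifferentiableAt ℝ (fderiv ℝ f) u :=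
    (hf'.differentiableOn one_ne_zero).differentiableAt (hU.mem_nhds hu)
  have hev : ∀ᶠ y in nhds u, HasFDerivAt f (fderiv ℝ f y) y := by
    filter_upwards [hU.mem_nhds hu] with y hy using (hdiff y hy).hasFDerivAt
  have hsym := second_derivative_symmetric_of_eventually hev hdc.hasFDerivAt
    (Pi.single a 1) (Pi.single b 1)
  have comp : ∀ c d : ι, pd c (fun v => pd d f v) u
      = fderiv ℝ (fderiv ℝ f) u (Pi.single c 1) (Pi.single d 1) := by
    intro c d
    have : (fun v => pd d f v) = fun v => (fderiv ℝ f v) (Pi.single d 1) := rfl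
    rw [pd, this, fderiv_clm_apply hdc (differentiableAt_const _)]
    simp
  rw [comp a b, comp b a, hsym]

end AuxCalc

section Key

variable {r : ℕ} {m : Fin r → ℕ}
  {U : Set (((α : Fin r) × Fin (m α)) → ℝ)}
  {V : (((α : Fin r) × Fin (m α)) → ℝ) → ℝ}
  {μ : (((α : Fin r) × Fin (m α)) → ℝ) → ((α : Fin r) × Fin (m α)) → ℝ}

private lemma keyEq
    (hEQ2 : ∀ i j : (α : Fin r) × Fin (m α), ∀ u ∈ U, GT2b μ V i j u = 0)
    (α β : Fin r) (p : Fin (m α)) (t : Fin (m β))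
    (hcase : α ≠ β ∨ (p : ℕ) < (t : ℕ)) {u : ((α : Fin r) × Fin (m α)) → ℝ} (hu : u ∈ U) :
    (∑ a : Fin (m α), ∑ b : Fin (m α),
       if (a : ℕ) + (b : ℕ) = (p : ℕ) then
         μ u ⟨α, a⟩ * pd ⟨β, t⟩ (fun v => μ v ⟨α, b⟩) u else 0)
    - (∑ c : Fin (m β), ∑ k : Fin (m β),
       if (t : ℕ) + (c : ℕ) = (k : ℕ) then
         μ u ⟨β, c⟩ * pd ⟨β, k⟩ (fun v => μ v ⟨α, p⟩) u else 0)
    + (if (p : ℕ) = 0 then pd ⟨β, t⟩ V u else 0) = 0 := by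
  have h0 := hEQ2 ⟨α, p⟩ ⟨β, t⟩ u hu
  have hij : (⟨α, p⟩ : (α : Fin r) × Fin (m α)) ≠ ⟨β, t⟩ := by
    intro hh
    rcases hcase with hc | hc
    · exact hc (congrArg Sigma.fst hh)
    · have := congrArg Sigma.fst hh
      subst this
      have : p = t := by
        simpa using Sigma.mk.inj_iff.mp hh
      omega
  have hbij : ∀ k : (α : Fin r) × Fin (m α), bc ⟨α, p⟩ ⟨β, t⟩ k = 0 := by
    intro k
    rw [bc, if_neg]
    rintro ⟨h1, -, h3⟩
    rcases hcase with hc | hc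
    · exact hc h1
    · simp only at h3
      omega
  have e_second : (∑ h : (α : Fin r) × Fin (m α), ∑ s : (α : Fin r) × Fin (m α),
      ∑ k : (α : Fin r) × Fin (m α), μ u h * bc ⟨α, p⟩ ⟨β, t⟩ s * bc s h k *
        (∑ t', bec t' * pd t' (fun v => μ v k) u)) = 0 := by
    refine Finset.sum_eq_zero fun h _ => Finset.sum_eq_zero fun s _ =>
      Finset.sum_eq_zero fun k _ => ?_
    rw [hbij s]
    ring
  have e_fourth : (if (⟨α, p⟩ : (α : Fin r) × Fin (m α)) = ⟨β, t⟩ then (1:ℝ) else 0) = 0 :=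
    if_neg hij
  have e_third : bec (⟨α, p⟩ : (α : Fin r) × Fin (m α)) * pd ⟨β, t⟩ V u
      = (if (p : ℕ) = 0 then pd ⟨β, t⟩ V u else 0) := by
    rw [bec]
    simp only [ite_mul, one_mul, zero_mul]
  have e_first : (∑ h : (α : Fin r) × Fin (m α), ∑ k : (α : Fin r) × Fin (m α),
      μ u h * (bc ⟨α, p⟩ h k * pd ⟨β, t⟩ (fun v => μ v k) u
        + bc ⟨α, p⟩ ⟨β, t⟩ k * pd h (fun v => μ v k) u
        - bc k ⟨β, t⟩ h * pd k (fun v => μ v ⟨α, p⟩) u))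
      = (∑ a : Fin (m α), ∑ b : Fin (m α),
       if (a : ℕ) + (b : ℕ) = (p : ℕ) then
         μ u ⟨α, a⟩ * pd ⟨β, t⟩ (fun v => μ v ⟨α, b⟩) u else 0)
      - (∑ c : Fin (m β), ∑ k : Fin (m β),
       if (t : ℕ) + (c : ℕ) = (k : ℕ) then
         μ u ⟨β, c⟩ * pd ⟨β, k⟩ (fun v => μ v ⟨α, p⟩) u else 0) := by
    have point : ∀ h k : (α : Fin r) × Fin (m α),
        μ u h * (bc ⟨α, p⟩ h k * pd ⟨β, t⟩ (fun v => μ v k) u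
          + bc ⟨α, p⟩ ⟨β, t⟩ k * pd h (fun v => μ v k) u
          - bc k ⟨β, t⟩ h * pd k (fun v => μ v ⟨α, p⟩) u)
        = bc ⟨α, p⟩ h k * (μ u h * pd ⟨β, t⟩ (fun v => μ v k) u)
          - bc k ⟨β, t⟩ h * (μ u h * pd k (fun v => μ v ⟨α, p⟩) u) := by
      intro h k
      rw [hbij k]
      ring
    rw [Finset.sum_congr rfl fun h _ => Finset.sum_congr rfl fun k _ => point h k]
    rw [Finset.sum_congr rfl fun h _ => Finset.sum_sub_distrib (s := Finset.univ) _ _,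
        Finset.sum_sub_distrib]
    congr 1
    · -- S1
      rw [sum_fiber α _ (fun x hx => Finset.sum_eq_zero fun k _ => by
        rw [show bc ⟨α, p⟩ x k = 0 from by
          rw [bc, if_neg]; rintro ⟨h1, -, -⟩; exact hx h1.symm, zero_mul])]
      refine Finset.sum_congr rfl fun a _ => ?_
      rw [sum_fiber α _ (fun x hx => by
        rw [show bc ⟨α, p⟩ ⟨α, a⟩ x = 0 from by
          rw [bc, if_neg]; rintro ⟨-, h2, -⟩; exact hx h2.symm, zero_mul])]
      refine Finset.sum_congr rfl fun b _ => ?_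
      rw [bc]
      simp only [true_and, ite_mul, one_mul, zero_mul]
    · -- S3
      rw [sum_fiber β _ (fun x hx => Finset.sum_eq_zero fun k _ => by
        rw [show bc k ⟨β, t⟩ x = 0 from by
          rw [bc, if_neg]; rintro ⟨h1, h2, -⟩; exact hx (h2.symm.trans h1), zero_mul])]
      refine Finset.sum_congr rfl fun c _ => ?_
      rw [sum_fiber β _ (fun x hx => by
        rw [show bc x ⟨β, t⟩ ⟨β, c⟩ = 0 from by
          rw [bc, if_neg]; rintro ⟨h1, -, -⟩; exact hx h1, zero_mul])]
      refine Finset.sum_congr rfl fun k _ => ?_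
      rw [bc]
      simp only [true_and, ite_mul, one_mul, zero_mul]
  rw [GT2b, e_first, e_second, e_third, e_fourth] at h0
  linarith [h0]

end Key

section Van

variable {r : ℕ} {m : Fin r → ℕ}
  {U : Set (((α : Fin r) × Fin (m α)) → ℝ)}
  {V : (((α : Fin r) × Fin (m α)) → ℝ) → ℝ}
  {μ : (((α : Fin r) × Fin (m α)) → ℝ) → ((α : Fin r) × Fin (m α)) → ℝ}

private lemma lemB
    (h2 : ∀ α : Fin r, ∀ h : 2 ≤ m α, ∀ u ∈ U, μ u ⟨α, ⟨1, h⟩⟩ ≠ 0)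
    (hEQ2 : ∀ i j : (α : Fin r) × Fin (m α), ∀ u ∈ U, GT2b μ V i j u = 0)
    (β : Fin r) {u : ((α : Fin r) × Fin (m α)) → ℝ} (hu : u ∈ U) :
    ∀ (q s : Fin (m β)), (q : ℕ) + 2 ≤ (s : ℕ) →
      pd ⟨β, s⟩ (fun v => μ v ⟨β, q⟩) u = 0 := by
  suffices H : ∀ N : ℕ, ∀ q s : Fin (m β), (m β - (s : ℕ)) * (m β) + (q : ℕ) ≤ N →
      (q : ℕ) + 2 ≤ (s : ℕ) → pd ⟨β, s⟩ (fun v => μ v ⟨β, q⟩) u = 0 from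
    fun q s hqs => H _ q s le_rfl hqs
  intro N
  induction N with
  | zero =>
    intro q s hN hqs
    exfalso
    have hs := s.isLt
    have h1 : 1 ≤ (m β - (s : ℕ)) * m β :=
      Nat.one_le_iff_ne_zero.mpr (Nat.mul_ne_zero (by omega) (by omega))
    omega
  | succ n ih =>
    intro q s hN hqs
    have hslt := s.isLt
    have hqlt := q.isLt
    have hq1 : (q : ℕ) + 1 < m β := by omega
    have h0m : 0 < m β := by omega
    have h1m : 1 < m β := by omega
    have h2m : 2 ≤ m β := by omega
    have key := keyEq hEQ2 β β ⟨(q : ℕ) + 1, hq1⟩ s (Or.inr (by simpa using by omega)) hu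
    have hS1 : (∑ a : Fin (m β), ∑ b : Fin (m β),
        if (a : ℕ) + (b : ℕ) = ((⟨(q : ℕ) + 1, hq1⟩ : Fin (m β)) : ℕ) then
          μ u ⟨β, a⟩ * pd ⟨β, s⟩ (fun v => μ v ⟨β, b⟩) u else 0)
        = μ u ⟨β, ⟨0, h0m⟩⟩ * pd ⟨β, s⟩ (fun v => μ v ⟨β, ⟨(q : ℕ) + 1, hq1⟩⟩) u
          + μ u ⟨β, ⟨1, h1m⟩⟩ * pd ⟨β, s⟩ (fun v => μ v ⟨β, q⟩) u := by
      have hne : ((⟨0, h0m⟩ : Fin (m β)), (⟨(q : ℕ) + 1, hq1⟩ : Fin (m β)))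
          ≠ ((⟨1, h1m⟩ : Fin (m β)), q) := by
        intro hh
        have := congrArg (fun x => ((x.1 : Fin (m β)) : ℕ)) hh
        simp at this
      have hzero : ∀ a b : Fin (m β),
          (a, b) ≠ ((⟨0, h0m⟩ : Fin (m β)), (⟨(q : ℕ) + 1, hq1⟩ : Fin (m β))) →
          (a, b) ≠ ((⟨1, h1m⟩ : Fin (m β)), q) →
          (if (a : ℕ) + (b : ℕ) = ((⟨(q : ℕ) + 1, hq1⟩ : Fin (m β)) : ℕ) then
            μ u ⟨β, a⟩ * pd ⟨β, s⟩ (fun v => μ v ⟨β, b⟩) u else 0) = 0 := by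
        intro a b ha hb
        by_cases hc : (a : ℕ) + (b : ℕ) = ((⟨(q : ℕ) + 1, hq1⟩ : Fin (m β)) : ℕ)
        · rw [if_pos hc]
          simp only [Fin.val_mk] at hc
          have ha2 : 2 ≤ (a : ℕ) := by
            rcases Nat.lt_or_ge (a : ℕ) 2 with h' | h'
            · exfalso
              have : (a : ℕ) = 0 ∨ (a : ℕ) = 1 := by omega
              rcases this with h' | h'
              · have e1 : a = (⟨0, h0m⟩ : Fin (m β)) := Fin.ext (by simpa using h')
                have e2 : b = (⟨(q : ℕ) + 1, hq1⟩ : Fin (m β)) := Fin.ext (by simp; omega)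
                exact ha (by rw [e1, e2])
              · have e1 : a = (⟨1, h1m⟩ : Fin (m β)) := Fin.ext (by simpa using h')
                have e2 : b = q := Fin.ext (by omega)
                exact hb (by rw [e1, e2])
            · exact h'
          have hb2 : (b : ℕ) + 2 ≤ (s : ℕ) := by omega
          rw [ih b s (by omega) hb2, mul_zero]
        · rw [if_neg hc]
      refine (sum_sum_two _ _ _ _ _ hne hzero).trans ?_
      show (if ((⟨0, h0m⟩ : Fin (m β)) : ℕ) + ((⟨(q : ℕ) + 1, hq1⟩ : Fin (m β)) : ℕ)
              = ((⟨(q : ℕ) + 1, hq1⟩ : Fin (m β)) : ℕ) then _ else 0)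
          + (if ((⟨1, h1m⟩ : Fin (m β)) : ℕ) + (q : ℕ)
              = ((⟨(q : ℕ) + 1, hq1⟩ : Fin (m β)) : ℕ) then _ else 0) = _
      rw [if_pos (by simp), if_pos (by simp; omega)]
    have hS2 : (∑ c : Fin (m β), ∑ k : Fin (m β),
        if (s : ℕ) + (c : ℕ) = (k : ℕ) then
          μ u ⟨β, c⟩ * pd ⟨β, k⟩ (fun v => μ v ⟨β, ⟨(q : ℕ) + 1, hq1⟩⟩) u else 0)
        = μ u ⟨β, ⟨0, h0m⟩⟩ * pd ⟨β, s⟩ (fun v => μ v ⟨β, ⟨(q : ℕ) + 1, hq1⟩⟩) u := by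
      have hzero : ∀ c k : Fin (m β), ¬(c = (⟨0, h0m⟩ : Fin (m β)) ∧ k = s) →
          (if (s : ℕ) + (c : ℕ) = (k : ℕ) then
            μ u ⟨β, c⟩ * pd ⟨β, k⟩ (fun v => μ v ⟨β, ⟨(q : ℕ) + 1, hq1⟩⟩) u else 0) = 0 := by
        intro c k hck
        by_cases hc : (s : ℕ) + (c : ℕ) = (k : ℕ)
        · rw [if_pos hc]
          rcases Nat.eq_zero_or_pos (c : ℕ) with h' | h'
          · exact absurd ⟨Fin.ext (by simpa using h'), Fin.ext (by omega)⟩ hck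
          · have hklt := k.isLt
            have hk2 : ((⟨(q : ℕ) + 1, hq1⟩ : Fin (m β)) : ℕ) + 2 ≤ (k : ℕ) := by
              simp only [Fin.val_mk]; omega
            have hml : (m β - (k : ℕ)) + 1 ≤ m β - (s : ℕ) := by omega
            have hmul : ((m β - (k : ℕ)) + 1) * m β ≤ (m β - (s : ℕ)) * m β :=
              Nat.mul_le_mul_right _ hml
            rw [add_one_mul] at hmul
            rw [ih ⟨(q : ℕ) + 1, hq1⟩ k (by simp only [Fin.val_mk]; omega) hk2, mul_zero]
        · rw [if_neg hc]
      refine (sum_sum_one _ _ _ hzero).trans ?_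
      show (if (s : ℕ) + ((⟨0, h0m⟩ : Fin (m β)) : ℕ) = (s : ℕ) then _ else 0) = _
      rw [if_pos (by simp)]
    have hS3 : (if ((⟨(q : ℕ) + 1, hq1⟩ : Fin (m β)) : ℕ) = 0 then pd ⟨β, s⟩ V u else 0)
        = 0 := by
      rw [if_neg (by simp)]
    rw [hS1, hS2, hS3] at key
    have hmu : μ u ⟨β, ⟨1, h1m⟩⟩ * pd ⟨β, s⟩ (fun v => μ v ⟨β, q⟩) u = 0 := by linarith
    exact (mul_eq_zero.mp hmu).resolve_left (h2 β h2m u hu)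

private lemma lemC
    (h2 : ∀ α : Fin r, ∀ h : 2 ≤ m α, ∀ u ∈ U, μ u ⟨α, ⟨1, h⟩⟩ ≠ 0)
    (hEQ2 : ∀ i j : (α : Fin r) × Fin (m α), ∀ u ∈ U, GT2b μ V i j u = 0)
    (β : Fin r) {u : ((α : Fin r) × Fin (m α)) → ℝ} (hu : u ∈ U)
    (s : Fin (m β)) (hs : 1 ≤ (s : ℕ)) : pd ⟨β, s⟩ V u = 0 := by
  have h0m : 0 < m β := by have := s.isLt; omega
  have key := keyEq hEQ2 β β ⟨0, h0m⟩ s (Or.inr (by simp; omega)) hu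
  have hS1 : (∑ a : Fin (m β), ∑ b : Fin (m β),
      if (a : ℕ) + (b : ℕ) = ((⟨0, h0m⟩ : Fin (m β)) : ℕ) then
        μ u ⟨β, a⟩ * pd ⟨β, s⟩ (fun v => μ v ⟨β, b⟩) u else 0)
      = μ u ⟨β, ⟨0, h0m⟩⟩ * pd ⟨β, s⟩ (fun v => μ v ⟨β, ⟨0, h0m⟩⟩) u := by
    have hzero : ∀ a b : Fin (m β), ¬(a = (⟨0, h0m⟩ : Fin (m β)) ∧ b = (⟨0, h0m⟩ : Fin (m β))) →
        (if (a : ℕ) + (b : ℕ) = ((⟨0, h0m⟩ : Fin (m β)) : ℕ) then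
          μ u ⟨β, a⟩ * pd ⟨β, s⟩ (fun v => μ v ⟨β, b⟩) u else 0) = 0 := by
      intro a b hab
      by_cases hc : (a : ℕ) + (b : ℕ) = ((⟨0, h0m⟩ : Fin (m β)) : ℕ)
      · simp only [Fin.val_mk] at hc
        exact absurd ⟨Fin.ext (by simp; omega), Fin.ext (by simp; omega)⟩ hab
      · rw [if_neg hc]
    refine (sum_sum_one _ _ _ hzero).trans ?_
    show (if ((⟨0, h0m⟩ : Fin (m β)) : ℕ) + ((⟨0, h0m⟩ : Fin (m β)) : ℕ)
        = ((⟨0, h0m⟩ : Fin (m β)) : ℕ) then _ else 0) = _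
    rw [if_pos (by simp)]
  have hS2 : (∑ c : Fin (m β), ∑ k : Fin (m β),
      if (s : ℕ) + (c : ℕ) = (k : ℕ) then
        μ u ⟨β, c⟩ * pd ⟨β, k⟩ (fun v => μ v ⟨β, ⟨0, h0m⟩⟩) u else 0)
      = μ u ⟨β, ⟨0, h0m⟩⟩ * pd ⟨β, s⟩ (fun v => μ v ⟨β, ⟨0, h0m⟩⟩) u := by
    have hzero : ∀ c k : Fin (m β), ¬(c = (⟨0, h0m⟩ : Fin (m β)) ∧ k = s) →
        (if (s : ℕ) + (c : ℕ) = (k : ℕ) then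
          μ u ⟨β, c⟩ * pd ⟨β, k⟩ (fun v => μ v ⟨β, ⟨0, h0m⟩⟩) u else 0) = 0 := by
      intro c k hck
      by_cases hc : (s : ℕ) + (c : ℕ) = (k : ℕ)
      · rw [if_pos hc]
        rcases Nat.eq_zero_or_pos (c : ℕ) with h' | h'
        · exact absurd ⟨Fin.ext (by simp; omega), Fin.ext (by omega)⟩ hck
        · rw [lemB h2 hEQ2 β hu ⟨0, h0m⟩ k (by simp; omega), mul_zero]
      · rw [if_neg hc]
    refine (sum_sum_one _ _ _ hzero).trans ?_
    show (if (s : ℕ) + ((⟨0, h0m⟩ : Fin (m β)) : ℕ) = (s : ℕ) then _ else 0) = _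
    rw [if_pos (by simp)]
  have hS3 : (if ((⟨0, h0m⟩ : Fin (m β)) : ℕ) = 0 then pd ⟨β, s⟩ V u else 0)
      = pd ⟨β, s⟩ V u := if_pos (by simp)
  rw [hS1, hS2, hS3] at key
  linarith

private lemma lemA (hm : ∀ α, 0 < m α)
    (hdist : ∀ u ∈ U, ∀ α β : Fin r, α ≠ β →
      μ u ⟨α, ⟨0, hm α⟩⟩ ≠ μ u ⟨β, ⟨0, hm β⟩⟩)
    (h2 : ∀ α : Fin r, ∀ h : 2 ≤ m α, ∀ u ∈ U, μ u ⟨α, ⟨1, h⟩⟩ ≠ 0)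
    (hEQ2 : ∀ i j : (α : Fin r) × Fin (m α), ∀ u ∈ U, GT2b μ V i j u = 0)
    (α β : Fin r) (hab : α ≠ β) {u : ((α : Fin r) × Fin (m α)) → ℝ} (hu : u ∈ U) :
    ∀ (p : Fin (m α)) (t : Fin (m β)), 1 ≤ (t : ℕ) →
      pd ⟨β, t⟩ (fun v => μ v ⟨α, p⟩) u = 0 := by
  suffices H : ∀ N : ℕ, ∀ (p : Fin (m α)) (t : Fin (m β)),
      (m β - (t : ℕ)) * (m α) + (p : ℕ) ≤ N → 1 ≤ (t : ℕ) →
      pd ⟨β, t⟩ (fun v => μ v ⟨α, p⟩) u = 0 from fun p t ht => H _ p t le_rfl ht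
  intro N
  induction N with
  | zero =>
    intro p t hN ht
    exfalso
    have h1 : 1 ≤ (m β - (t : ℕ)) * m α :=
      Nat.one_le_iff_ne_zero.mpr (Nat.mul_ne_zero (by have := t.isLt; omega)
        (by have := p.isLt; omega))
    omega
  | succ n ih =>
    intro p t hN ht
    have key := keyEq hEQ2 α β p t (Or.inl hab) hu
    have hS1 : (∑ a : Fin (m α), ∑ b : Fin (m α),
        if (a : ℕ) + (b : ℕ) = (p : ℕ) then
          μ u ⟨α, a⟩ * pd ⟨β, t⟩ (fun v => μ v ⟨α, b⟩) u else 0)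
        = μ u ⟨α, ⟨0, hm α⟩⟩ * pd ⟨β, t⟩ (fun v => μ v ⟨α, p⟩) u := by
      have hzero : ∀ a b : Fin (m α), ¬(a = (⟨0, hm α⟩ : Fin (m α)) ∧ b = p) →
          (if (a : ℕ) + (b : ℕ) = (p : ℕ) then
            μ u ⟨α, a⟩ * pd ⟨β, t⟩ (fun v => μ v ⟨α, b⟩) u else 0) = 0 := by
        intro a b hab'
        by_cases hc : (a : ℕ) + (b : ℕ) = (p : ℕ)
        · rw [if_pos hc]
          rcases Nat.eq_zero_or_pos (a : ℕ) with h' | h'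
          · exact absurd ⟨Fin.ext (by simp; omega), Fin.ext (by omega)⟩ hab'
          · rw [ih b t (by omega) ht, mul_zero]
        · rw [if_neg hc]
      refine (sum_sum_one _ _ _ hzero).trans ?_
      show (if ((⟨0, hm α⟩ : Fin (m α)) : ℕ) + (p : ℕ) = (p : ℕ) then _ else 0) = _
      rw [if_pos (by simp)]
    have hS2 : (∑ c : Fin (m β), ∑ k : Fin (m β),
        if (t : ℕ) + (c : ℕ) = (k : ℕ) then
          μ u ⟨β, c⟩ * pd ⟨β, k⟩ (fun v => μ v ⟨α, p⟩) u else 0)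
        = μ u ⟨β, ⟨0, hm β⟩⟩ * pd ⟨β, t⟩ (fun v => μ v ⟨α, p⟩) u := by
      have hzero : ∀ c k : Fin (m β), ¬(c = (⟨0, hm β⟩ : Fin (m β)) ∧ k = t) →
          (if (t : ℕ) + (c : ℕ) = (k : ℕ) then
            μ u ⟨β, c⟩ * pd ⟨β, k⟩ (fun v => μ v ⟨α, p⟩) u else 0) = 0 := by
        intro c k hck
        by_cases hc : (t : ℕ) + (c : ℕ) = (k : ℕ)
        · rw [if_pos hc]
          rcases Nat.eq_zero_or_pos (c : ℕ) with h' | h'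
          · exact absurd ⟨Fin.ext (by simp; omega), Fin.ext (by omega)⟩ hck
          · have hklt := k.isLt
            have hplt := p.isLt
            have hml : (m β - (k : ℕ)) + 1 ≤ m β - (t : ℕ) := by omega
            have hmul : ((m β - (k : ℕ)) + 1) * m α ≤ (m β - (t : ℕ)) * m α :=
              Nat.mul_le_mul_right _ hml
            rw [add_one_mul] at hmul
            rw [ih p k (by omega) (by omega), mul_zero]
        · rw [if_neg hc]
      refine (sum_sum_one _ _ _ hzero).trans ?_
      show (if (t : ℕ) + ((⟨0, hm β⟩ : Fin (m β)) : ℕ) = (t : ℕ) then _ else 0) = _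
      rw [if_pos (by simp)]
    have hS3 : (if (p : ℕ) = 0 then pd ⟨β, t⟩ V u else 0) = 0 := by
      split_ifs with h
      · exact lemC h2 hEQ2 β hu t ht
      · rfl
    rw [hS1, hS2, hS3] at key
    have hX : (μ u ⟨α, ⟨0, hm α⟩⟩ - μ u ⟨β, ⟨0, hm β⟩⟩)
        * pd ⟨β, t⟩ (fun v => μ v ⟨α, p⟩) u = 0 := by linarith
    exact (mul_eq_zero.mp hX).resolve_left (sub_ne_zero.mpr (hdist u hu α β hab))

private lemma lemPartA (hm : ∀ α, 0 < m α)
    (hdist : ∀ u ∈ U, ∀ α β : Fin r, α ≠ β →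
      μ u ⟨α, ⟨0, hm α⟩⟩ ≠ μ u ⟨β, ⟨0, hm β⟩⟩)
    (h2 : ∀ α : Fin r, ∀ h : 2 ≤ m α, ∀ u ∈ U, μ u ⟨α, ⟨1, h⟩⟩ ≠ 0)
    (hEQ2 : ∀ i j : (α : Fin r) × Fin (m α), ∀ u ∈ U, GT2b μ V i j u = 0)
    (α β : Fin r) (hab : α ≠ β) {u : ((α : Fin r) × Fin (m α)) → ℝ} (hu : u ∈ U) :
    pd (⟨β, ⟨0, hm β⟩⟩ : (α : Fin r) × Fin (m α)) V u
      = (μ u ⟨β, ⟨0, hm β⟩⟩ - μ u ⟨α, ⟨0, hm α⟩⟩)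
        * pd (⟨β, ⟨0, hm β⟩⟩ : (α : Fin r) × Fin (m α))
            (fun v => μ v ⟨α, ⟨0, hm α⟩⟩) u := by
  have key := keyEq hEQ2 α β ⟨0, hm α⟩ ⟨0, hm β⟩ (Or.inl hab) hu
  have hS1 : (∑ a : Fin (m α), ∑ b : Fin (m α),
      if (a : ℕ) + (b : ℕ) = ((⟨0, hm α⟩ : Fin (m α)) : ℕ) then
        μ u ⟨α, a⟩ * pd ⟨β, ⟨0, hm β⟩⟩ (fun v => μ v ⟨α, b⟩) u else 0)
      = μ u ⟨α, ⟨0, hm α⟩⟩ * pd ⟨β, ⟨0, hm β⟩⟩ (fun v => μ v ⟨α, ⟨0, hm α⟩⟩) u := by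
    have hzero : ∀ a b : Fin (m α),
        ¬(a = (⟨0, hm α⟩ : Fin (m α)) ∧ b = (⟨0, hm α⟩ : Fin (m α))) →
        (if (a : ℕ) + (b : ℕ) = ((⟨0, hm α⟩ : Fin (m α)) : ℕ) then
          μ u ⟨α, a⟩ * pd ⟨β, ⟨0, hm β⟩⟩ (fun v => μ v ⟨α, b⟩) u else 0) = 0 := by
      intro a b hab'
      by_cases hc : (a : ℕ) + (b : ℕ) = ((⟨0, hm α⟩ : Fin (m α)) : ℕ)
      · simp only [Fin.val_mk] at hc
        exact absurd ⟨Fin.ext (by simp; omega), Fin.ext (by simp; omega)⟩ hab'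
      · rw [if_neg hc]
    refine (sum_sum_one _ _ _ hzero).trans ?_
    show (if ((⟨0, hm α⟩ : Fin (m α)) : ℕ) + ((⟨0, hm α⟩ : Fin (m α)) : ℕ)
        = ((⟨0, hm α⟩ : Fin (m α)) : ℕ) then _ else 0) = _
    rw [if_pos (by simp)]
  have hS2 : (∑ c : Fin (m β), ∑ k : Fin (m β),
      if ((⟨0, hm β⟩ : Fin (m β)) : ℕ) + (c : ℕ) = (k : ℕ) then
        μ u ⟨β, c⟩ * pd ⟨β, k⟩ (fun v => μ v ⟨α, ⟨0, hm α⟩⟩) u else 0)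
      = μ u ⟨β, ⟨0, hm β⟩⟩ * pd ⟨β, ⟨0, hm β⟩⟩ (fun v => μ v ⟨α, ⟨0, hm α⟩⟩) u := by
    have hzero : ∀ c k : Fin (m β),
        ¬(c = (⟨0, hm β⟩ : Fin (m β)) ∧ k = (⟨0, hm β⟩ : Fin (m β))) →
        (if ((⟨0, hm β⟩ : Fin (m β)) : ℕ) + (c : ℕ) = (k : ℕ) then
          μ u ⟨β, c⟩ * pd ⟨β, k⟩ (fun v => μ v ⟨α, ⟨0, hm α⟩⟩) u else 0) = 0 := by
      intro c k hck
      by_cases hc : ((⟨0, hm β⟩ : Fin (m β)) : ℕ) + (c : ℕ) = (k : ℕ)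
      · rw [if_pos hc]
        simp only [Fin.val_mk] at hc
        rcases Nat.eq_zero_or_pos (c : ℕ) with h' | h'
        · exact absurd ⟨Fin.ext (by simp; omega), Fin.ext (by simp; omega)⟩ hck
        · rw [lemA hm hdist h2 hEQ2 α β hab hu ⟨0, hm α⟩ k (by omega), mul_zero]
      · rw [if_neg hc]
    refine (sum_sum_one _ _ _ hzero).trans ?_
    show (if ((⟨0, hm β⟩ : Fin (m β)) : ℕ) + ((⟨0, hm β⟩ : Fin (m β)) : ℕ)
        = ((⟨0, hm β⟩ : Fin (m β)) : ℕ) then _ else 0) = _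
    rw [if_pos (by simp)]
  have hS3 : (if ((⟨0, hm α⟩ : Fin (m α)) : ℕ) = 0 then
      pd ⟨β, ⟨0, hm β⟩⟩ V u else 0) = pd ⟨β, ⟨0, hm β⟩⟩ V u := if_pos (by simp)
  rw [hS1, hS2, hS3] at key
  linarith

private lemma eq1Key
    (hEQ1 : ∀ i j : (α : Fin r) × Fin (m α), ∀ u ∈ U, GT1b μ V i j u = 0)
    (α β : Fin r) (zα : Fin (m α)) (zβ : Fin (m β))
    (hzα : (zα : ℕ) = 0) (hzβ : (zβ : ℕ) = 0)
    {u : ((α : Fin r) × Fin (m α)) → ℝ} (hu : u ∈ U) :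
    (∑ c : Fin (m α), μ u ⟨α, c⟩ * pd ⟨α, c⟩ (fun v => pd ⟨β, zβ⟩ V v) u)
    - (∑ c : Fin (m β), μ u ⟨β, c⟩ * pd ⟨β, c⟩ (fun v => pd ⟨α, zα⟩ V v) u)
    - ((∑ c : Fin (m β), pd ⟨α, zα⟩ (fun v => μ v ⟨β, c⟩) u * pd ⟨β, c⟩ V u)
       - (∑ c : Fin (m α), pd ⟨β, zβ⟩ (fun v => μ v ⟨α, c⟩) u * pd ⟨α, c⟩ V u)) = 0 := by
  have h0 := hEQ1 ⟨α, zα⟩ ⟨β, zβ⟩ u hu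
  have e_first : (∑ t : (α : Fin r) × Fin (m α), ∑ s : (α : Fin r) × Fin (m α),
      μ u t * (bc s t ⟨α, zα⟩ * pd s (fun v => pd ⟨β, zβ⟩ V v) u
        - bc s t ⟨β, zβ⟩ * pd s (fun v => pd ⟨α, zα⟩ V v) u))
      = (∑ c : Fin (m α), μ u ⟨α, c⟩ * pd ⟨α, c⟩ (fun v => pd ⟨β, zβ⟩ V v) u)
        - (∑ c : Fin (m β), μ u ⟨β, c⟩ * pd ⟨β, c⟩ (fun v => pd ⟨α, zα⟩ V v) u) := by
    have point : ∀ t s : (α : Fin r) × Fin (m α),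
        μ u t * (bc s t ⟨α, zα⟩ * pd s (fun v => pd ⟨β, zβ⟩ V v) u
          - bc s t ⟨β, zβ⟩ * pd s (fun v => pd ⟨α, zα⟩ V v) u)
        = bc s t ⟨α, zα⟩ * (μ u t * pd s (fun v => pd ⟨β, zβ⟩ V v) u)
          - bc s t ⟨β, zβ⟩ * (μ u t * pd s (fun v => pd ⟨α, zα⟩ V v) u) := by
      intro t s; ring
    rw [Finset.sum_congr rfl fun t _ => Finset.sum_congr rfl fun s _ => point t s]
    rw [Finset.sum_congr rfl fun t _ => Finset.sum_sub_distrib (s := Finset.univ) _ _,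
        Finset.sum_sub_distrib]
    congr 1
    · rw [sum_fiber α _ (fun x hx => Finset.sum_eq_zero fun s _ => by
        rw [show bc s x ⟨α, zα⟩ = 0 from by
          rw [bc, if_neg]; rintro ⟨h1, h2, -⟩; exact hx (h1.symm.trans h2), zero_mul])]
      refine Finset.sum_congr rfl fun c _ => ?_
      rw [sum_fiber α _ (fun x hx => by
        rw [show bc x ⟨α, c⟩ ⟨α, zα⟩ = 0 from by
          rw [bc, if_neg]; rintro ⟨-, h2, -⟩; exact hx h2, zero_mul])]
      rw [Fintype.sum_eq_single c (fun d hd => by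
        rw [show bc ⟨α, d⟩ ⟨α, c⟩ ⟨α, zα⟩ = 0 from by
          rw [bc, if_neg]; rintro ⟨-, -, h3⟩; dsimp only at h3
          exact hd (Fin.ext (by omega)), zero_mul])]
      rw [show bc ⟨α, c⟩ ⟨α, c⟩ ⟨α, zα⟩ = 1 from by
        rw [bc, if_pos ⟨rfl, rfl, by dsimp only; simp [hzα]⟩], one_mul]
    · rw [sum_fiber β _ (fun x hx => Finset.sum_eq_zero fun s _ => by
        rw [show bc s x ⟨β, zβ⟩ = 0 from by
          rw [bc, if_neg]; rintro ⟨h1, h2, -⟩; exact hx (h1.symm.trans h2), zero_mul])]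
      refine Finset.sum_congr rfl fun c _ => ?_
      rw [sum_fiber β _ (fun x hx => by
        rw [show bc x ⟨β, c⟩ ⟨β, zβ⟩ = 0 from by
          rw [bc, if_neg]; rintro ⟨-, h2, -⟩; exact hx h2, zero_mul])]
      rw [Fintype.sum_eq_single c (fun d hd => by
        rw [show bc ⟨β, d⟩ ⟨β, c⟩ ⟨β, zβ⟩ = 0 from by
          rw [bc, if_neg]; rintro ⟨-, -, h3⟩; dsimp only at h3
          exact hd (Fin.ext (by omega)), zero_mul])]
      rw [show bc ⟨β, c⟩ ⟨β, c⟩ ⟨β, zβ⟩ = 1 from by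
        rw [bc, if_pos ⟨rfl, rfl, by dsimp only; simp [hzβ]⟩], one_mul]
  have e_second : (∑ t : (α : Fin r) × Fin (m α), ∑ s : (α : Fin r) × Fin (m α),
      (bc t ⟨β, zβ⟩ s * pd ⟨α, zα⟩ (fun v => μ v s) u
        - bc t ⟨α, zα⟩ s * pd ⟨β, zβ⟩ (fun v => μ v s) u) * pd t V u)
      = (∑ c : Fin (m β), pd ⟨α, zα⟩ (fun v => μ v ⟨β, c⟩) u * pd ⟨β, c⟩ V u)
        - (∑ c : Fin (m α), pd ⟨β, zβ⟩ (fun v => μ v ⟨α, c⟩) u * pd ⟨α, c⟩ V u) := by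
    have point : ∀ t s : (α : Fin r) × Fin (m α),
        (bc t ⟨β, zβ⟩ s * pd ⟨α, zα⟩ (fun v => μ v s) u
          - bc t ⟨α, zα⟩ s * pd ⟨β, zβ⟩ (fun v => μ v s) u) * pd t V u
        = bc t ⟨β, zβ⟩ s * (pd ⟨α, zα⟩ (fun v => μ v s) u * pd t V u)
          - bc t ⟨α, zα⟩ s * (pd ⟨β, zβ⟩ (fun v => μ v s) u * pd t V u) := by
      intro t s; ring
    rw [Finset.sum_congr rfl fun t _ => Finset.sum_congr rfl fun s _ => point t s]
    rw [Finset.sum_congr rfl fun t _ => Finset.sum_sub_distrib (s := Finset.univ) _ _,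
        Finset.sum_sub_distrib]
    congr 1
    · rw [sum_fiber β _ (fun x hx => Finset.sum_eq_zero fun s _ => by
        rw [show bc x ⟨β, zβ⟩ s = 0 from by
          rw [bc, if_neg]; rintro ⟨h1, -, -⟩; exact hx h1, zero_mul])]
      refine Finset.sum_congr rfl fun c _ => ?_
      rw [sum_fiber β _ (fun x hx => by
        rw [show bc ⟨β, c⟩ ⟨β, zβ⟩ x = 0 from by
          rw [bc, if_neg]; rintro ⟨-, h2, -⟩; exact hx h2.symm, zero_mul])]
      rw [Fintype.sum_eq_single c (fun d hd => by
        rw [show bc ⟨β, c⟩ ⟨β, zβ⟩ ⟨β, d⟩ = 0 from by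
          rw [bc, if_neg]; rintro ⟨-, -, h3⟩; dsimp only at h3
          exact hd (Fin.ext (by omega)), zero_mul])]
      rw [show bc ⟨β, c⟩ ⟨β, zβ⟩ ⟨β, c⟩ = 1 from by
        rw [bc, if_pos ⟨rfl, rfl, by dsimp only; simp [hzβ]⟩], one_mul]
    · rw [sum_fiber α _ (fun x hx => Finset.sum_eq_zero fun s _ => by
        rw [show bc x ⟨α, zα⟩ s = 0 from by
          rw [bc, if_neg]; rintro ⟨h1, -, -⟩; exact hx h1, zero_mul])]
      refine Finset.sum_congr rfl fun c _ => ?_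
      rw [sum_fiber α _ (fun x hx => by
        rw [show bc ⟨α, c⟩ ⟨α, zα⟩ x = 0 from by
          rw [bc, if_neg]; rintro ⟨-, h2, -⟩; exact hx h2.symm, zero_mul])]
      rw [Fintype.sum_eq_single c (fun d hd => by
        rw [show bc ⟨α, c⟩ ⟨α, zα⟩ ⟨α, d⟩ = 0 from by
          rw [bc, if_neg]; rintro ⟨-, -, h3⟩; dsimp only at h3
          exact hd (Fin.ext (by omega)), zero_mul])]
      rw [show bc ⟨α, c⟩ ⟨α, zα⟩ ⟨α, c⟩ = 1 from by
        rw [bc, if_pos ⟨rfl, rfl, by dsimp only; simp [hzα]⟩], one_mul]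
  rw [GT1b, e_first, e_second] at h0
  linarith

end Van

/-- a solution of the multi-block generalised Gibbons–Tsarev system with
distinct leading components and `μ^{2(α)} ≠ 0` satisfies the classical Gibbons–Tsarev
equations for the leading variables:
(a) `∂_{1(β)} V = (μ^{1(β)} − μ^{1(α)})·∂_{1(β)} μ^{1(α)}` and
(b) `(μ^{1(β)} − μ^{1(α)})²·∂_{1(α)}∂_{1(β)} V = 2·(∂_{1(α)} V)·(∂_{1(β)} V)`. -/
theorem stmt14 {r : ℕ} (m : Fin r → ℕ) (hm : ∀ α, 0 < m α)
    (hn : 2 ≤ ∑ α, m α)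
    (U : Set (((α : Fin r) × Fin (m α)) → ℝ)) (hU : IsOpen U)
    (V : (((α : Fin r) × Fin (m α)) → ℝ) → ℝ)
    (μ : (((α : Fin r) × Fin (m α)) → ℝ) → ((α : Fin r) × Fin (m α)) → ℝ)
    (hV : ContDiffOn ℝ (⊤ : ℕ∞) V U) (hμ : ContDiffOn ℝ (⊤ : ℕ∞) μ U)
    (hdist : ∀ u ∈ U, ∀ α β : Fin r, α ≠ β →
      μ u ⟨α, ⟨0, hm α⟩⟩ ≠ μ u ⟨β, ⟨0, hm β⟩⟩)
    (h2 : ∀ α : Fin r, ∀ h : 2 ≤ m α, ∀ u ∈ U, μ u ⟨α, ⟨1, h⟩⟩ ≠ 0)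
    (hEQ1 : ∀ i j : (α : Fin r) × Fin (m α), ∀ u ∈ U, GT1b μ V i j u = 0)
    (hEQ2 : ∀ i j : (α : Fin r) × Fin (m α), ∀ u ∈ U, GT2b μ V i j u = 0) :
    ∀ α β : Fin r, α ≠ β → ∀ u ∈ U,
      (pd (⟨β, ⟨0, hm β⟩⟩ : (α : Fin r) × Fin (m α)) V u
        = (μ u ⟨β, ⟨0, hm β⟩⟩ - μ u ⟨α, ⟨0, hm α⟩⟩)
          * pd (⟨β, ⟨0, hm β⟩⟩ : (α : Fin r) × Fin (m α))
              (fun v => μ v ⟨α, ⟨0, hm α⟩⟩) u)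
      ∧
      ((μ u ⟨β, ⟨0, hm β⟩⟩ - μ u ⟨α, ⟨0, hm α⟩⟩) ^ 2
          * pd (⟨α, ⟨0, hm α⟩⟩ : (α : Fin r) × Fin (m α))
              (fun v => pd (⟨β, ⟨0, hm β⟩⟩ : (α : Fin r) × Fin (m α)) V v) u
        = 2 * pd (⟨α, ⟨0, hm α⟩⟩ : (α : Fin r) × Fin (m α)) V u
            * pd (⟨β, ⟨0, hm β⟩⟩ : (α : Fin r) × Fin (m α)) V u) := by
  
  intro α β hab u hu
  constructor
  · exact lemPartA hm hdist h2 hEQ2 α β hab hu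
  · have e1 := eq1Key hEQ1 α β ⟨0, hm α⟩ ⟨0, hm β⟩ rfl rfl hu
    have hsum1 : (∑ c : Fin (m α), μ u ⟨α, c⟩
          * pd ⟨α, c⟩ (fun v => pd ⟨β, ⟨0, hm β⟩⟩ V v) u)
        = μ u ⟨α, ⟨0, hm α⟩⟩
          * pd ⟨α, ⟨0, hm α⟩⟩ (fun v => pd ⟨β, ⟨0, hm β⟩⟩ V v) u := by
      refine Fintype.sum_eq_single _ (fun c hc => ?_)
      have hc1 : 1 ≤ (c : ℕ) := by
        rcases Nat.eq_zero_or_pos (c : ℕ) with h' | h'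
        · exact absurd (Fin.ext (by simp [h'])) hc
        · exact h'
      rw [pd_symm hU hV hu, pd_eq_zero_of_zero_on hU
        (fun v hv => lemC h2 hEQ2 α hv c hc1) hu, mul_zero]
    have hsum2 : (∑ c : Fin (m β), μ u ⟨β, c⟩
          * pd ⟨β, c⟩ (fun v => pd ⟨α, ⟨0, hm α⟩⟩ V v) u)
        = μ u ⟨β, ⟨0, hm β⟩⟩
          * pd ⟨β, ⟨0, hm β⟩⟩ (fun v => pd ⟨α, ⟨0, hm α⟩⟩ V v) u := by
      refine Fintype.sum_eq_single _ (fun c hc => ?_)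
      have hc1 : 1 ≤ (c : ℕ) := by
        rcases Nat.eq_zero_or_pos (c : ℕ) with h' | h'
        · exact absurd (Fin.ext (by simp [h'])) hc
        · exact h'
      rw [pd_symm hU hV hu, pd_eq_zero_of_zero_on hU
        (fun v hv => lemC h2 hEQ2 β hv c hc1) hu, mul_zero]
    have hsum3 : (∑ c : Fin (m β),
          pd ⟨α, ⟨0, hm α⟩⟩ (fun v => μ v ⟨β, c⟩) u * pd ⟨β, c⟩ V u)
        = pd ⟨α, ⟨0, hm α⟩⟩ (fun v => μ v ⟨β, ⟨0, hm β⟩⟩) u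
          * pd ⟨β, ⟨0, hm β⟩⟩ V u := by
      refine Fintype.sum_eq_single _ (fun c hc => ?_)
      have hc1 : 1 ≤ (c : ℕ) := by
        rcases Nat.eq_zero_or_pos (c : ℕ) with h' | h'
        · exact absurd (Fin.ext (by simp [h'])) hc
        · exact h'
      rw [lemC h2 hEQ2 β hu c hc1, mul_zero]
    have hsum4 : (∑ c : Fin (m α),
          pd ⟨β, ⟨0, hm β⟩⟩ (fun v => μ v ⟨α, c⟩) u * pd ⟨α, c⟩ V u)
        = pd ⟨β, ⟨0, hm β⟩⟩ (fun v => μ v ⟨α, ⟨0, hm α⟩⟩) u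
          * pd ⟨α, ⟨0, hm α⟩⟩ V u := by
      refine Fintype.sum_eq_single _ (fun c hc => ?_)
      have hc1 : 1 ≤ (c : ℕ) := by
        rcases Nat.eq_zero_or_pos (c : ℕ) with h' | h'
        · exact absurd (Fin.ext (by simp [h'])) hc
        · exact h'
      rw [lemC h2 hEQ2 α hu c hc1, mul_zero]
    rw [hsum1, hsum2, hsum3, hsum4,
      pd_symm hU hV hu (⟨β, ⟨0, hm β⟩⟩ : (α : Fin r) × Fin (m α)) ⟨α, ⟨0, hm α⟩⟩] at e1
    have haB := lemPartA hm hdist h2 hEQ2 α β hab hu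
    have haA := lemPartA hm hdist h2 hEQ2 β α hab.symm hu
    rw [haB, haA] at e1
    have hAB : μ u ⟨α, ⟨0, hm α⟩⟩ - μ u ⟨β, ⟨0, hm β⟩⟩ ≠ 0 :=
      sub_ne_zero.mpr (hdist u hu α β hab)
    have hW : pd (⟨α, ⟨0, hm α⟩⟩ : (α : Fin r) × Fin (m α))
          (fun v => pd (⟨β, ⟨0, hm β⟩⟩ : (α : Fin r) × Fin (m α)) V v) u
        = -(2 * pd (⟨β, ⟨0, hm β⟩⟩ : (α : Fin r) × Fin (m α))
              (fun v => μ v ⟨α, ⟨0, hm α⟩⟩) u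
            * pd (⟨α, ⟨0, hm α⟩⟩ : (α : Fin r) × Fin (m α))
              (fun v => μ v ⟨β, ⟨0, hm β⟩⟩) u) :=
      mul_left_cancel₀ hAB (by linear_combination e1)
    rw [haB, haA, hW]
    ring
end

section
/- In the multi-block generalised Gibbons–Tsarev setting, let U ⊆ ℝ^n be open and let V and the μ^{i(α)} be smooth functions on U satisfying equations (EQ1blocks) and (EQ2blocks), with μ^{1(α)}(u) ≠ μ^{1(β)}(u) for all u ∈ U and all distinct α, β, and μ^{2(α)}(u) ≠ 0 for all u ∈ U whenever m_α ≥ 2. Then for every α ∈ {1,…,r} with m_α ≥ 2, one has ∂_{1(α)} V = 0 identically on U; consequently V does not depend on any coordinate of any block of size ≥ 2. -/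
open scoped BigOperators

namespace GT15
open Finset

variable {r : ℕ} {m : Fin r → ℕ}

local notation "Idx" => ((α : Fin r) × Fin (m α))

lemma sum_block (α : Fin r) (f : Idx → ℝ)
    (hf : ∀ x : Idx, x.1 ≠ α → f x = 0) :
    ∑ x : Idx, f x = ∑ y : Fin (m α), f ⟨α, y⟩ := by
  rw [← Finset.univ_sigma_univ, Finset.sum_sigma]
  exact Finset.sum_eq_single_of_mem α (Finset.mem_univ _)
    (fun β _ hβ => Finset.sum_eq_zero fun y _ => hf ⟨β, y⟩ hβ)

lemma fin_double (M : ℕ) (g : ℕ → ℕ → ℝ) :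
    ∑ x : Fin M, ∑ y : Fin M, g x y = ∑ x ∈ range M, ∑ y ∈ range M, g x y := by
  rw [Fin.sum_univ_eq_sum_range (fun x => ∑ y : Fin M, g x y) M]
  exact Finset.sum_congr rfl fun x _ => Fin.sum_univ_eq_sum_range (g x) M

lemma range_conv {M p : ℕ} (hp : p < M) (G : ℕ → ℕ → ℝ) :
    (∑ x ∈ range M, ∑ y ∈ range M, if x + y = p then G x y else 0)
      = ∑ y ∈ range (p + 1), G (p - y) y := by
  rw [Finset.sum_comm]
  have h1 : ∀ y ∈ range M,
      (∑ x ∈ range M, if x + y = p then G x y else 0)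
        = if y ≤ p then G (p - y) y else 0 := by
    intro y _
    rcases le_or_gt y p with hyp | hyp
    · rw [if_pos hyp, Finset.sum_eq_single_of_mem (p - y) (mem_range.2 (by omega))]
      · rw [if_pos (by omega)]
      · intro x _ hx; rw [if_neg (by omega)]
    · rw [if_neg (by omega)]
      exact Finset.sum_eq_zero fun x _ => if_neg (by omega)
  rw [Finset.sum_congr rfl h1]
  rw [← Finset.sum_subset (Finset.range_subset_range.2 (by omega : p + 1 ≤ M))
      (fun y _ hy => if_neg (by simp at hy ⊢; omega))]
  exact Finset.sum_congr rfl fun y hy => if_pos (by simp at hy; omega)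

lemma shift_conv {M q : ℕ} (G : ℕ → ℕ → ℝ) :
    (∑ x ∈ range M, ∑ y ∈ range M, if q + x = y then G x y else 0)
      = ∑ x ∈ range (M - q), G x (q + x) := by
  have h1 : ∀ x ∈ range M,
      (∑ y ∈ range M, if q + x = y then G x y else 0)
        = if q + x < M then G x (q + x) else 0 := by
    intro x _
    rw [Finset.sum_ite_eq (range M) (q + x) (fun y => G x y)]
    simp [mem_range]
  rw [Finset.sum_congr rfl h1]
  rw [← Finset.sum_subset (Finset.range_subset_range.2 (by omega : M - q ≤ M))
      (fun x _ hx => if_neg (by simp at hx ⊢; omega))]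
  exact Finset.sum_congr rfl fun x hx => if_pos (by simp at hx; omega)


/-- helper to evaluate a sum with at most one nonzero term -/
lemma sum_one {n i : ℕ} (hi : i < n) (f : ℕ → ℝ)
    (h0 : ∀ y, y < n → y ≠ i → f y = 0) : ∑ y ∈ range n, f y = f i :=
  Finset.sum_eq_single_of_mem i (mem_range.2 hi)
    (fun y hy hne => h0 y (mem_range.1 hy) hne)

/-- helper to evaluate a sum with at most two nonzero terms -/
lemma sum_two {n i j : ℕ} (hi : i < n) (hj : j < n) (hij : i ≠ j) (f : ℕ → ℝ)
    (h0 : ∀ y, y < n → y ≠ i → y ≠ j → f y = 0) :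
    ∑ y ∈ range n, f y = f i + f j := by
  rw [← Finset.sum_pair hij]
  refine (Finset.sum_subset ?_ ?_).symm
  · intro x hx; simp at hx; rcases hx with h|h <;> simp [h, mem_range, hi, hj]
  · intro x hx hx'; simp at hx'
    exact h0 x (mem_range.1 hx) hx'.1 hx'.2

/-- collapse `∑ h k, f h * (bc ⟨α,p⟩ h k * w k)`. -/
lemma sumUpper (α : Fin r) {p : ℕ} (hp : p < m α) (f w : Idx → ℝ) (F Wn : ℕ → ℝ)
    (hF : ∀ (x : ℕ) (hx : x < m α), f ⟨α, ⟨x, hx⟩⟩ = F x)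
    (hW : ∀ (y : ℕ) (hy : y < m α), w ⟨α, ⟨y, hy⟩⟩ = Wn y) :
    (∑ h : Idx, ∑ k : Idx, f h * (bc ⟨α, ⟨p, hp⟩⟩ h k * w k))
      = ∑ y ∈ range (p + 1), F (p - y) * Wn y := by
  rw [sum_block α _ (fun h hh => Finset.sum_eq_zero fun k _ => by
      rw [bc, if_neg (fun hc => hh hc.1.symm), zero_mul, mul_zero])]
  have h2 : ∀ x : Fin (m α),
      (∑ k : Idx, f ⟨α, x⟩ * (bc ⟨α, ⟨p, hp⟩⟩ ⟨α, x⟩ k * w k))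
        = ∑ y : Fin (m α), (if (x : ℕ) + (y : ℕ) = p then F x * Wn y else 0) := by
    intro x
    rw [sum_block α _ (fun k hk => by
      rw [bc, if_neg (fun hc => hk hc.2.1.symm), zero_mul, mul_zero])]
    refine Finset.sum_congr rfl fun y _ => ?_
    by_cases hxy : (x : ℕ) + (y : ℕ) = p
    · rw [bc, if_pos ⟨rfl, rfl, hxy⟩, if_pos hxy, one_mul, hF x x.2, hW y y.2]
    · rw [bc, if_neg (fun hc => hxy hc.2.2), if_neg hxy, zero_mul, mul_zero]
  rw [Finset.sum_congr rfl (fun x _ => h2 x),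
    fin_double (m α) (fun x y => if x + y = p then F x * Wn y else 0),
    range_conv hp]

/-- collapse `∑ h k, f h * (bc k ⟨α,q⟩ h * w k)`. -/
lemma sumLower (α : Fin r) {q : ℕ} (hq : q < m α) (f w : Idx → ℝ) (F Wn : ℕ → ℝ)
    (hF : ∀ (x : ℕ) (hx : x < m α), f ⟨α, ⟨x, hx⟩⟩ = F x)
    (hW : ∀ (y : ℕ) (hy : y < m α), w ⟨α, ⟨y, hy⟩⟩ = Wn y) :
    (∑ h : Idx, ∑ k : Idx, f h * (bc k ⟨α, ⟨q, hq⟩⟩ h * w k))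
      = ∑ x ∈ range (m α - q), F x * Wn (q + x) := by
  rw [sum_block α _ (fun h hh => Finset.sum_eq_zero fun k _ => by
      rw [bc, if_neg (fun hc => hh (hc.1 ▸ hc.2.1).symm), zero_mul, mul_zero])]
  have h2 : ∀ x : Fin (m α),
      (∑ k : Idx, f ⟨α, x⟩ * (bc k ⟨α, ⟨q, hq⟩⟩ ⟨α, x⟩ * w k))
        = ∑ y : Fin (m α), (if q + (x : ℕ) = (y : ℕ) then F x * Wn y else 0) := by
    intro x
    rw [sum_block α _ (fun k hk => by
      rw [bc, if_neg (fun hc => hk hc.1), zero_mul, mul_zero])]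
    refine Finset.sum_congr rfl fun y _ => ?_
    by_cases hxy : q + (x : ℕ) = (y : ℕ)
    · rw [bc, if_pos ⟨rfl, rfl, hxy⟩, if_pos hxy, one_mul, hF x x.2, hW y y.2]
    · rw [bc, if_neg (fun hc => hxy hc.2.2), if_neg hxy, zero_mul, mul_zero]
  rw [Finset.sum_congr rfl (fun x _ => h2 x),
    fin_double (m α) (fun x y => if q + x = y then F x * Wn y else 0),
    shift_conv]

/-- collapse `∑ t s, bc t ⟨α,q⟩ s * g t s`. -/
lemma sumMid (α : Fin r) {q : ℕ} (hq : q < m α) (g : Idx → Idx → ℝ) (G : ℕ → ℕ → ℝ)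
    (hG : ∀ (x y : ℕ) (hx : x < m α) (hy : y < m α),
      g ⟨α, ⟨x, hx⟩⟩ ⟨α, ⟨y, hy⟩⟩ = G x y) :
    (∑ t : Idx, ∑ s : Idx, bc t ⟨α, ⟨q, hq⟩⟩ s * g t s)
      = ∑ x ∈ range (m α - q), G (q + x) x := by
  rw [sum_block α _ (fun t ht => Finset.sum_eq_zero fun s _ => by
      rw [bc, if_neg (fun hc => ht hc.1), zero_mul])]
  have h2 : ∀ x : Fin (m α),
      (∑ s : Idx, bc ⟨α, x⟩ ⟨α, ⟨q, hq⟩⟩ s * g ⟨α, x⟩ s)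
        = ∑ y : Fin (m α), (if q + (y : ℕ) = (x : ℕ) then G x y else 0) := by
    intro x
    rw [sum_block α _ (fun s hs => by
      rw [bc, if_neg (fun hc => hs hc.2.1.symm), zero_mul])]
    refine Finset.sum_congr rfl fun y _ => ?_
    by_cases hxy : q + (y : ℕ) = (x : ℕ)
    · rw [bc, if_pos ⟨rfl, rfl, hxy⟩, if_pos hxy, one_mul, hG x y x.2 y.2]
    · rw [bc, if_neg (fun hc => hxy hc.2.2), if_neg hxy, zero_mul]
  rw [Finset.sum_congr rfl (fun x _ => h2 x),
    fin_double (m α) (fun x y => if q + y = x then G x y else 0)]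
  rw [Finset.sum_comm]
  exact shift_conv (fun y x => G x y)

/-- collapse `∑ t s, f t * (bc s t ⟨α,q⟩ * w s)`. -/
lemma sumTri (α : Fin r) {q : ℕ} (hq : q < m α) (f w : Idx → ℝ) (F Wn : ℕ → ℝ)
    (hF : ∀ (x : ℕ) (hx : x < m α), f ⟨α, ⟨x, hx⟩⟩ = F x)
    (hW : ∀ (y : ℕ) (hy : y < m α), w ⟨α, ⟨y, hy⟩⟩ = Wn y) :
    (∑ t : Idx, ∑ s : Idx, f t * (bc s t ⟨α, ⟨q, hq⟩⟩ * w s))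
      = ∑ x ∈ range (m α - q), F x * Wn (q + x) := by
  rw [sum_block α _ (fun t ht => Finset.sum_eq_zero fun s _ => by
      rw [bc, if_neg (fun hc => ht (hc.1.symm.trans hc.2.1)), zero_mul, mul_zero])]
  have h2 : ∀ x : Fin (m α),
      (∑ s : Idx, f ⟨α, x⟩ * (bc s ⟨α, x⟩ ⟨α, ⟨q, hq⟩⟩ * w s))
        = ∑ y : Fin (m α), (if (x : ℕ) + q = (y : ℕ) then F x * Wn y else 0) := by
    intro x
    rw [sum_block α _ (fun s hs => by
      rw [bc, if_neg (fun hc => hs hc.1), zero_mul, mul_zero])]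
    refine Finset.sum_congr rfl fun y _ => ?_
    by_cases hxy : (x : ℕ) + q = (y : ℕ)
    · rw [bc, if_pos ⟨rfl, rfl, hxy⟩, if_pos hxy, one_mul, hF x x.2, hW y y.2]
    · rw [bc, if_neg (fun hc => hxy hc.2.2), if_neg hxy, zero_mul, mul_zero]
  rw [Finset.sum_congr rfl (fun x _ => h2 x),
    fin_double (m α) (fun x y => if x + q = y then F x * Wn y else 0)]
  have : ∀ x y : ℕ, (if x + q = y then F x * Wn y else 0) = (if q + x = y then F x * Wn y else 0) := by
    intro x y; rw [Nat.add_comm x q]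
  simp only [this]
  exact shift_conv (G := fun x y => F x * Wn y) (M := m α) (q := q)

/-- collapse `∑ s, bc ⟨α,p⟩ ⟨α,q⟩ s * c s` for `p ≤ q`. -/
lemma sumS (α : Fin r) {p q : ℕ} (hp : p < m α) (hq : q < m α) (hpq : p ≤ q)
    (h0 : 0 < m α) (c : Idx → ℝ) :
    (∑ s : Idx, bc ⟨α, ⟨p, hp⟩⟩ ⟨α, ⟨q, hq⟩⟩ s * c s)
      = if p = q then c ⟨α, ⟨0, h0⟩⟩ else 0 := by
  rw [sum_block α _ (fun s hs => by
    rw [bc, if_neg (fun hc => hs hc.2.1.symm), zero_mul])]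
  by_cases hpq2 : p = q
  · subst hpq2
    rw [if_pos rfl]
    rw [Finset.sum_eq_single_of_mem (⟨0, h0⟩ : Fin (m α)) (Finset.mem_univ _)
      (fun y _ hy => by
        rw [bc, if_neg, zero_mul]
        rintro ⟨-, -, hc⟩
        have h' : p + (y : ℕ) = p := hc
        have h'' : (y : ℕ) = 0 := by omega
        exact hy (Fin.ext (by simp [h''])))]
    rw [bc, if_pos ⟨rfl, rfl, by simp⟩, one_mul]
  · rw [if_neg hpq2]
    exact Finset.sum_eq_zero fun y _ => by
      rw [bc, if_neg (fun hc => by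
        have h' : q + (y : ℕ) = p := hc.2.2
        omega), zero_mul]


/-- collapse `∑ h k, f h * (bc ⟨α,p⟩ ⟨α,q⟩ k * w h k)` for `p ≤ q`. -/
lemma sumFix (α : Fin r) {p q : ℕ} (hp : p < m α) (hq : q < m α) (hpq : p ≤ q)
    (h0 : 0 < m α) (f : Idx → ℝ) (w : Idx → Idx → ℝ) :
    (∑ h : Idx, ∑ k : Idx, f h * (bc ⟨α, ⟨p, hp⟩⟩ ⟨α, ⟨q, hq⟩⟩ k * w h k))
      = if p = q then ∑ h : Idx, f h * w h ⟨α, ⟨0, h0⟩⟩ else 0 := by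
  have h1 : ∀ h : Idx,
      (∑ k : Idx, f h * (bc ⟨α, ⟨p, hp⟩⟩ ⟨α, ⟨q, hq⟩⟩ k * w h k))
        = f h * (if p = q then w h ⟨α, ⟨0, h0⟩⟩ else 0) := by
    intro h
    rw [← Finset.mul_sum, sumS α hp hq hpq h0 (fun k => w h k)]
  rw [Finset.sum_congr rfl (fun h _ => h1 h)]
  by_cases hpq2 : p = q
  · simp [hpq2]
  · simp [hpq2]

noncomputable def aN (μ : (Idx → ℝ) → Idx → ℝ) (u : Idx → ℝ) (α : Fin r) (x : ℕ) : ℝ :=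
  if hx : x < m α then μ u ⟨α, ⟨x, hx⟩⟩ else 0

noncomputable def dN (μ : (Idx → ℝ) → Idx → ℝ) (u : Idx → ℝ) (α : Fin r) (s k : ℕ) : ℝ :=
  if hs : s < m α then
    if hk : k < m α then pd ⟨α, ⟨s, hs⟩⟩ (fun v => μ v ⟨α, ⟨k, hk⟩⟩) u else 0
  else 0

noncomputable def XN (V : (Idx → ℝ) → ℝ) (u : Idx → ℝ) (α : Fin r) (q : ℕ) : ℝ :=
  if hq : q < m α then pd ⟨α, ⟨q, hq⟩⟩ V u else 0

noncomputable def SS (V : (Idx → ℝ) → ℝ) (u : Idx → ℝ) : ℝ :=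
  ∑ t : Idx, bec t * pd t V u

noncomputable def EN (μ : (Idx → ℝ) → Idx → ℝ) (u : Idx → ℝ) (k : Idx) : ℝ :=
  ∑ t : Idx, bec t * pd t (fun v => μ v k) u

noncomputable def W0 (μ : (Idx → ℝ) → Idx → ℝ) (u : Idx → ℝ) (α : Fin r) : ℝ :=
  if h0 : 0 < m α then
    (∑ h : Idx, μ u h * pd h (fun v => μ v ⟨α, ⟨0, h0⟩⟩) u)
      - μ u ⟨α, ⟨0, h0⟩⟩ * EN μ u ⟨α, ⟨0, h0⟩⟩
  else 0

lemma master (μ : (Idx → ℝ) → Idx → ℝ) (V : (Idx → ℝ) → ℝ) (u : Idx → ℝ)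
    (α : Fin r) {p q : ℕ} (hp : p < m α) (hq : q < m α) (hpq : p ≤ q) :
    GT2b μ V ⟨α, ⟨p, hp⟩⟩ ⟨α, ⟨q, hq⟩⟩ u
      = (∑ y ∈ range (p + 1), aN μ u α (p - y) * dN μ u α q y)
        + (if p = q then W0 μ u α else 0)
        - (∑ x ∈ range (m α - q), aN μ u α x * dN μ u α (q + x) p)
        + (if p = 0 then XN V u α q else 0)
        - (if p = q then SS V u else 0) := by
  have h0 : 0 < m α := lt_of_le_of_lt (Nat.zero_le p) hp
  rw [GT2b]
  have hsplit :
      (∑ h : Idx, ∑ k : Idx, μ u h *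
          (bc ⟨α, ⟨p, hp⟩⟩ h k * pd ⟨α, ⟨q, hq⟩⟩ (fun v => μ v k) u
            + bc ⟨α, ⟨p, hp⟩⟩ ⟨α, ⟨q, hq⟩⟩ k * pd h (fun v => μ v k) u
            - bc k ⟨α, ⟨q, hq⟩⟩ h * pd k (fun v => μ v ⟨α, ⟨p, hp⟩⟩) u))
        = (∑ h : Idx, ∑ k : Idx, μ u h *
            (bc ⟨α, ⟨p, hp⟩⟩ h k * pd ⟨α, ⟨q, hq⟩⟩ (fun v => μ v k) u))
          + (∑ h : Idx, ∑ k : Idx, μ u h *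
            (bc ⟨α, ⟨p, hp⟩⟩ ⟨α, ⟨q, hq⟩⟩ k * pd h (fun v => μ v k) u))
          - (∑ h : Idx, ∑ k : Idx, μ u h *
            (bc k ⟨α, ⟨q, hq⟩⟩ h * pd k (fun v => μ v ⟨α, ⟨p, hp⟩⟩) u)) := by
    simp only [mul_add, mul_sub, Finset.sum_add_distrib, Finset.sum_sub_distrib]
  rw [hsplit]
  rw [sumUpper α hp (μ u) (fun k => pd ⟨α, ⟨q, hq⟩⟩ (fun v => μ v k) u)
      (aN μ u α) (dN μ u α q) (fun x hx => by rw [aN, dif_pos hx])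
      (fun y hy => by simp [dN, hq, hy])]
  rw [sumFix α hp hq hpq h0 (μ u) (fun h k => pd h (fun v => μ v k) u)]
  rw [sumLower α hq (μ u) (fun k => pd k (fun v => μ v ⟨α, ⟨p, hp⟩⟩) u)
      (aN μ u α) (fun y => dN μ u α y p) (fun x hx => by rw [aN, dif_pos hx])
      (fun y hy => by simp [dN, hy, hp])]
  -- the B-sum
  have hB : (∑ h : Idx, ∑ s : Idx, ∑ k : Idx, μ u h * bc ⟨α, ⟨p, hp⟩⟩ ⟨α, ⟨q, hq⟩⟩ s
        * bc s h k * (∑ t : Idx, bec t * pd t (fun v => μ v k) u))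
      = if p = q then μ u ⟨α, ⟨0, h0⟩⟩ * EN μ u ⟨α, ⟨0, h0⟩⟩ else 0 := by
    rw [Finset.sum_comm]
    have hper : ∀ s : Idx,
        (∑ h : Idx, ∑ k : Idx, μ u h * bc ⟨α, ⟨p, hp⟩⟩ ⟨α, ⟨q, hq⟩⟩ s
            * bc s h k * (∑ t : Idx, bec t * pd t (fun v => μ v k) u))
          = bc ⟨α, ⟨p, hp⟩⟩ ⟨α, ⟨q, hq⟩⟩ s *
            (∑ h : Idx, ∑ k : Idx, μ u h *
              (bc s h k * (∑ t : Idx, bec t * pd t (fun v => μ v k) u))) := by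
      intro s
      rw [Finset.mul_sum]
      refine Finset.sum_congr rfl fun h _ => ?_
      rw [Finset.mul_sum]
      exact Finset.sum_congr rfl fun k _ => by ring
    rw [Finset.sum_congr rfl (fun s _ => hper s)]
    rw [sumS α hp hq hpq h0]
    by_cases hpq2 : p = q
    · rw [if_pos hpq2, if_pos hpq2]
      rw [sumUpper α h0 (μ u) (fun k => ∑ t : Idx, bec t * pd t (fun v => μ v k) u)
          (aN μ u α) (fun y => if hy : y < m α then EN μ u ⟨α, ⟨y, hy⟩⟩ else 0)
          (fun x hx => by rw [aN, dif_pos hx])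
          (fun y hy => by simp [EN, hy])]
      rw [Finset.sum_range_one, dif_pos h0]
      simp [aN, h0]
    · rw [if_neg hpq2, if_neg hpq2]
  rw [hB]
  have hbec : bec (⟨α, ⟨p, hp⟩⟩ : Idx) = if p = 0 then 1 else 0 := rfl
  have hij : ((⟨α, ⟨p, hp⟩⟩ : Idx) = ⟨α, ⟨q, hq⟩⟩) ↔ p = q := by
    constructor
    · intro h; have := congrArg (fun x : Idx => (x.2 : ℕ)) h; simpa using this
    · intro h; subst h; rfl
  rw [hbec]
  rw [if_congr hij rfl rfl]
  rw [W0, dif_pos h0, XN, dif_pos hq, SS]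
  split_ifs <;> ring


lemma dN_zero (μ : (Idx → ℝ) → Idx → ℝ) (V : (Idx → ℝ) → ℝ) (u : Idx → ℝ) (α : Fin r)
    (h2a : aN μ u α 1 ≠ 0)
    (hE2 : ∀ i j : Idx, GT2b μ V i j u = 0) :
    ∀ s k : ℕ, k + 2 ≤ s → dN μ u α s k = 0 := by
  suffices key : ∀ N s k, 2 * (m α - s) + k < N → k + 2 ≤ s → dN μ u α s k = 0 by
    intro s k h
    exact key (2 * (m α - s) + k + 1) s k (Nat.lt_succ_self _) h
  intro N
  induction N with
  | zero => intro s k h; omega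
  | succ N ih =>
    intro s k hlt hks
    by_cases hs : s < m α
    swap
    · simp [dN, hs]
    · have hp : k + 1 < m α := by omega
      have e := hE2 ⟨α, ⟨k + 1, hp⟩⟩ ⟨α, ⟨s, hs⟩⟩
      rw [master μ V u α hp hs (by omega)] at e
      rw [if_neg (by omega : ¬(k + 1 = s)), if_neg (by omega : ¬(k + 1 = 0)),
        if_neg (by omega : ¬(k + 1 = s))] at e
      have hA1 : (∑ y ∈ range (k + 1 + 1), aN μ u α (k + 1 - y) * dN μ u α s y)
          = aN μ u α 1 * dN μ u α s k + aN μ u α 0 * dN μ u α s (k + 1) := by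
        rw [Finset.sum_range_succ, Finset.sum_range_succ]
        have hz : (∑ y ∈ range k, aN μ u α (k + 1 - y) * dN μ u α s y) = 0 :=
          Finset.sum_eq_zero fun y hy => by
            have hy' := Finset.mem_range.1 hy
            rw [ih s y (by omega) (by omega), mul_zero]
        rw [hz, (show k + 1 - k = 1 by omega), Nat.sub_self, zero_add]
      have hA3 : (∑ x ∈ range (m α - s), aN μ u α x * dN μ u α (s + x) (k + 1))
          = aN μ u α 0 * dN μ u α s (k + 1) := by
        rw [sum_one (show 0 < m α - s by omega)]
        · rw [Nat.add_zero]
        · intro y hy hy0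
          by_cases hsy : s + y < m α
          · rw [ih (s + y) (k + 1) (by omega) (by omega), mul_zero]
          · simp [dN, hsy]
      rw [hA1, hA3] at e
      have h5 : aN μ u α 1 * dN μ u α s k = 0 := by linarith
      exact (mul_eq_zero.mp h5).resolve_left h2a

lemma XN_zero (μ : (Idx → ℝ) → Idx → ℝ) (V : (Idx → ℝ) → ℝ) (u : Idx → ℝ) (α : Fin r)
    (h2a : aN μ u α 1 ≠ 0)
    (hE2 : ∀ i j : Idx, GT2b μ V i j u = 0) :
    ∀ q : ℕ, 1 ≤ q → XN V u α q = 0 := by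
  intro q hq1
  by_cases hq : q < m α
  swap
  · simp [XN, hq]
  · have h0 : 0 < m α := by omega
    have e := hE2 ⟨α, ⟨0, h0⟩⟩ ⟨α, ⟨q, hq⟩⟩
    rw [master μ V u α h0 hq (by omega)] at e
    rw [if_neg (by omega : ¬(0 = q)), if_pos rfl, if_neg (by omega : ¬(0 = q))] at e
    rw [Finset.sum_range_one, Nat.sub_self] at e
    have hA3 : (∑ x ∈ range (m α - q), aN μ u α x * dN μ u α (q + x) 0)
        = aN μ u α 0 * dN μ u α q 0 := by
      rw [sum_one (show 0 < m α - q by omega)]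
      · rw [Nat.add_zero]
      · intro y hy hy0
        rw [dN_zero μ V u α h2a hE2 (q + y) 0 (by omega), mul_zero]
    rw [hA3] at e
    linarith

lemma diag (μ : (Idx → ℝ) → Idx → ℝ) (V : (Idx → ℝ) → ℝ) (u : Idx → ℝ) (α : Fin r)
    (h2a : aN μ u α 1 ≠ 0)
    (hE2 : ∀ i j : Idx, GT2b μ V i j u = 0)
    {p : ℕ} (hp1 : 1 ≤ p) (hp : p < m α) (hM : 2 ≤ m α) :
    XN V u α 0 = aN μ u α 1 * dN μ u α p (p - 1)
      - (if p + 1 < m α then aN μ u α 1 * dN μ u α (p + 1) p else 0)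
      + aN μ u α 1 * dN μ u α 1 0 := by
  have h0 : 0 < m α := by omega
  have e1 := hE2 ⟨α, ⟨p, hp⟩⟩ ⟨α, ⟨p, hp⟩⟩
  rw [master μ V u α hp hp le_rfl, if_pos rfl, if_neg (by omega : ¬(p = 0)), if_pos rfl] at e1
  have e0 := hE2 ⟨α, ⟨0, h0⟩⟩ ⟨α, ⟨0, h0⟩⟩
  rw [master μ V u α h0 h0 le_rfl, if_pos rfl, if_pos rfl, if_pos rfl] at e0
  have hZ := dN_zero μ V u α h2a hE2
  have hA1p : (∑ y ∈ range (p + 1), aN μ u α (p - y) * dN μ u α p y)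
      = aN μ u α 1 * dN μ u α p (p - 1) + aN μ u α 0 * dN μ u α p p := by
    rw [sum_two (show p - 1 < p + 1 by omega) (show p < p + 1 by omega) (by omega),
      (show p - (p - 1) = 1 by omega), (show p - p = 0 by omega)]
    intro y hy hyi hyj
    rw [hZ p y (by omega), mul_zero]
  have hA3p : (∑ x ∈ range (m α - p), aN μ u α x * dN μ u α (p + x) p)
      = aN μ u α 0 * dN μ u α p p
        + (if p + 1 < m α then aN μ u α 1 * dN μ u α (p + 1) p else 0) := by
    by_cases hpp : p + 1 < m α
    · rw [if_pos hpp, sum_two (show 0 < m α - p by omega) (show 1 < m α - p by omega)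
        (by omega), Nat.add_zero]
      intro y hy hy0 hy1
      rw [hZ (p + y) p (by omega), mul_zero]
    · rw [if_neg hpp, sum_one (show 0 < m α - p by omega)]
      · rw [Nat.add_zero, add_zero]
      · intro y hy hy0
        exact absurd (by omega : y = 0) hy0
  have hA10 : (∑ y ∈ range (0 + 1), aN μ u α (0 - y) * dN μ u α 0 y)
      = aN μ u α 0 * dN μ u α 0 0 := by
    rw [Finset.sum_range_one, Nat.sub_self]
  have hA30 : (∑ x ∈ range (m α - 0), aN μ u α x * dN μ u α (0 + x) 0)
      = aN μ u α 0 * dN μ u α 0 0 + aN μ u α 1 * dN μ u α 1 0 := by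
    have hside : ∀ y, y < m α - 0 → y ≠ 0 → y ≠ 1 →
        aN μ u α y * dN μ u α (0 + y) 0 = 0 := fun y hy hy0 hy1 => by
      rw [hZ (0 + y) 0 (by omega), mul_zero]
    rw [sum_two (show 0 < m α - 0 by omega) (show 1 < m α - 0 by omega) (by omega) _ hside]
  rw [hA1p, hA3p] at e1
  rw [hA10, hA30] at e0
  linarith


lemma XN0 (μ : (Idx → ℝ) → Idx → ℝ) (V : (Idx → ℝ) → ℝ) (u : Idx → ℝ) (α : Fin r)
    (hM : 2 ≤ m α) (h2a : aN μ u α 1 ≠ 0)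
    (hE2 : ∀ i j : Idx, GT2b μ V i j u = 0)
    (hg : dN μ u α 1 0 * XN V u α 0 = 0) : XN V u α 0 = 0 := by
  have claim : ∀ n : ℕ, 1 ≤ n → n ≤ m α - 1 →
      aN μ u α 1 * dN μ u α (m α - n) (m α - n - 1)
        = (n : ℝ) * (XN V u α 0 - aN μ u α 1 * dN μ u α 1 0) := by
    intro n
    induction n with
    | zero => intro h; exact absurd h (by omega)
    | succ n ihn =>
      intro _ hle
      by_cases hn : n = 0
      · subst hn
        have hd := diag μ V u α h2a hE2 (p := m α - 1) (by omega) (by omega) hM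
        rw [if_neg (by omega : ¬(m α - 1 + 1 < m α))] at hd
        push_cast
        linarith
      · have ihh := ihn (by omega) (by omega)
        have hd := diag μ V u α h2a hE2 (p := m α - (n + 1)) (by omega) (by omega) hM
        rw [if_pos (by omega : m α - (n + 1) + 1 < m α),
          (show m α - (n + 1) + 1 = m α - n by omega)] at hd
        rw [(show m α - (n + 1) = m α - n - 1 by omega)] at hd ⊢
        push_cast
        linarith
  have hfin := claim (m α - 1) (by omega) le_rfl
  rw [(show m α - (m α - 1) = 1 by omega)] at hfin
  norm_num at hfin
  have hM0 : ((m α - 1 : ℕ) : ℝ) ≠ 0 := Nat.cast_ne_zero.mpr (by omega)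
  have hgx : aN μ u α 1 * dN μ u α 1 0 * XN V u α 0 = 0 := by
    rw [mul_assoc, hg, mul_zero]
  have h3 : ((m α - 1 : ℕ) : ℝ) * (XN V u α 0 * XN V u α 0) = 0 := by
    linear_combination (-(XN V u α 0)) * hfin + (1 + ((m α - 1 : ℕ) : ℝ)) * hgx
  have h4 : XN V u α 0 * XN V u α 0 = 0 := (mul_eq_zero.mp h3).resolve_left hM0
  exact mul_self_eq_zero.mp h4

noncomputable def yN (V : (Idx → ℝ) → ℝ) (u : Idx → ℝ) (α : Fin r) (s k : ℕ) : ℝ :=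
  if hs : s < m α then
    if hk : k < m α then pd ⟨α, ⟨s, hs⟩⟩ (fun v => pd ⟨α, ⟨k, hk⟩⟩ V v) u else 0
  else 0

lemma eq1red (μ : (Idx → ℝ) → Idx → ℝ) (V : (Idx → ℝ) → ℝ) (u : Idx → ℝ) (α : Fin r)
    (h1 : 1 < m α) (h0 : 0 < m α) :
    GT1b μ V ⟨α, ⟨1, h1⟩⟩ ⟨α, ⟨0, h0⟩⟩ u
      = (∑ x ∈ range (m α - 1), aN μ u α x * yN V u α (1 + x) 0)
        - (∑ x ∈ range (m α - 0), aN μ u α x * yN V u α (0 + x) 1)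
        - ((∑ x ∈ range (m α - 0), dN μ u α 1 x * XN V u α (0 + x))
          - (∑ x ∈ range (m α - 1), dN μ u α 0 x * XN V u α (1 + x))) := by
  rw [GT1b]
  have hsplit1 :
      (∑ t : Idx, ∑ s : Idx, μ u t *
          (bc s t ⟨α, ⟨1, h1⟩⟩ * pd s (fun v => pd ⟨α, ⟨0, h0⟩⟩ V v) u
            - bc s t ⟨α, ⟨0, h0⟩⟩ * pd s (fun v => pd ⟨α, ⟨1, h1⟩⟩ V v) u))
        = (∑ t : Idx, ∑ s : Idx, μ u t *
            (bc s t ⟨α, ⟨1, h1⟩⟩ * pd s (fun v => pd ⟨α, ⟨0, h0⟩⟩ V v) u))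
          - (∑ t : Idx, ∑ s : Idx, μ u t *
            (bc s t ⟨α, ⟨0, h0⟩⟩ * pd s (fun v => pd ⟨α, ⟨1, h1⟩⟩ V v) u)) := by
    simp only [mul_sub, Finset.sum_sub_distrib]
  have hsplit2 :
      (∑ t : Idx, ∑ s : Idx,
          (bc t ⟨α, ⟨0, h0⟩⟩ s * pd ⟨α, ⟨1, h1⟩⟩ (fun v => μ v s) u
            - bc t ⟨α, ⟨1, h1⟩⟩ s * pd ⟨α, ⟨0, h0⟩⟩ (fun v => μ v s) u) * pd t V u)
        = (∑ t : Idx, ∑ s : Idx, bc t ⟨α, ⟨0, h0⟩⟩ s *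
            (pd ⟨α, ⟨1, h1⟩⟩ (fun v => μ v s) u * pd t V u))
          - (∑ t : Idx, ∑ s : Idx, bc t ⟨α, ⟨1, h1⟩⟩ s *
            (pd ⟨α, ⟨0, h0⟩⟩ (fun v => μ v s) u * pd t V u)) := by
    rw [← Finset.sum_sub_distrib]
    refine Finset.sum_congr rfl fun t _ => ?_
    rw [← Finset.sum_sub_distrib]
    exact Finset.sum_congr rfl fun s _ => by ring
  rw [hsplit1, hsplit2]
  rw [sumTri α h1 (μ u) (fun s => pd s (fun v => pd ⟨α, ⟨0, h0⟩⟩ V v) u)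
      (aN μ u α) (fun y => yN V u α y 0) (fun x hx => by rw [aN, dif_pos hx])
      (fun y hy => by simp [yN, hy, h0])]
  rw [sumTri α h0 (μ u) (fun s => pd s (fun v => pd ⟨α, ⟨1, h1⟩⟩ V v) u)
      (aN μ u α) (fun y => yN V u α y 1) (fun x hx => by rw [aN, dif_pos hx])
      (fun y hy => by simp [yN, hy, h1])]
  rw [sumMid α h0 (fun t s => pd ⟨α, ⟨1, h1⟩⟩ (fun v => μ v s) u * pd t V u)
      (fun a b => dN μ u α 1 b * XN V u α a)
      (fun x y hx hy => by simp [dN, XN, hx, hy, h1])]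
  rw [sumMid α h1 (fun t s => pd ⟨α, ⟨0, h0⟩⟩ (fun v => μ v s) u * pd t V u)
      (fun a b => dN μ u α 0 b * XN V u α a)
      (fun x y hx hy => by simp [dN, XN, hx, hy, h0])]

lemma dx_rel (μ : (Idx → ℝ) → Idx → ℝ) (V : (Idx → ℝ) → ℝ) (u : Idx → ℝ) (α : Fin r)
    (h1 : 1 < m α) (h0 : 0 < m α)
    (hE1 : GT1b μ V ⟨α, ⟨1, h1⟩⟩ ⟨α, ⟨0, h0⟩⟩ u = 0)
    (hy1 : ∀ s : ℕ, s < m α → yN V u α s 1 = 0)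
    (hy0 : ∀ s : ℕ, 1 ≤ s → s < m α → yN V u α s 0 = 0)
    (hXq : ∀ q : ℕ, 1 ≤ q → XN V u α q = 0) :
    dN μ u α 1 0 * XN V u α 0 = 0 := by
  rw [eq1red μ V u α h1 h0] at hE1
  have hQ1 : (∑ x ∈ range (m α - 1), aN μ u α x * yN V u α (1 + x) 0) = 0 :=
    Finset.sum_eq_zero fun x hx => by
      have hx' := Finset.mem_range.1 hx
      rw [hy0 (1 + x) (by omega) (by omega), mul_zero]
  have hQ2 : (∑ x ∈ range (m α - 0), aN μ u α x * yN V u α (0 + x) 1) = 0 :=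
    Finset.sum_eq_zero fun x hx => by
      have hx' := Finset.mem_range.1 hx
      rw [hy1 (0 + x) (by omega), mul_zero]
  have hQ3 : (∑ x ∈ range (m α - 0), dN μ u α 1 x * XN V u α (0 + x))
      = dN μ u α 1 0 * XN V u α 0 := by
    have hside : ∀ y, y < m α - 0 → y ≠ 0 → dN μ u α 1 y * XN V u α (0 + y) = 0 :=
      fun y hy hy0' => by rw [hXq (0 + y) (by omega), mul_zero]
    rw [sum_one (show 0 < m α - 0 by omega) _ hside]
  have hQ4 : (∑ x ∈ range (m α - 1), dN μ u α 0 x * XN V u α (1 + x)) = 0 :=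
    Finset.sum_eq_zero fun x hx => by
      rw [hXq (1 + x) (by omega), mul_zero]
  rw [hQ1, hQ2, hQ3, hQ4] at hE1
  linarith


lemma pd_zero_of_vanish {U : Set (Idx → ℝ)} (hU : IsOpen U) {u : Idx → ℝ} (hu : u ∈ U)
    (f : (Idx → ℝ) → ℝ) (hf : ∀ v ∈ U, f v = 0) (i : Idx) : pd i f u = 0 := by
  have hev : f =ᶠ[nhds u] (fun _ => (0 : ℝ)) :=
    Filter.eventuallyEq_of_mem (hU.mem_nhds hu) hf
  rw [pd, hev.fderiv_eq]
  simp

lemma pd_swap {U : Set (Idx → ℝ)} (hU : IsOpen U) {u : Idx → ℝ} (hu : u ∈ U)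
    (V : (Idx → ℝ) → ℝ) (hV : ContDiffOn ℝ (⊤ : ℕ∞) V U) (i j : Idx) :
    pd i (fun v => pd j V v) u = pd j (fun v => pd i V v) u := by
  have hca : ContDiffAt ℝ 2 V u :=
    ((hV u hu).contDiffAt (hU.mem_nhds hu)).of_le (WithTop.coe_le_coe.mpr le_top)
  have hsym := hca.isSymmSndFDerivAt (by simp [minSmoothness_of_isRCLikeNormedField])
  have hdd : DifferentiableAt ℝ (fderiv ℝ V) u :=
    (hca.fderiv_right (m := 1) (by norm_num)).differentiableAt one_ne_zero
  have key : ∀ a b : Idx, pd a (fun v => pd b V v) u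
      = fderiv ℝ (fderiv ℝ V) u (Pi.single a 1) (Pi.single b 1) := by
    intro a b
    simp only [pd]
    rw [fderiv_clm_apply hdd (differentiableAt_const (Pi.single b (1 : ℝ)))]
    simp
  rw [key i j, key j i]
  exact hsym _ _

end GT15

/-- a solution of the multi-block generalised Gibbons–Tsarev system with
distinct leading components and `μ^{2(α)} ≠ 0` has `∂_{1(α)} V = 0` for every block `α`
with `m_α ≥ 2`; consequently `V` does not depend on any coordinate of any block of
size ≥ 2. -/
theorem stmt15 {r : ℕ} (m : Fin r → ℕ) (hm : ∀ α, 0 < m α)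
    (hn : 2 ≤ ∑ α, m α)
    (U : Set (((α : Fin r) × Fin (m α)) → ℝ)) (hU : IsOpen U)
    (V : (((α : Fin r) × Fin (m α)) → ℝ) → ℝ)
    (μ : (((α : Fin r) × Fin (m α)) → ℝ) → ((α : Fin r) × Fin (m α)) → ℝ)
    (hV : ContDiffOn ℝ (⊤ : ℕ∞) V U) (hμ : ContDiffOn ℝ (⊤ : ℕ∞) μ U)
    (hdist : ∀ u ∈ U, ∀ α β : Fin r, α ≠ β →
      μ u ⟨α, ⟨0, hm α⟩⟩ ≠ μ u ⟨β, ⟨0, hm β⟩⟩)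
    (h2 : ∀ α : Fin r, ∀ h : 2 ≤ m α, ∀ u ∈ U, μ u ⟨α, ⟨1, h⟩⟩ ≠ 0)
    (hEQ1 : ∀ i j : (α : Fin r) × Fin (m α), ∀ u ∈ U, GT1b μ V i j u = 0)
    (hEQ2 : ∀ i j : (α : Fin r) × Fin (m α), ∀ u ∈ U, GT2b μ V i j u = 0) :
    (∀ α : Fin r, 2 ≤ m α →
      ∀ u ∈ U, pd (⟨α, ⟨0, hm α⟩⟩ : (α : Fin r) × Fin (m α)) V u = 0) ∧
    (∀ α : Fin r, 2 ≤ m α → ∀ j : Fin (m α),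
      ∀ u ∈ U, pd (⟨α, j⟩ : (α : Fin r) × Fin (m α)) V u = 0) := by
  have hXq : ∀ (α : Fin r), 2 ≤ m α → ∀ u ∈ U, ∀ q : ℕ, 1 ≤ q → GT15.XN V u α q = 0 := by
    intro α hM u hu q hq1
    have h1 : 1 < m α := hM
    have h2a : GT15.aN μ u α 1 ≠ 0 := by
      rw [GT15.aN, dif_pos h1]
      exact h2 α hM u hu
    exact GT15.XN_zero μ V u α h2a (fun i j => hEQ2 i j u hu) q hq1
  have hpdq : ∀ (α : Fin r), 2 ≤ m α → ∀ (q : Fin (m α)), 1 ≤ (q : ℕ) →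
      ∀ u ∈ U, pd (⟨α, q⟩ : (α : Fin r) × Fin (m α)) V u = 0 := by
    intro α hM q hq1 u hu
    have hq := hXq α hM u hu q hq1
    rw [GT15.XN, dif_pos q.2] at hq
    exact hq
  have hx0 : ∀ α : Fin r, 2 ≤ m α →
      ∀ u ∈ U, pd (⟨α, ⟨0, hm α⟩⟩ : (α : Fin r) × Fin (m α)) V u = 0 := by
    intro α hM u hu
    have h1 : 1 < m α := hM
    have h0 : 0 < m α := hm α
    have h2a : GT15.aN μ u α 1 ≠ 0 := by
      rw [GT15.aN, dif_pos h1]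
      exact h2 α hM u hu
    have hy1 : ∀ s : ℕ, s < m α → GT15.yN V u α s 1 = 0 := by
      intro s hs
      rw [GT15.yN, dif_pos hs, dif_pos h1]
      exact GT15.pd_zero_of_vanish hU hu _
        (fun v hv => hpdq α hM ⟨1, h1⟩ le_rfl v hv) _
    have hy0 : ∀ s : ℕ, 1 ≤ s → s < m α → GT15.yN V u α s 0 = 0 := by
      intro s h1s hs
      rw [GT15.yN, dif_pos hs, dif_pos h0]
      rw [GT15.pd_swap hU hu V hV]
      exact GT15.pd_zero_of_vanish hU hu _
        (fun v hv => hpdq α hM ⟨s, hs⟩ h1s v hv) _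
    have hg := GT15.dx_rel μ V u α h1 h0 (hEQ1 _ _ u hu) hy1 hy0
      (fun q hq => hXq α hM u hu q hq)
    have hfin := GT15.XN0 μ V u α hM h2a (fun i j => hEQ2 i j u hu) hg
    rw [GT15.XN, dif_pos h0] at hfin
    exact hfin
  refine ⟨hx0, ?_⟩
  intro α hM j u hu
  by_cases hj : (j : ℕ) = 0
  · have hj' : j = ⟨0, hm α⟩ := Fin.ext hj
    rw [hj']
    exact hx0 α hM u hu
  · exact hpdq α hM j (by omega) u hu
end

section
/- Let U ⊆ ℝ^n be open and let L be a smooth field of n×n real matrices on U such that L(u) is invertible for every u ∈ U (so the pointwise inverse L^{-1} is also a smooth matrix field on U). If the Nijenhuis torsion of L vanishes on U, then the Nijenhuis torsion of L^{-1} also vanishes on U. Moreover, for all smooth vector fields X, Y on U one has the identity L² N_{L^{-1}}(LX, LY) = N_L(X, Y). -/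
open scoped BigOperators

section Defs

variable {ι : Type*} [Fintype ι] [DecidableEq ι]

/-- Lie bracket of two vector fields on `ι → ℝ`. -/
noncomputable def lieBr (X Y : (ι → ℝ) → (ι → ℝ)) (u : ι → ℝ) : ι → ℝ :=
  fun i => ∑ s, (X u s * pd s (fun v => Y v i) u - Y u s * pd s (fun v => X v i) u)

/-- Nijenhuis torsion of a pointwise operator `L` (applied pointwise to vector fields):
`N_L(X,Y) = [LX,LY] − L[LX,Y] − L[X,LY] + L²[X,Y]`. -/
noncomputable def nij (L : (ι → ℝ) → (ι → ℝ) → (ι → ℝ))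
    (X Y : (ι → ℝ) → (ι → ℝ)) (u : ι → ℝ) : ι → ℝ :=
  lieBr (fun v => L v (X v)) (fun v => L v (Y v)) u
  - L u (lieBr (fun v => L v (X v)) Y u)
  - L u (lieBr X (fun v => L v (Y v)) u)
  + L u (L u (lieBr X Y u))

end Defs


section Aux

variable {n : ℕ}

private lemma pd_congr {i : Fin n} {f g : (Fin n → ℝ) → ℝ} {u : Fin n → ℝ}
    (h : f =ᶠ[nhds u] g) : pd i f u = pd i g u := by
  unfold pd; rw [h.fderiv_eq]

private lemma lieBr_congr {F F' G G' : (Fin n → ℝ) → (Fin n → ℝ)} {u : Fin n → ℝ}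
    (hF : F =ᶠ[nhds u] F') (hG : G =ᶠ[nhds u] G') : lieBr F G u = lieBr F' G' u := by
  funext i
  unfold lieBr
  refine Finset.sum_congr rfl fun s _ => ?_
  rw [hF.eq_of_nhds, hG.eq_of_nhds,
    pd_congr (hG.mono fun v h => congrArg (· i) h),
    pd_congr (hF.mono fun v h => congrArg (· i) h)]

private lemma nij_congr {L : (Fin n → ℝ) → (Fin n → ℝ) → (Fin n → ℝ)}
    {A A' B B' : (Fin n → ℝ) → (Fin n → ℝ)} {u : Fin n → ℝ}
    (hA : A =ᶠ[nhds u] A') (hB : B =ᶠ[nhds u] B') : nij L A B u = nij L A' B' u := by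
  have hLA : (fun v => L v (A v)) =ᶠ[nhds u] (fun v => L v (A' v)) :=
    hA.mono fun v h => by simp [h]
  have hLB : (fun v => L v (B v)) =ᶠ[nhds u] (fun v => L v (B' v)) :=
    hB.mono fun v h => by simp [h]
  unfold nij
  rw [lieBr_congr hLA hLB, lieBr_congr hLA hB, lieBr_congr hA hLB, lieBr_congr hA hB]

private lemma contDiffOn_finprod {α : Type*} {U : Set (Fin n → ℝ)} (s : Finset α)
    {f : α → (Fin n → ℝ) → ℝ} (h : ∀ a ∈ s, ContDiffOn ℝ (⊤ : ℕ∞) (f a) U) :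
    ContDiffOn ℝ (⊤ : ℕ∞) (fun v => ∏ a ∈ s, f a v) U := by
  classical
  induction s using Finset.induction with
  | empty =>
    simp only [Finset.prod_empty]
    exact contDiffOn_const
  | insert a s hnot ih =>
    simp only [Finset.prod_insert hnot]
    exact (h a (Finset.mem_insert_self a s)).mul
      (ih fun b hb => h b (Finset.mem_insert_of_mem hb))

private lemma contDiffOn_det {U : Set (Fin n → ℝ)} {M : (Fin n → ℝ) → Matrix (Fin n) (Fin n) ℝ}
    (h : ∀ i j, ContDiffOn ℝ (⊤ : ℕ∞) (fun v => M v i j) U) :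
    ContDiffOn ℝ (⊤ : ℕ∞) (fun v => (M v).det) U := by
  have : (fun v => (M v).det)
      = fun v => ∑ σ : Equiv.Perm (Fin n), (Equiv.Perm.sign σ : ℝ) * ∏ i, M v (σ i) i := by
    funext v; rw [Matrix.det_apply]; simp [Units.smul_def, zsmul_eq_mul]
  rw [this]
  exact ContDiffOn.sum fun σ _ =>
    contDiffOn_const.mul (contDiffOn_finprod Finset.univ fun i _ => h (σ i) i)

end Aux

/-- if `L` is a smooth, pointwise invertible matrix field on `U` whose
Nijenhuis torsion vanishes on `U`, then the Nijenhuis torsion of the pointwise inverse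
`L⁻¹` also vanishes on `U`; moreover `L² N_{L⁻¹}(LX, LY) = N_L(X, Y)` for all smooth
vector fields `X, Y` on `U`. -/
theorem stmt16 {n : ℕ} (U : Set (Fin n → ℝ)) (hU : IsOpen U)
    (L : (Fin n → ℝ) → Matrix (Fin n) (Fin n) ℝ)
    (hL : ∀ i j : Fin n, ContDiffOn ℝ (⊤ : ℕ∞) (fun u => L u i j) U)
    (hinv : ∀ u ∈ U, IsUnit (L u))
    (hN : ∀ X Y : (Fin n → ℝ) → (Fin n → ℝ),
      ContDiffOn ℝ (⊤ : ℕ∞) X U → ContDiffOn ℝ (⊤ : ℕ∞) Y U →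
      ∀ u ∈ U, nij (fun v w => (L v).mulVec w) X Y u = 0) :
    (∀ X Y : (Fin n → ℝ) → (Fin n → ℝ),
      ContDiffOn ℝ (⊤ : ℕ∞) X U → ContDiffOn ℝ (⊤ : ℕ∞) Y U →
      ∀ u ∈ U, nij (fun v w => (L v)⁻¹.mulVec w) X Y u = 0) ∧
    (∀ X Y : (Fin n → ℝ) → (Fin n → ℝ),
      ContDiffOn ℝ (⊤ : ℕ∞) X U → ContDiffOn ℝ (⊤ : ℕ∞) Y U →
      ∀ u ∈ U,
        (L u).mulVec ((L u).mulVec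
          (nij (fun v w => (L v)⁻¹.mulVec w)
            (fun v => (L v).mulVec (X v)) (fun v => (L v).mulVec (Y v)) u))
        = nij (fun v w => (L v).mulVec w) X Y u)  := by
  classical
  -- smoothness of entries of the inverse matrix field
  have hdet : ContDiffOn ℝ (⊤ : ℕ∞) (fun v => (L v).det) U := contDiffOn_det hL
  have hdetne : ∀ u ∈ U, (L u).det ≠ 0 := fun u hu =>
    (Matrix.isUnit_iff_isUnit_det _ |>.mp (hinv u hu)).ne_zero
  have hinvEntry : ∀ i j, ContDiffOn ℝ (⊤ : ℕ∞) (fun v => (L v)⁻¹ i j) U := by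
    intro i j
    have hadj : ContDiffOn ℝ (⊤ : ℕ∞) (fun v => (L v).adjugate i j) U := by
      have : (fun v => (L v).adjugate i j)
          = fun v => ((L v).updateRow j (Pi.single i 1)).det := by
        funext v; rw [Matrix.adjugate_apply]
      rw [this]
      refine contDiffOn_det fun k l => ?_
      by_cases hk : k = j
      · subst hk; simpa [Matrix.updateRow_apply] using (contDiffOn_const :
          ContDiffOn ℝ (⊤ : ℕ∞) (fun _ : Fin n → ℝ => (Pi.single i 1 : Fin n → ℝ) l) U)
      · simpa [Matrix.updateRow_apply, hk] using hL k l
    have : (fun v => (L v)⁻¹ i j)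
        = fun v => ((L v).det)⁻¹ * (L v).adjugate i j := by
      funext v
      rw [Matrix.inv_def, Matrix.smul_apply, Ring.inverse_eq_inv', smul_eq_mul]
    rw [this]
    exact (hdet.inv hdetne).mul hadj
  -- smoothness of v ↦ (L v)⁻¹.mulVec (X v) for smooth X
  have hsmoothInvVec : ∀ X : (Fin n → ℝ) → (Fin n → ℝ), ContDiffOn ℝ (⊤ : ℕ∞) X U →
      ContDiffOn ℝ (⊤ : ℕ∞) (fun v => (L v)⁻¹.mulVec (X v)) U := by
    intro X hX
    refine contDiffOn_pi.mpr fun i => ?_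
    have : (fun v => (L v)⁻¹.mulVec (X v) i)
        = fun v => ∑ j, (L v)⁻¹ i j * X v j := by
      funext v; simp [Matrix.mulVec, dotProduct]
    rw [this]
    exact ContDiffOn.sum fun j _ => (hinvEntry i j).mul (contDiffOn_pi.mp hX j)
  -- key identity, holding for all (not necessarily smooth) X Y
  have key : ∀ X Y : (Fin n → ℝ) → (Fin n → ℝ), ∀ u ∈ U,
      (L u).mulVec ((L u).mulVec
        (nij (fun v w => (L v)⁻¹.mulVec w)
          (fun v => (L v).mulVec (X v)) (fun v => (L v).mulVec (Y v)) u))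
      = nij (fun v w => (L v).mulVec w) X Y u := by
    intro X Y u hu
    have hUmem : ∀ᶠ v in nhds u, v ∈ U := hU.eventually_mem hu
    set A := fun v => (L v).mulVec (X v) with hA
    set B := fun v => (L v).mulVec (Y v) with hB
    have cancel : ∀ v ∈ U, ∀ w : Fin n → ℝ, (L v)⁻¹.mulVec ((L v).mulVec w) = w := by
      intro v hv w
      rw [Matrix.mulVec_mulVec,
        Matrix.nonsing_inv_mul _ ((Matrix.isUnit_iff_isUnit_det _).mp (hinv v hv)),
        Matrix.one_mulVec]
    have cancel' : ∀ v ∈ U, ∀ w : Fin n → ℝ, (L v).mulVec ((L v)⁻¹.mulVec w) = w := by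
      intro v hv w
      rw [Matrix.mulVec_mulVec,
        Matrix.mul_nonsing_inv _ ((Matrix.isUnit_iff_isUnit_det _).mp (hinv v hv)),
        Matrix.one_mulVec]
    have hMA : (fun v => (L v)⁻¹.mulVec (A v)) =ᶠ[nhds u] X :=
      hUmem.mono fun v hv => cancel v hv (X v)
    have hMB : (fun v => (L v)⁻¹.mulVec (B v)) =ᶠ[nhds u] Y :=
      hUmem.mono fun v hv => cancel v hv (Y v)
    have e1 : lieBr (fun v => (L v)⁻¹.mulVec (A v)) (fun v => (L v)⁻¹.mulVec (B v)) u
        = lieBr X Y u := lieBr_congr hMA hMB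
    have e2 : lieBr (fun v => (L v)⁻¹.mulVec (A v)) B u = lieBr X B u :=
      lieBr_congr hMA Filter.EventuallyEq.rfl
    have e3 : lieBr A (fun v => (L v)⁻¹.mulVec (B v)) u = lieBr A Y u :=
      lieBr_congr Filter.EventuallyEq.rfl hMB
    show (L u).mulVec ((L u).mulVec
        (lieBr (fun v => (L v)⁻¹.mulVec (A v)) (fun v => (L v)⁻¹.mulVec (B v)) u
        - (L u)⁻¹.mulVec (lieBr (fun v => (L v)⁻¹.mulVec (A v)) B u)
        - (L u)⁻¹.mulVec (lieBr A (fun v => (L v)⁻¹.mulVec (B v)) u)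
        + (L u)⁻¹.mulVec ((L u)⁻¹.mulVec (lieBr A B u)))) = _
    rw [e1, e2, e3]
    unfold nij
    simp only [Matrix.mulVec_add, Matrix.mulVec_sub, cancel' u hu]
    abel
  refine ⟨?_, fun X Y _ _ u hu => key X Y u hu⟩
  intro X Y hX hY u hu
  have hUmem : ∀ᶠ v in nhds u, v ∈ U := hU.eventually_mem hu
  set X' := fun v => (L v)⁻¹.mulVec (X v) with hX'def
  set Y' := fun v => (L v)⁻¹.mulVec (Y v) with hY'def
  have cancel' : ∀ v ∈ U, ∀ w : Fin n → ℝ, (L v).mulVec ((L v)⁻¹.mulVec w) = w := by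
    intro v hv w
    rw [Matrix.mulVec_mulVec,
      Matrix.mul_nonsing_inv _ ((Matrix.isUnit_iff_isUnit_det _).mp (hinv v hv)),
      Matrix.one_mulVec]
  have hLX' : (fun v => (L v).mulVec (X' v)) =ᶠ[nhds u] X :=
    hUmem.mono fun v hv => cancel' v hv (X v)
  have hLY' : (fun v => (L v).mulVec (Y' v)) =ᶠ[nhds u] Y :=
    hUmem.mono fun v hv => cancel' v hv (Y v)
  have e : nij (fun v w => (L v)⁻¹.mulVec w) X Y u
      = nij (fun v w => (L v)⁻¹.mulVec w)
          (fun v => (L v).mulVec (X' v)) (fun v => (L v).mulVec (Y' v)) u :=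
    nij_congr hLX'.symm hLY'.symm
  have h0 : (L u).mulVec ((L u).mulVec (nij (fun v w => (L v)⁻¹.mulVec w) X Y u)) = 0 := by
    rw [e, key X' Y' u hu,
      hN X' Y' (hsmoothInvVec X hX) (hsmoothInvVec Y hY) u hu]
  have cancel : ∀ w : Fin n → ℝ, (L u)⁻¹.mulVec ((L u).mulVec w) = w := by
    intro w
    rw [Matrix.mulVec_mulVec,
      Matrix.nonsing_inv_mul _ ((Matrix.isUnit_iff_isUnit_det _).mp (hinv u hu)),
      Matrix.one_mulVec]
  have h1 : (L u).mulVec (nij (fun v w => (L v)⁻¹.mulVec w) X Y u) = 0 := by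
    have := congrArg (fun w => (L u)⁻¹.mulVec w) h0
    simpa only [cancel, Matrix.mulVec_zero] using this
  have := congrArg (fun w => (L u)⁻¹.mulVec w) h1
  simpa only [cancel, Matrix.mulVec_zero] using this
end

section
/- Let U ⊆ ℝ^n be open and let L be a smooth field of n×n real matrices on U whose Nijenhuis torsion vanishes on U. For a smooth covector field (1-form) ω: U → ℝ^n define (τ_L ω)_i := Σ_s L^s_i ω_s, (dω)_{ij} := ∂_i ω_j − ∂_j ω_i, (τ_L η)_{ij} := Σ_{s,t} L^s_i L^t_j η_{st} for a 2-form η, and (d_L ω)_{ij} := Σ_s (L^s_i ∂_s ω_j − L^s_j ∂_s ω_i) − Σ_t (∂_i L^t_j − ∂_j L^t_i) ω_t. Then for every smooth covector field ω on U and all i, j ∈ {1,…,n}: (d_L(τ_L ω))_{ij} = (τ_L(dω))_{ij}, i.e. d_L ∘ τ_L = τ_L ∘ d on 1-forms. -/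
open scoped BigOperators

section AuxLemmas

variable {ι : Type*} [Fintype ι] [DecidableEq ι]

@[simp] lemma pd_const' (i : ι) (c : ℝ) (u : ι → ℝ) : pd i (fun _ => c) u = 0 := by
  simp [pd]

lemma pd_mul' {f g : (ι → ℝ) → ℝ} {u : ι → ℝ} (hf : DifferentiableAt ℝ f u)
    (hg : DifferentiableAt ℝ g u) (i : ι) :
    pd i (fun v => f v * g v) u = pd i f u * g u + f u * pd i g u := by
  unfold pd
  rw [fderiv_fun_mul hf hg]
  simp only [ContinuousLinearMap.add_apply, ContinuousLinearMap.smul_apply, smul_eq_mul]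
  ring

lemma pd_sum' {F : ι → (ι → ℝ) → ℝ} {u : ι → ℝ}
    (h : ∀ t, DifferentiableAt ℝ (F t) u) (i : ι) :
    pd i (fun v => ∑ t, F t v) u = ∑ t, pd i (F t) u := by
  unfold pd
  rw [fderiv_fun_sum (fun t _ => h t)]
  simp

end AuxLemmas


/-- if the Nijenhuis torsion of the matrix field `L` vanishes on `U`, then
`d_L ∘ τ_L = τ_L ∘ d` on smooth 1-forms, where `(τ_L ω)_i = Σ_s L^s_i ω_s`,
`(dω)_{ij} = ∂_i ω_j − ∂_j ω_i`, `(τ_L η)_{ij} = Σ_{s,t} L^s_i L^t_j η_{st}` and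
`(d_L ω)_{ij} = Σ_s (L^s_i ∂_s ω_j − L^s_j ∂_s ω_i) − Σ_t (∂_i L^t_j − ∂_j L^t_i) ω_t`. -/
theorem stmt17 {n : ℕ} (U : Set (Fin n → ℝ)) (hU : IsOpen U)
    (L : (Fin n → ℝ) → Matrix (Fin n) (Fin n) ℝ)
    (hL : ∀ i j : Fin n, ContDiffOn ℝ (⊤ : ℕ∞) (fun u => L u i j) U)
    (hN : ∀ X Y : (Fin n → ℝ) → (Fin n → ℝ),
      ContDiffOn ℝ (⊤ : ℕ∞) X U → ContDiffOn ℝ (⊤ : ℕ∞) Y U →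
      ∀ u ∈ U, nij (fun v w => (L v).mulVec w) X Y u = 0) :
    ∀ ω : (Fin n → ℝ) → (Fin n → ℝ), ContDiffOn ℝ (⊤ : ℕ∞) ω U →
      ∀ i j : Fin n, ∀ u ∈ U,
        -- (d_L (τ_L ω))_{ij}
        ((∑ s, (L u s i * pd s (fun v => ∑ t, L v t j * ω v t) u
                - L u s j * pd s (fun v => ∑ t, L v t i * ω v t) u))
          - (∑ t, (pd i (fun v => L v t j) u - pd j (fun v => L v t i) u)
              * (∑ s, L u s t * ω u s)))
        =
        -- (τ_L (dω))_{ij}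
        (∑ s, ∑ t, L u s i * L u t j
          * (pd s (fun v => ω v t) u - pd t (fun v => ω v s) u)) := by
  intro ω hω i j u hu
  have hun : U ∈ nhds u := hU.mem_nhds hu
  have hdL : ∀ s t : Fin n, DifferentiableAt ℝ (fun v => L v s t) u := fun s t =>
    ((hL s t).contDiffAt hun).differentiableAt (by simp)
  have hdω : ∀ t : Fin n, DifferentiableAt ℝ (fun v => ω v t) u := fun t =>
    (((contDiffOn_pi.mp hω) t).contDiffAt hun).differentiableAt (by simp)
  have key : ∀ t : Fin n,
      ∑ s, (L u s i * pd s (fun v => L v t j) u - L u s j * pd s (fun v => L v t i) u)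
        = ∑ t', L u t t' * (pd i (fun v => L v t' j) u - pd j (fun v => L v t' i) u) := by
    intro t
    have h0 := hN (fun _ => Pi.single i 1) (fun _ => Pi.single j 1)
      contDiffOn_const contDiffOn_const u hu
    have h1 := congrFun h0 t
    simp only [nij, lieBr, Matrix.mulVec_single, mul_one, Pi.add_apply, Pi.sub_apply,
      Pi.zero_apply, pd_const', mul_zero, zero_mul, sub_zero, zero_sub,
      Pi.single_apply, ite_mul, one_mul, Finset.sum_ite_eq', Finset.mem_univ, if_true,
      Matrix.mulVec, dotProduct, MulOpposite.op_one, one_smul, Matrix.col_apply] at h1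
    simp only [Finset.sum_neg_distrib, Finset.sum_ite_eq', Finset.mem_univ, if_true,
      mul_neg, Finset.sum_const_zero, mul_zero, add_zero, sub_neg_eq_add,
      Finset.sum_sub_distrib] at h1
    simp only [mul_sub, Finset.sum_sub_distrib]
    linarith [h1]
  have expand : ∀ (s k : Fin n), pd s (fun v => ∑ t, L v t k * ω v t) u
      = ∑ t, (pd s (fun v => L v t k) u * ω u t + L u t k * pd s (fun v => ω v t) u) := by
    intro s k
    rw [pd_sum' (fun t => (hdL t k).fun_mul (hdω t)) s]
    exact Finset.sum_congr rfl fun t _ => pd_mul' (hdL t k) (hdω t) s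
  simp only [expand]
  have A : (∑ s, (L u s i * ∑ t, (pd s (fun v => L v t j) u * ω u t + L u t j * pd s (fun v => ω v t) u)
                - L u s j * ∑ t, (pd s (fun v => L v t i) u * ω u t + L u t i * pd s (fun v => ω v t) u)))
      = (∑ s, ∑ t, (L u s i * pd s (fun v => L v t j) u - L u s j * pd s (fun v => L v t i) u) * ω u t)
        + ∑ s, ∑ t, (L u s i * L u t j - L u s j * L u t i) * pd s (fun v => ω v t) u := by
    rw [← Finset.sum_add_distrib]
    refine Finset.sum_congr rfl fun s _ => ?_
    rw [Finset.mul_sum, Finset.mul_sum, ← Finset.sum_sub_distrib, ← Finset.sum_add_distrib]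
    exact Finset.sum_congr rfl fun t _ => by ring
  have B : (∑ s, ∑ t, (L u s i * pd s (fun v => L v t j) u - L u s j * pd s (fun v => L v t i) u) * ω u t)
      = ∑ t, (pd i (fun v => L v t j) u - pd j (fun v => L v t i) u) * (∑ s, L u s t * ω u s) := by
    rw [Finset.sum_comm]
    calc ∑ t, ∑ s, (L u s i * pd s (fun v => L v t j) u - L u s j * pd s (fun v => L v t i) u) * ω u t
        = ∑ t, (∑ t', L u t t' * (pd i (fun v => L v t' j) u - pd j (fun v => L v t' i) u)) * ω u t := by
          refine Finset.sum_congr rfl fun t _ => ?_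
          rw [← Finset.sum_mul, key t]
      _ = ∑ t, (pd i (fun v => L v t j) u - pd j (fun v => L v t i) u) * (∑ s, L u s t * ω u s) := by
          simp only [Finset.sum_mul, Finset.mul_sum]
          rw [Finset.sum_comm]
          exact Finset.sum_congr rfl fun t _ => Finset.sum_congr rfl fun s _ => by ring
  have C : (∑ s, ∑ t, (L u s i * L u t j - L u s j * L u t i) * pd s (fun v => ω v t) u)
      = ∑ s, ∑ t, L u s i * L u t j * (pd s (fun v => ω v t) u - pd t (fun v => ω v s) u) := by
    have c2 : (∑ s, ∑ t, L u s j * L u t i * pd s (fun v => ω v t) u)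
        = ∑ s, ∑ t, L u s i * L u t j * pd t (fun v => ω v s) u := by
      conv_lhs => rw [Finset.sum_comm]
      exact Finset.sum_congr rfl fun s _ => Finset.sum_congr rfl fun t _ => by ring
    simp only [sub_mul, mul_sub, Finset.sum_sub_distrib]
    rw [c2]
  rw [A, B, C]
  ring
end
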